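/- arXiv:1901.06771 — 7 statements merged into one kernel-verified Lean document; each statement's English description precedes it below -/
import Mathlib

section
/- The free ℤ-module with basis indexed by permutations of ℕ with finite support, with multiplication determined by U_π · U_i = U_{π s_i} if π(i) < π(i+1) and U_π · U_i = U_π if π(i) > π(i+1), is associative; equivalently, the 0-Hecke product (π * i := π s_i if π(i) < π(i+1), else π) extends to an associative monoid operation on permutations. -/
/-- The Demazure (0-Hecke) product of a permutation with the simple
transposition `s_i = (i, i+1)`. -/
def hecke (π : Equiv.Perm ℕ) (i : ℕ) : Equiv.Perm ℕ :=
  if π i < π (i + 1) then π * Equiv.swap i (i + 1) else π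

/-- The 0-Hecke (Demazure) product of a word. -/
def heckeProd (w : List ℕ) : Equiv.Perm ℕ := w.foldl hecke 1

/-- A word on the positive integers. -/
def PosWord (w : List ℕ) : Prop := ∀ x ∈ w, 0 < x

/-- rank matrix: number of values `v < y` whose preimage is `≥ x`. -/
def Dm (a : Equiv.Perm ℕ) (x y : ℕ) : ℕ :=
  ((Finset.range y).filter (fun v => x ≤ a.symm v)).card

lemma Dm_succ (a : Equiv.Perm ℕ) (x y : ℕ) :
    Dm a x (y+1) = Dm a x y + (if x ≤ a.symm y then 1 else 0) := by
  unfold Dm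
  rw [Finset.range_add_one, Finset.filter_insert]
  split_ifs with h
  · rw [Finset.card_insert_of_notMem (by simp)]
  · rfl

lemma Dm_zero (a : Equiv.Perm ℕ) (x : ℕ) : Dm a x 0 = 0 := by simp [Dm]

lemma Dm_anti (a : Equiv.Perm ℕ) {x x' : ℕ} (y : ℕ) (h : x ≤ x') : Dm a x' y ≤ Dm a x y := by
  apply Finset.card_le_card
  intro v hv
  simp only [Finset.mem_filter, Finset.mem_range] at *
  exact ⟨hv.1, le_trans h hv.2⟩

lemma Dm_mono (a : Equiv.Perm ℕ) (x : ℕ) {y y' : ℕ} (h : y ≤ y') : Dm a x y ≤ Dm a x y' := by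
  apply Finset.card_le_card
  intro v hv
  simp only [Finset.mem_filter, Finset.mem_range] at *
  exact ⟨by omega, hv.2⟩

lemma Dm_lip_y (a : Equiv.Perm ℕ) (x : ℕ) {y y' : ℕ} (h : y ≤ y') :
    Dm a x y' ≤ Dm a x y + (y' - y) := by
  obtain ⟨k, rfl⟩ := Nat.exists_eq_add_of_le h
  induction k with
  | zero => simp
  | succ k ih =>
    rw [← Nat.add_assoc, Dm_succ]
    split_ifs <;> omega

lemma Dm_lip_x (a : Equiv.Perm ℕ) {x x' : ℕ} (y : ℕ) (h : x' ≤ x) :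
    Dm a x' y ≤ Dm a x y + (x - x') := by
  classical
  have hsub : (Finset.range y).filter (fun v => x' ≤ a.symm v) ⊆
      ((Finset.range y).filter (fun v => x ≤ a.symm v)) ∪
      ((Finset.range y).filter (fun v => x' ≤ a.symm v ∧ a.symm v < x)) := by
    intro v hv
    simp only [Finset.mem_union, Finset.mem_filter, Finset.mem_range] at *
    omega
  have h2 : ((Finset.range y).filter (fun v => x' ≤ a.symm v ∧ a.symm v < x)).card ≤
      (Finset.Ico x' x).card := by
    apply Finset.card_le_card_of_injOn (fun v => a.symm v)
    · intro v hv
      simp only [Finset.mem_coe, Finset.mem_filter, Finset.mem_Ico] at *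
      exact hv.2
    · intro v1 _ v2 _ hh
      exact a.symm.injective hh
  have h3 := le_trans (Finset.card_le_card hsub) (Finset.card_union_le _ _)
  rw [Nat.card_Ico] at h2
  unfold Dm
  omega

lemma Dm_step (a : Equiv.Perm ℕ) (x y : ℕ) :
    Dm a x y = Dm a (x+1) y + (if a x < y then 1 else 0) := by
  induction y with
  | zero => simp [Dm_zero]
  | succ y ih =>
    rw [Dm_succ, Dm_succ, ih]
    by_cases h : a.symm y = x
    · have hax : a x = y := by rw [← h]; simp
      split_ifs <;> omega
    · have hax : a x ≠ y := fun he => h (by rw [← he]; simp)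
      have hax' : a x = y ↔ a.symm y = x := by
        constructor
        · intro he; rw [← he]; simp
        · intro he; rw [← he]; simp
      split_ifs <;> omega

lemma mul_swap_symm_apply (a : Equiv.Perm ℕ) (i j y : ℕ) :
    (a * Equiv.swap i j).symm y = Equiv.swap i j (a.symm y) := by
  simp [mul_inv_rev, ← Equiv.Perm.inv_def]

lemma Dm_mul_swap (a : Equiv.Perm ℕ) (i : ℕ) {x : ℕ} (y : ℕ) (hx : x ≠ i+1) :
    Dm (a * Equiv.swap i (i+1)) x y = Dm a x y := by
  induction y with
  | zero => simp [Dm_zero]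
  | succ y ih =>
    rw [Dm_succ, Dm_succ, ih, mul_swap_symm_apply]
    set u := a.symm y with hu
    rcases eq_or_ne u i with h | h
    · rw [h, Equiv.swap_apply_left]
      split_ifs <;> omega
    · rcases eq_or_ne u (i+1) with h2 | h2
      · rw [h2, Equiv.swap_apply_right]
        split_ifs <;> omega
      · rw [Equiv.swap_apply_of_ne_of_ne h h2]

lemma Dm_mul_swap_mid (a : Equiv.Perm ℕ) (i y : ℕ) :
    Dm (a * Equiv.swap i (i+1)) (i+1) y = Dm a (i+2) y + (if a i < y then 1 else 0) := by
  induction y with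
  | zero => simp [Dm_zero]
  | succ y ih =>
    rw [Dm_succ, Dm_succ, ih, mul_swap_symm_apply]
    have hax : a i = y ↔ a.symm y = i := by
      constructor
      · intro he; rw [← he]; simp
      · intro he; rw [← he]; simp
    set u := a.symm y with hu
    rcases eq_or_ne u i with h | h
    · rw [h, Equiv.swap_apply_left]
      have : a i = y := hax.mpr h
      split_ifs <;> omega
    · have hne : a i ≠ y := fun he => h (hax.mp he)
      rcases eq_or_ne u (i+1) with h2 | h2
      · rw [h2, Equiv.swap_apply_right]
        split_ifs <;> omega
      · rw [Equiv.swap_apply_of_ne_of_ne h h2]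
        split_ifs <;> omega

lemma Dm_one (x y : ℕ) : Dm 1 x y = y - x := by
  induction y with
  | zero => simp [Dm_zero]
  | succ y ih =>
    rw [Dm_succ, ih]
    have : (1 : Equiv.Perm ℕ).symm y = y := rfl
    rw [this]
    split_ifs <;> omega

lemma Dm_swap_row (i : ℕ) {x : ℕ} (z : ℕ) (hx : x ≠ i+1) :
    Dm (Equiv.swap i (i+1)) x z = z - x := by
  have h := Dm_mul_swap 1 i z hx
  rw [one_mul] at h
  rw [h, Dm_one]

lemma Dm_swap_mid (i z : ℕ) :
    Dm (Equiv.swap i (i+1)) (i+1) z = (z - (i+2)) + (if i < z then 1 else 0) := by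
  have h := Dm_mul_swap_mid 1 i z
  rw [one_mul] at h
  rw [h, Dm_one]
  rfl

/-- min-plus (tropical) composition of ℕ-indexed matrices. -/
noncomputable def tcomp (M N : ℕ → ℕ → ℕ) : ℕ → ℕ → ℕ :=
  fun x y => sInf (Set.range fun z => M x z + N z y)

lemma tcomp_le (M N : ℕ → ℕ → ℕ) (x y z : ℕ) : tcomp M N x y ≤ M x z + N z y :=
  Nat.sInf_le ⟨z, rfl⟩

lemma le_tcomp (M N : ℕ → ℕ → ℕ) (x y c : ℕ) (h : ∀ z, c ≤ M x z + N z y) :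
    c ≤ tcomp M N x y :=
  le_csInf (Set.range_nonempty _) (by rintro b ⟨z, rfl⟩; exact h z)

lemma tcomp_exists (M N : ℕ → ℕ → ℕ) (x y : ℕ) : ∃ z, tcomp M N x y = M x z + N z y := by
  obtain ⟨z, hz⟩ := Nat.sInf_mem (Set.range_nonempty (fun z => M x z + N z y))
  exact ⟨z, hz.symm⟩

lemma tcomp_assoc (M N P : ℕ → ℕ → ℕ) : tcomp (tcomp M N) P = tcomp M (tcomp N P) := by
  funext x y
  apply le_antisymm
  · obtain ⟨w, hw⟩ := tcomp_exists M (tcomp N P) x y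
    obtain ⟨z, hz⟩ := tcomp_exists N P w y
    rw [hw, hz]
    calc tcomp (tcomp M N) P x y ≤ tcomp M N x z + P z y := tcomp_le _ _ _ _ _
      _ ≤ (M x w + N w z) + P z y := by
          have := tcomp_le M N x z w
          omega
      _ = M x w + (N w z + P z y) := by omega
  · obtain ⟨z, hz⟩ := tcomp_exists (tcomp M N) P x y
    obtain ⟨w, hw⟩ := tcomp_exists M N x z
    rw [hz, hw]
    calc tcomp M (tcomp N P) x y ≤ M x w + tcomp N P w y := tcomp_le _ _ _ _ _
      _ ≤ M x w + (N w z + P z y) := by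
          have := tcomp_le N P w y z
          omega
      _ = (M x w + N w z) + P z y := by omega

lemma tcomp_one_left (a : Equiv.Perm ℕ) : tcomp (Dm 1) (Dm a) = Dm a := by
  funext x y
  apply le_antisymm
  · have := tcomp_le (Dm 1) (Dm a) x y x
    rw [Dm_one] at this
    omega
  · apply le_tcomp
    intro z
    rw [Dm_one]
    rcases le_or_gt x z with h | h
    · have := Dm_lip_x a y h
      omega
    · have := Dm_anti a y (le_of_lt h)
      omega

lemma tcomp_one_right (a : Equiv.Perm ℕ) : tcomp (Dm a) (Dm 1) = Dm a := by
  funext x y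
  apply le_antisymm
  · have := tcomp_le (Dm a) (Dm 1) x y y
    rw [Dm_one] at this
    omega
  · apply le_tcomp
    intro z
    rw [Dm_one]
    rcases le_or_gt z y with h | h
    · have := Dm_lip_y a x h
      omega
    · have := Dm_mono a x (le_of_lt h)
      omega

lemma Dm_hecke (a : Equiv.Perm ℕ) (i : ℕ) :
    Dm (hecke a i) = tcomp (Dm (Equiv.swap i (i+1))) (Dm a) := by
  funext x y
  rcases eq_or_ne x (i+1) with hx | hx
  · subst hx
    -- RHS = min (Dm a i y) (Dm a (i+2) y + 1)
    have hR : tcomp (Dm (Equiv.swap i (i+1))) (Dm a) (i+1) y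
        = min (Dm a i y) (Dm a (i+2) y + 1) := by
      apply le_antisymm
      · apply le_min
        · have := tcomp_le (Dm (Equiv.swap i (i+1))) (Dm a) (i+1) y i
          rw [Dm_swap_mid] at this
          split_ifs at this <;> omega
        · have := tcomp_le (Dm (Equiv.swap i (i+1))) (Dm a) (i+1) y (i+2)
          rw [Dm_swap_mid] at this
          split_ifs at this <;> omega
      · apply le_tcomp
        intro z
        rw [Dm_swap_mid]
        rcases le_or_gt z i with h | h
        · have h1 := Dm_anti a y h
          have h2 := min_le_left (Dm a i y) (Dm a (i+2) y + 1)
          split_ifs <;> omega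
        · rcases eq_or_ne z (i+1) with h2 | h2
          · subst h2
            have h1 := Dm_anti a y (show i+1 ≤ i+2 by omega)
            have h3 := min_le_right (Dm a i y) (Dm a (i+2) y + 1)
            split_ifs <;> omega
          · have hz : i+2 ≤ z := by omega
            have h1 := Dm_lip_x a y hz
            have h3 := min_le_right (Dm a i y) (Dm a (i+2) y + 1)
            split_ifs <;> omega
    rw [hR]
    -- LHS
    have e1 := Dm_step a i y
    have e2 := Dm_step a (i+1) y
    unfold hecke
    split_ifs with h
    · rw [Dm_mul_swap_mid]
      have : i + 1 + 1 = i + 2 := rfl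
      rw [this] at e2
      split_ifs at e1 e2 ⊢ <;> omega
    · have hne : a i ≠ a (i+1) := fun hh => by
        have := a.injective hh
        omega
      have hlt : a (i+1) < a i := by omega
      have : i + 1 + 1 = i + 2 := rfl
      rw [this] at e2
      split_ifs at e1 e2 <;> omega
  · -- x ≠ i+1 : both sides are Dm a x y
    have hR : tcomp (Dm (Equiv.swap i (i+1))) (Dm a) x y = Dm a x y := by
      apply le_antisymm
      · have := tcomp_le (Dm (Equiv.swap i (i+1))) (Dm a) x y x
        rw [Dm_swap_row i x hx] at this
        omega
      · apply le_tcomp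
        intro z
        rw [Dm_swap_row i z hx]
        rcases le_or_gt x z with h | h
        · have := Dm_lip_x a y h
          omega
        · have := Dm_anti a y (le_of_lt h)
          omega
    rw [hR]
    unfold hecke
    split_ifs with h
    · exact Dm_mul_swap a i y hx
    · rfl

lemma Dm_inj {a b : Equiv.Perm ℕ} (h : Dm a = Dm b) : a = b := by
  have hsymm : ∀ y, a.symm y = b.symm y := by
    intro y
    have key : ∀ x, x ≤ a.symm y ↔ x ≤ b.symm y := by
      intro x
      have hy1 : Dm a x (y+1) = Dm b x (y+1) := by rw [h]
      have hy0 : Dm a x y = Dm b x y := by rw [h]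
      rw [Dm_succ, Dm_succ] at hy1
      by_cases p : x ≤ a.symm y <;> by_cases q : x ≤ b.symm y
      · exact iff_of_true p q
      · simp only [if_pos p, if_neg q] at hy1
        omega
      · simp only [if_neg p, if_pos q] at hy1
        omega
      · exact iff_of_false p q
    exact le_antisymm ((key (a.symm y)).mp le_rfl) ((key (b.symm y)).mpr le_rfl)
  have hs : a.symm = b.symm := Equiv.ext hsymm
  rw [← Equiv.symm_symm a, hs, Equiv.symm_symm]

lemma hecke_one (i : ℕ) : hecke 1 i = Equiv.swap i (i+1) := by
  unfold hecke
  rw [if_pos, one_mul]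
  simp

lemma Dm_foldl (v : List ℕ) : ∀ a : Equiv.Perm ℕ,
    Dm (List.foldl hecke a v) = tcomp (Dm (heckeProd v)) (Dm a) := by
  induction v with
  | nil => intro a; simp [heckeProd, tcomp_one_left]
  | cons i v ih =>
    intro a
    have h2 : Dm (heckeProd (i :: v)) = tcomp (Dm (heckeProd v)) (Dm (Equiv.swap i (i+1))) := by
      have : heckeProd (i :: v) = List.foldl hecke (hecke 1 i) v := rfl
      rw [this, ih (hecke 1 i), hecke_one]
    simp only [List.foldl_cons]
    rw [ih (hecke a i), Dm_hecke, ← tcomp_assoc, ← h2]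

open scoped Classical in
noncomputable def heckeOp (a b : Equiv.Perm ℕ) : Equiv.Perm ℕ :=
  if h : ∃ c : Equiv.Perm ℕ, Dm c = tcomp (Dm b) (Dm a) then h.choose else a

lemma heckeOp_spec (u v : List ℕ) :
    heckeOp (heckeProd u) (heckeProd v) = heckeProd (u ++ v) := by
  have hm : Dm (heckeProd (u ++ v)) = tcomp (Dm (heckeProd v)) (Dm (heckeProd u)) := by
    have : heckeProd (u ++ v) = List.foldl hecke (heckeProd u) v := by
      simp [heckeProd, List.foldl_append]
    rw [this]
    exact Dm_foldl v _
  have hex : ∃ c : Equiv.Perm ℕ, Dm c = tcomp (Dm (heckeProd v)) (Dm (heckeProd u)) :=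
    ⟨_, hm⟩
  unfold heckeOp
  rw [dif_pos hex]

  exact Dm_inj (hex.choose_spec.trans hm.symm)

/-- the 0-Hecke product extends to a well-defined associative
operation on permutations. -/
theorem hecke_product_associative :
    ∃ op : Equiv.Perm ℕ → Equiv.Perm ℕ → Equiv.Perm ℕ,
      (∀ u v : List ℕ, PosWord u → PosWord v →
        op (heckeProd u) (heckeProd v) = heckeProd (u ++ v)) ∧
      (∀ a b c : Equiv.Perm ℕ,
        (∃ u, PosWord u ∧ heckeProd u = a) →
        (∃ v, PosWord v ∧ heckeProd v = b) →
        (∃ w, PosWord w ∧ heckeProd w = c) →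
        op (op a b) c = op a (op b c)) := by
  refine ⟨heckeOp, fun u v _ _ => heckeOp_spec u v, ?_⟩
  rintro a b c ⟨u, -, rfl⟩ ⟨v, -, rfl⟩ ⟨w, -, rfl⟩
  rw [heckeOp_spec u v, heckeOp_spec v w, heckeOp_spec (u ++ v) w, heckeOp_spec u (v ++ w),
    List.append_assoc]
end

section
/- For any integer m ≥ 2, the words (m+1)(m+2)·1·2·⋯·m·(m+2) and (m+1)·1·2·⋯·m·(m+2) are K-Knuth equivalent. -/
/-- K-Knuth equivalence: the strongest congruence on words of positive
integers generated by `cab ≈ acb`, `bca ≈ bac`, `aba ≈ bab`, `a ≈ aa`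
for `a < b < c`. -/
inductive KKnuth : List ℕ → List ℕ → Prop
  | refl (w : List ℕ) : KKnuth w w
  | symm {v w : List ℕ} : KKnuth v w → KKnuth w v
  | trans {u v w : List ℕ} : KKnuth u v → KKnuth v w → KKnuth u w
  | cab_acb (x y : List ℕ) {a b c : ℕ} (ha : 0 < a) (hab : a < b) (hbc : b < c) :
      KKnuth (x ++ [c, a, b] ++ y) (x ++ [a, c, b] ++ y)
  | bca_bac (x y : List ℕ) {a b c : ℕ} (ha : 0 < a) (hab : a < b) (hbc : b < c) :
      KKnuth (x ++ [b, c, a] ++ y) (x ++ [b, a, c] ++ y)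
  | aba_bab (x y : List ℕ) {a b : ℕ} (ha : 0 < a) (hab : a < b) :
      KKnuth (x ++ [a, b, a] ++ y) (x ++ [b, a, b] ++ y)
  | dup (x y : List ℕ) {a : ℕ} (ha : 0 < a) :
      KKnuth (x ++ [a] ++ y) (x ++ [a, a] ++ y)

/-- Move a big letter `c` rightward through a run `k, k+1, …, k+n`,
landing just before the last letter `k+n`. -/
lemma kknuth_moveR (n : ℕ) : ∀ (k c : ℕ) (x y : List ℕ), 0 < k → k + n < c →
    KKnuth (x ++ c :: (List.range' k (n+1) ++ y))
      (x ++ (List.range' k n ++ [c, k + n] ++ y)) := by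
  induction n with
  | zero =>
      intro k c x y hk h
      simpa [List.range'] using KKnuth.refl (x ++ [c, k] ++ y)
  | succ n ih =>
      intro k c x y hk h
      have h1 : KKnuth (x ++ [c, k, k+1] ++ (List.range' (k+2) n ++ y))
          (x ++ [k, c, k+1] ++ (List.range' (k+2) n ++ y)) :=
        KKnuth.cab_acb _ _ hk (Nat.lt_succ_self k) (by omega)
      have h2 := ih (k+1) c (x ++ [k]) y (by omega) (by omega)
      have e : k + 1 + n = k + (n + 1) := by omega
      rw [e] at h2
      have key := h1.trans (by simpa [List.range'_succ] using h2)
      simpa [List.range'_succ, List.append_assoc] using key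
/-- for any `m ≥ 2`, the words `(m+1)(m+2)·1·2⋯m·(m+2)` and
`(m+1)·1·2⋯m·(m+2)` are K-Knuth equivalent. -/
theorem kknuth_special_relation (m : ℕ) (hm : 2 ≤ m) :
    KKnuth ([m + 1, m + 2] ++ List.range' 1 m ++ [m + 2])
      ([m + 1] ++ List.range' 1 m ++ [m + 2]) := by
  obtain ⟨p, rfl⟩ : ∃ p, m = p + 2 := ⟨m - 2, by omega⟩
  clear hm
  show KKnuth ([p+3, p+4] ++ List.range' 1 (p+2) ++ [p+4])
      ([p+3] ++ List.range' 1 (p+2) ++ [p+4])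
  have hs : List.range' 1 (p + 2) = 1 :: List.range' 2 (p+1) := by
    simp [List.range'_succ]
  have hs2 : List.range' 2 (p+1) = List.range' 2 p ++ [2+p] := by simpa using List.range'_concat (step := 1) (s := 2) (n := p)
  have s1 : KKnuth ([p+3, p+4] ++ List.range' 1 (p+2) ++ [p+4])
      ([p+3, 1] ++ ((p+4) :: (List.range' 2 (p+1) ++ [p+4]))) := by
    have := KKnuth.bca_bac ([] : List ℕ) (List.range' 2 (p+1) ++ [p+4])
      (a := 1) (b := p+3) (c := p+4) one_pos (by omega) (by omega)
    simpa [hs] using this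
  have s2 := kknuth_moveR p 2 (p+4) [p+3, 1] [p+4] (by omega) (by omega)
  have s3 : KKnuth ([p+3, 1] ++ (List.range' 2 p ++ [p+4, 2+p] ++ [p+4]))
      ((p+3) :: (List.range' 1 (p+2) ++ [p+4, p+2])) := by
    have := (KKnuth.aba_bab ([p+3, 1] ++ List.range' 2 p) ([] : List ℕ)
      (a := p+2) (b := p+4) (by omega) (by omega)).symm
    have e : 2 + p = p + 2 := by omega
    simpa [hs, hs2, e, List.append_assoc] using this
  have s4 := kknuth_moveR (p+1) 1 (p+3) [] [p+4, p+2] one_pos (by omega)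
  have s5 : KKnuth (([] : List ℕ) ++ (List.range' 1 (p+1) ++ [p+3, 1+(p+1)] ++ [p+4, p+2]))
      (List.range' 1 (p+1) ++ [p+3, p+4, p+2, p+2]) := by
    have := (KKnuth.bca_bac (List.range' 1 (p+1)) [p+2]
      (a := p+2) (b := p+3) (c := p+4) (by omega) (by omega) (by omega)).symm
    have e : 1 + (p+1) = p + 2 := by omega
    simpa [e, List.append_assoc] using this
  have s6 : KKnuth (List.range' 1 (p+1) ++ [p+3, p+4, p+2, p+2])
      (List.range' 1 (p+1) ++ [p+3, p+4, p+2]) := by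
    have := (KKnuth.dup (List.range' 1 (p+1) ++ [p+3, p+4]) ([] : List ℕ)
      (a := p+2) (by omega)).symm
    simpa [List.append_assoc] using this
  have s7 : KKnuth (List.range' 1 (p+1) ++ [p+3, p+4, p+2])
      (List.range' 1 (p+1) ++ [p+3, p+2, p+4]) := by
    have := KKnuth.bca_bac (List.range' 1 (p+1)) ([] : List ℕ)
      (a := p+2) (b := p+3) (c := p+4) (by omega) (by omega) (by omega)
    simpa using this
  have s8 : KKnuth (List.range' 1 (p+1) ++ [p+3, p+2, p+4])
      ([p+3] ++ List.range' 1 (p+2) ++ [p+4]) := by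
    have := (kknuth_moveR (p+1) 1 (p+3) [] [p+4] one_pos (by omega)).symm
    have e : 1 + (p+1) = p + 2 := by omega
    simpa [e, List.append_assoc] using this
  exact ((((((s1.trans s2).trans s3).trans s4).trans s5).trans s6).trans s7).trans s8
end

section
/- If i₁ i₂ ⋯ i_l is an involution word for an involution z (i.e. a minimal-length word with z = s_{i_l} ⋯ s_{i_1} s_{i_1} ⋯ s_{i_l} computed via the twisted action), then its length l equals (ℓ(z) + κ)/2, where ℓ(z) is the Coxeter length of z and κ is the number of 2-cycles of z. -/
/-- The simple transposition `s_i = (i, i+1)`. -/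
def sperm (i : ℕ) : Equiv.Perm ℕ := Equiv.swap i (i + 1)

/-- The one-sided twisted action on involutions:
`z ↦ s_i z s_i` if `s_i z s_i ≠ z`, and `z ↦ z s_i` otherwise.
(Note `s_i z s_i = z` iff `z` fixes both `i, i+1` or swaps them.) -/
def invAct (z : Equiv.Perm ℕ) (i : ℕ) : Equiv.Perm ℕ :=
  if (z i = i ∧ z (i + 1) = i + 1) ∨ (z i = i + 1 ∧ z (i + 1) = i) then
    z * sperm i
  else
    sperm i * z * sperm i

/-- The Coxeter length of a permutation: its number of inversions. -/
noncomputable def invLength (z : Equiv.Perm ℕ) : ℕ :=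
  Set.ncard {p : ℕ × ℕ | p.1 < p.2 ∧ z p.2 < z p.1}

/-- The number of two-cycles of an involution `z`. -/
noncomputable def kappa (z : Equiv.Perm ℕ) : ℕ :=
  Set.ncard {a : ℕ | a < z a}

/-! ### Auxiliary lemmas -/

section Aux

open Equiv

lemma sperm_left (i : ℕ) : sperm i i = i + 1 := Equiv.swap_apply_left i (i+1)

lemma sperm_right (i : ℕ) : sperm i (i+1) = i := Equiv.swap_apply_right i (i+1)

lemma sperm_other {i a : ℕ} (h1 : a ≠ i) (h2 : a ≠ i+1) : sperm i a = a :=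
  Equiv.swap_apply_of_ne_of_ne h1 h2

lemma sperm_apply (i a : ℕ) : sperm i a = if a = i then i+1 else if a = i+1 then i else a := by
  split_ifs with h1 h2
  · subst h1; exact sperm_left _
  · subst h2; exact sperm_right _
  · exact sperm_other h1 h2

lemma sperm_sperm (i a : ℕ) : sperm i (sperm i a) = a := Equiv.swap_apply_self ..

lemma sperm_sq (i : ℕ) : sperm i * sperm i = 1 := Equiv.swap_mul_self ..

lemma sperm_inv (i : ℕ) : (sperm i)⁻¹ = sperm i := Equiv.swap_inv ..

lemma sperm_lt {i u v : ℕ} (huv : u < v) (h : ¬(u = i ∧ v = i+1)) :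
    sperm i u < sperm i v := by
  rw [sperm_apply, sperm_apply]
  split_ifs <;> omega

/-- Finitely supported, with explicit bound. -/
def Bnd (z : Equiv.Perm ℕ) : Prop := ∃ N, ∀ a, N ≤ a → z a = a

lemma bnd_one : Bnd 1 := ⟨0, fun _ _ => rfl⟩

lemma bnd_sperm (i : ℕ) : Bnd (sperm i) :=
  ⟨i+2, fun a ha => sperm_other (by omega) (by omega)⟩

lemma bnd_mul {y z : Equiv.Perm ℕ} (hy : Bnd y) (hz : Bnd z) : Bnd (y * z) := by
  obtain ⟨N, hN⟩ := hy; obtain ⟨M, hM⟩ := hz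
  refine ⟨max N M, fun a ha => ?_⟩
  rw [Equiv.Perm.mul_apply, hM a (le_trans (le_max_right N M) ha),
    hN a (le_trans (le_max_left N M) ha)]

lemma bnd_inv {z : Equiv.Perm ℕ} (hz : Bnd z) : Bnd z⁻¹ := by
  obtain ⟨N, hN⟩ := hz
  refine ⟨N, fun a ha => ?_⟩
  nth_rewrite 1 [← hN a ha]
  exact Equiv.symm_apply_apply z a

lemma bnd_lt {z : Equiv.Perm ℕ} {N a : ℕ} (hN : ∀ b, N ≤ b → z b = b) (ha : a < N) :
    z a < N := by
  by_contra hc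
  push_neg at hc
  have h2 := z.injective (hN (z a) hc)
  omega

/-- The inversion set. -/
def invSet (z : Equiv.Perm ℕ) : Set (ℕ × ℕ) := {p | p.1 < p.2 ∧ z p.2 < z p.1}

lemma invLength_eq (z : Equiv.Perm ℕ) : invLength z = (invSet z).ncard := rfl

lemma invSet_finite {z : Equiv.Perm ℕ} (hb : Bnd z) : (invSet z).Finite := by
  obtain ⟨N, hN⟩ := hb
  apply Set.Finite.subset ((Set.finite_Iio N).prod (Set.finite_Iio N))
  rintro ⟨a, b⟩ ⟨hab', hz'⟩
  have hab : a < b := hab'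
  have hz : z b < z a := hz'
  have hbN : b < N := by
    by_contra hc
    push_neg at hc
    rcases le_or_gt N a with ha | ha
    · rw [hN a ha, hN b hc] at hz; omega
    · have := bnd_lt hN ha
      rw [hN b hc] at hz; omega
  simp only [Set.mem_prod, Set.mem_Iio]
  omega

lemma kappaSet_finite {z : Equiv.Perm ℕ} (hb : Bnd z) : {a : ℕ | a < z a}.Finite := by
  obtain ⟨N, hN⟩ := hb
  apply (Set.finite_Iio N).subset
  intro a ha
  simp only [Set.mem_setOf_eq] at ha
  simp only [Set.mem_Iio]
  by_contra hc
  push_neg at hc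
  rw [hN a hc] at ha; omega

lemma kappaSet'_finite {z : Equiv.Perm ℕ} (hb : Bnd z) : {a : ℕ | z a < a}.Finite := by
  obtain ⟨N, hN⟩ := hb
  apply (Set.finite_Iio N).subset
  intro a ha
  simp only [Set.mem_setOf_eq] at ha
  simp only [Set.mem_Iio]
  by_contra hc
  push_neg at hc
  rw [hN a hc] at ha; omega

lemma suppSet_finite {z : Equiv.Perm ℕ} (hb : Bnd z) : {a : ℕ | z a ≠ a}.Finite := by
  obtain ⟨N, hN⟩ := hb
  apply (Set.finite_Iio N).subset
  intro a ha
  simp only [Set.mem_setOf_eq] at ha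
  simp only [Set.mem_Iio]
  by_contra hc
  push_neg at hc
  exact ha (hN a hc)

lemma invLength_one : invLength 1 = 0 := by
  rw [invLength]
  convert Set.ncard_empty (ℕ × ℕ) using 2
  ext ⟨a, b⟩
  simp only [Equiv.Perm.one_apply, Set.mem_setOf_eq, Set.mem_empty_iff_false, iff_false]
  omega

lemma kappa_one : kappa 1 = 0 := by
  rw [kappa]
  convert Set.ncard_empty ℕ using 2
  ext a
  simp

/-! #### Length lemmas -/

lemma ascent_lemma {z : Equiv.Perm ℕ} {i : ℕ} (hb : Bnd z) (h : z i < z (i+1)) :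
    invLength (z * sperm i) = invLength z + 1 := by
  have hfin := invSet_finite hb
  set f : ℕ × ℕ → ℕ × ℕ := fun p => (sperm i p.1, sperm i p.2) with hf
  have hinj : Function.Injective f := by
    rintro ⟨a, b⟩ ⟨c, d⟩ hpq
    simp only [hf, Prod.mk.injEq] at hpq ⊢
    exact ⟨(sperm i).injective hpq.1, (sperm i).injective hpq.2⟩
  have hset : invSet (z * sperm i) = insert (i, i+1) (f '' invSet z) := by
    ext ⟨a, b⟩
    simp only [invSet, Set.mem_setOf_eq, Set.mem_insert_iff, Set.mem_image, Prod.mk.injEq,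
      Equiv.Perm.mul_apply, hf]
    constructor
    · rintro ⟨hab, hz⟩
      by_cases hio : a = i ∧ b = i + 1
      · exact Or.inl ⟨hio.1, hio.2⟩
      · refine Or.inr ⟨(sperm i a, sperm i b), ⟨sperm_lt hab hio, ?_⟩, ?_, ?_⟩
        · exact hz
        · exact sperm_sperm i a
        · exact sperm_sperm i b
    · rintro (⟨h1, h2⟩ | ⟨⟨c, d⟩, ⟨hcd', hzz'⟩, h1, h2⟩)
      · refine ⟨by omega, ?_⟩
        rw [h1, h2, sperm_left, sperm_right]
        exact h
      · have hcd : c < d := hcd'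
        have hzz : z d < z c := hzz'
        have h1' : sperm i c = a := h1
        have h2' : sperm i d = b := h2
        rw [← h1', ← h2']
        refine ⟨?_, ?_⟩
        · apply sperm_lt hcd
          rintro ⟨rfl, rfl⟩
          omega
        · rw [sperm_sperm, sperm_sperm]; exact hzz
  have hni : (i, i+1) ∉ f '' invSet z := by
    rintro ⟨⟨c, d⟩, ⟨hcd', hzz'⟩, hfq⟩
    have hcd : c < d := hcd'
    have hf1 : sperm i c = i := congrArg Prod.fst hfq
    have hf2 : sperm i d = i + 1 := congrArg Prod.snd hfq
    have hc : c = i + 1 := by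
      have := congrArg (sperm i) hf1
      rwa [sperm_sperm, sperm_left] at this
    have hd : d = i := by
      have := congrArg (sperm i) hf2
      rwa [sperm_sperm, sperm_right] at this
    omega
  rw [invLength_eq, invLength_eq, hset,
    Set.ncard_insert_of_notMem hni (hfin.image f),
    Set.ncard_image_of_injective _ hinj]

lemma invLength_inv (z : Equiv.Perm ℕ) : invLength z⁻¹ = invLength z := by
  have hinj : Function.Injective (fun p : ℕ × ℕ => ((z p.2 : ℕ), (z p.1 : ℕ))) := by
    rintro ⟨a, b⟩ ⟨c, d⟩ h
    simp only [Prod.mk.injEq] at h ⊢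
    exact ⟨z.injective h.2, z.injective h.1⟩
  have hset : invSet z⁻¹ = (fun p : ℕ × ℕ => ((z p.2 : ℕ), z p.1)) '' invSet z := by
    ext ⟨a, b⟩
    simp only [invSet, Set.mem_setOf_eq, Set.mem_image, Prod.mk.injEq]
    constructor
    · rintro ⟨hab, hz⟩
      exact ⟨(z⁻¹ b, z⁻¹ a), ⟨hz, by
        show z (z.symm a) < z (z.symm b); rw [Equiv.apply_symm_apply, Equiv.apply_symm_apply]; exact hab⟩,
        Equiv.apply_symm_apply z a, Equiv.apply_symm_apply z b⟩
    · rintro ⟨⟨c, d⟩, ⟨hcd', hzz'⟩, h1, h2⟩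
      have hcd : c < d := hcd'
      have hzz : z d < z c := hzz'
      have h1' : (z d : ℕ) = a := h1
      have h2' : (z c : ℕ) = b := h2
      rw [← h1', ← h2']
      exact ⟨hzz, by show z.symm (z c) < z.symm (z d); rw [Equiv.symm_apply_apply, Equiv.symm_apply_apply]; exact hcd⟩
  rw [invLength_eq z⁻¹, hset, Set.ncard_image_of_injective _ hinj, invLength_eq]

lemma descent_lemma {z : Equiv.Perm ℕ} {i : ℕ} (hb : Bnd z) (h : z (i+1) < z i) :
    invLength z = invLength (z * sperm i) + 1 := by
  have hb' : Bnd (z * sperm i) := bnd_mul hb (bnd_sperm i)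
  have h' : (z * sperm i) i < (z * sperm i) (i+1) := by
    rw [Equiv.Perm.mul_apply, Equiv.Perm.mul_apply, sperm_left, sperm_right]
    exact h
  have key := ascent_lemma hb' h'
  rwa [mul_assoc, sperm_sq, mul_one] at key

lemma invLength_mul_le {z : Equiv.Perm ℕ} (hb : Bnd z) (i : ℕ) :
    invLength (z * sperm i) ≤ invLength z + 1 := by
  rcases lt_trichotomy (z i) (z (i+1)) with h | h | h
  · rw [ascent_lemma hb h]
  · exact absurd (z.injective h) (by omega)
  · have := descent_lemma hb h; omega

lemma invLength_left_le {z : Equiv.Perm ℕ} (hb : Bnd z) (i : ℕ) :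
    invLength (sperm i * z) ≤ invLength z + 1 := by
  have key : invLength ((sperm i * z)⁻¹) ≤ invLength z⁻¹ + 1 := by
    rw [mul_inv_rev, sperm_inv]
    exact invLength_mul_le (bnd_inv hb) i
  rwa [invLength_inv, invLength_inv] at key

/-! #### Kappa lemmas -/

lemma kappa_fix {z : Equiv.Perm ℕ} {i : ℕ} (hb : Bnd z) (h1 : z i = i) (h2 : z (i+1) = i+1) :
    kappa (z * sperm i) = kappa z + 1 := by
  have hset : {a : ℕ | a < (z * sperm i) a} = insert i {a : ℕ | a < z a} := by
    ext a
    simp only [Set.mem_setOf_eq, Set.mem_insert_iff, Equiv.Perm.mul_apply]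
    rcases eq_or_ne a i with rfl | ha
    · rw [sperm_left, h2]; omega
    rcases eq_or_ne a (i+1) with rfl | ha'
    · rw [sperm_right, h1, h2]; omega
    · rw [sperm_other ha ha']
      simp [ha]
  rw [kappa, kappa, hset,
    Set.ncard_insert_of_notMem (by simp [h1]) (kappaSet_finite hb)]

lemma kappa_swapcase {z : Equiv.Perm ℕ} {i : ℕ} (hb : Bnd z) (h1 : z i = i+1)
    (h2 : z (i+1) = i) : kappa z = kappa (z * sperm i) + 1 := by
  have hset : {a : ℕ | a < (z * sperm i) a} = {a : ℕ | a < z a} \ {i} := by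
    ext a
    simp only [Set.mem_setOf_eq, Set.mem_diff, Set.mem_singleton_iff, Equiv.Perm.mul_apply]
    rcases eq_or_ne a i with rfl | ha
    · rw [sperm_left, h2]; omega
    rcases eq_or_ne a (i+1) with rfl | ha'
    · rw [sperm_right, h1, h2]; omega
    · rw [sperm_other ha ha']
      simp [ha]
  have hm : i ∈ {a : ℕ | a < z a} := by simp [h1]
  have := Set.ncard_diff_singleton_add_one hm (kappaSet_finite hb)
  rw [kappa, kappa, hset]
  omega

lemma two_kappa {z : Equiv.Perm ℕ} (hb : Bnd z) (hzz : ∀ a, z (z a) = a) :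
    2 * kappa z = {a : ℕ | z a ≠ a}.ncard := by
  have hsplit : {a : ℕ | z a ≠ a} = {a : ℕ | a < z a} ∪ {a : ℕ | z a < a} := by
    ext a
    simp only [Set.mem_setOf_eq, Set.mem_union]
    omega
  have himg : {a : ℕ | z a < a} = z '' {a : ℕ | a < z a} := by
    ext b
    simp only [Set.mem_setOf_eq, Set.mem_image]
    constructor
    · intro hb'
      exact ⟨z b, by rw [hzz]; exact hb', hzz b⟩
    · rintro ⟨a, ha, rfl⟩
      rw [hzz]; exact ha
  have hdisj : Disjoint {a : ℕ | a < z a} {a : ℕ | z a < a} := by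
    rw [Set.disjoint_iff_forall_ne]
    rintro a ha b hb' rfl
    simp only [Set.mem_setOf_eq] at ha hb'
    omega
  rw [hsplit, Set.ncard_union_eq hdisj (kappaSet_finite hb) (kappaSet'_finite hb), himg,
    Set.ncard_image_of_injective _ z.injective, kappa]
  omega

lemma kappa_conj {z : Equiv.Perm ℕ} {i : ℕ} (hb : Bnd z) (hz : z * z = 1) :
    kappa (sperm i * z * sperm i) = kappa z := by
  have hzz : ∀ a, z (z a) = a := fun a => by
    have : (z * z) a = (1 : Equiv.Perm ℕ) a := by rw [hz]
    simpa [Equiv.Perm.mul_apply] using this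
  set z' := sperm i * z * sperm i with hz'
  have hb' : Bnd z' := bnd_mul (bnd_mul (bnd_sperm i) hb) (bnd_sperm i)
  have hz'app : ∀ a, z' a = sperm i (z (sperm i a)) := fun a => by
    simp [hz', Equiv.Perm.mul_apply]
  have hzz' : ∀ a, z' (z' a) = a := fun a => by
    rw [hz'app, hz'app, sperm_sperm, hzz, sperm_sperm]
  have hsupp : {a : ℕ | z' a ≠ a} = sperm i '' {a : ℕ | z a ≠ a} := by
    ext a
    simp only [Set.mem_setOf_eq, Set.mem_image]
    constructor
    · intro h
      refine ⟨sperm i a, ?_, sperm_sperm i a⟩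
      intro he
      apply h
      rw [hz'app, he, sperm_sperm]
    · rintro ⟨b, hb2, rfl⟩
      intro he
      apply hb2
      rw [hz'app, sperm_sperm] at he
      have := congrArg (sperm i) he
      rwa [sperm_sperm, sperm_sperm] at this
  have k1 := two_kappa hb hzz
  have k2 := two_kappa hb' hzz'
  rw [hsupp, Set.ncard_image_of_injective _ (sperm i).injective] at k2
  omega

/-! #### invAct lemmas -/

lemma mul_sq {G : Type*} [Group G] {a b : G} (ha : a * a = 1) (hb : b * b = 1)
    (hc : a * b = b * a) : (a * b) * (a * b) = 1 := by
  rw [mul_assoc, ← mul_assoc b a b, ← hc, mul_assoc a b b, hb, mul_one, ha]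

lemma conj_sq {G : Type*} [Group G] {a b : G} (ha : a * a = 1) (hb : b * b = 1) :
    (b * a * b) * (b * a * b) = 1 := by
  have : (b * a * b) * (b * a * b) = b * (a * ((b * b) * (a * b))) := by
    simp only [mul_assoc]
  rw [this, hb, one_mul, ← mul_assoc a a, ha, one_mul, hb]

lemma comm_of_cond {z : Equiv.Perm ℕ} {i : ℕ} (hzz : ∀ a, z (z a) = a)
    (h : (z i = i ∧ z (i+1) = i+1) ∨ (z i = i+1 ∧ z (i+1) = i)) :
    z * sperm i = sperm i * z := by
  ext a
  simp only [Equiv.Perm.mul_apply]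
  rcases eq_or_ne a i with rfl | hai
  · rcases h with ⟨h1, h2⟩ | ⟨h1, h2⟩ <;>
      rw [sperm_left, h1, h2] <;> simp [sperm_apply]
  rcases eq_or_ne a (i+1) with rfl | hai'
  · rcases h with ⟨h1, h2⟩ | ⟨h1, h2⟩ <;>
      rw [sperm_right, h1, h2] <;> simp [sperm_apply]
  · have hz1 : z a ≠ i := by
      intro he
      have : z i = a := by rw [← he, hzz]
      rcases h with ⟨h1, _⟩ | ⟨h1, _⟩ <;> rw [h1] at this <;> omega
    have hz2 : z a ≠ i + 1 := by
      intro he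
      have : z (i+1) = a := by rw [← he, hzz]
      rcases h with ⟨_, h2⟩ | ⟨_, h2⟩ <;> rw [h2] at this <;> omega
    rw [sperm_other hai hai', sperm_other hz1 hz2]

lemma invAct_invol {z : Equiv.Perm ℕ} (hz : z * z = 1) (i : ℕ) :
    invAct z i * invAct z i = 1 := by
  have hzz : ∀ a, z (z a) = a := fun a => by
    have : (z * z) a = (1 : Equiv.Perm ℕ) a := by rw [hz]
    simpa [Equiv.Perm.mul_apply] using this
  unfold invAct
  split_ifs with h
  · exact mul_sq hz (sperm_sq i) (comm_of_cond hzz h)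
  · exact conj_sq hz (sperm_sq i)

lemma invAct_zero {z : Equiv.Perm ℕ} (h0 : z 0 = 0) {i : ℕ} (hi : 0 < i) :
    invAct z i 0 = 0 := by
  have hs0 : sperm i 0 = 0 := sperm_other (by omega) (by omega)
  unfold invAct
  split_ifs with h
  · rw [Equiv.Perm.mul_apply, hs0, h0]
  · rw [Equiv.Perm.mul_apply, Equiv.Perm.mul_apply, hs0, h0, hs0]

lemma invAct_bnd {z : Equiv.Perm ℕ} (hb : Bnd z) (i : ℕ) : Bnd (invAct z i) := by
  unfold invAct
  split_ifs with h
  · exact bnd_mul hb (bnd_sperm i)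
  · exact bnd_mul (bnd_mul (bnd_sperm i) hb) (bnd_sperm i)

lemma step_le {z : Equiv.Perm ℕ} (hz : z * z = 1) (hb : Bnd z) (i : ℕ) :
    invLength (invAct z i) + kappa (invAct z i) ≤ invLength z + kappa z + 2 := by
  unfold invAct
  split_ifs with h
  · rcases h with ⟨h1, h2⟩ | ⟨h1, h2⟩
    · rw [ascent_lemma hb (by rw [h1, h2]; omega), kappa_fix hb h1 h2]
      omega
    · have l1 := descent_lemma hb (i := i) (by rw [h1, h2]; omega)
      have l2 := kappa_swapcase hb h1 h2
      omega
  · have hbz : Bnd (z * sperm i) := bnd_mul hb (bnd_sperm i)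
    have l1 := invLength_mul_le hb i
    have l2 := invLength_left_le hbz i
    rw [← mul_assoc] at l2
    have l3 := kappa_conj hb hz (i := i)
    omega

/-! #### Existence of a reduced involution word -/

lemma descent_exists {z : Equiv.Perm ℕ} (hzz : ∀ a, z (z a) = a) (h0 : z 0 = 0)
    (hne : z ≠ 1) : ∃ i, 0 < i ∧ z (i+1) < z i := by
  by_contra hc
  push_neg at hc
  have mono : StrictMono z := by
    apply strictMono_nat_of_lt_succ
    intro n
    rcases Nat.eq_zero_or_pos n with rfl | hn
    · have h1 : z 1 ≠ 0 := by
        intro he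
        have := z.injective (he.trans h0.symm)
        omega
      show z 0 < z 1
      rw [h0]
      omega
    · have h1 := hc n hn
      have h2 : z n ≠ z (n+1) := by
        intro he
        have := z.injective he
        omega
      omega
  have hex : ∃ a, z a ≠ a := by
    by_contra hall
    push_neg at hall
    exact hne (Equiv.ext hall)
  obtain ⟨a, ha⟩ := hex
  have h1 : a ≤ z a := mono.le_apply
  have h2 : a < z a := lt_of_le_of_ne h1 (Ne.symm ha)
  have h3 := mono h2
  rw [hzz] at h3
  omega

lemma foldl_append_singleton (v : List ℕ) (i : ℕ) :
    (v ++ [i]).foldl invAct 1 = invAct (v.foldl invAct 1) i := by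
  rw [List.foldl_append]
  rfl

lemma exists_word (n : ℕ) : ∀ z : Equiv.Perm ℕ, invLength z ≤ n → z * z = 1 → z 0 = 0 →
    Bnd z → ∃ v : List ℕ, PosWord v ∧ v.foldl invAct 1 = z ∧
      2 * v.length = invLength z + kappa z := by
  induction n with
  | zero =>
    intro z hn hz h0 hb
    have hzz : ∀ a, z (z a) = a := fun a => by
      have : (z * z) a = (1 : Equiv.Perm ℕ) a := by rw [hz]
      simpa [Equiv.Perm.mul_apply] using this
    have hz1 : z = 1 := by
      by_contra hne
      obtain ⟨i, _, hdes⟩ := descent_exists hzz h0 hne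
      have hmem : (i, i+1) ∈ invSet z := ⟨by omega, hdes⟩
      have := (Set.ncard_pos (invSet_finite hb)).mpr ⟨_, hmem⟩
      rw [← invLength_eq] at this
      omega
    subst hz1
    exact ⟨[], fun x hx => absurd hx List.not_mem_nil, rfl, by
      simp [invLength_one, kappa_one]⟩
  | succ n ih =>
    intro z hn hz h0 hb
    have hzz : ∀ a, z (z a) = a := fun a => by
      have : (z * z) a = (1 : Equiv.Perm ℕ) a := by rw [hz]
      simpa [Equiv.Perm.mul_apply] using this
    by_cases hz1 : z = 1
    · subst hz1
      exact ⟨[], fun x hx => absurd hx List.not_mem_nil, rfl, by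
        simp [invLength_one, kappa_one]⟩
    obtain ⟨i, hi, hdes⟩ := descent_exists hzz h0 hz1
    by_cases hsw : z i = i + 1 ∧ z (i+1) = i
    · -- swap case: z' = z * sperm i
      set z' := z * sperm i with hz'def
      have hb' : Bnd z' := bnd_mul hb (bnd_sperm i)
      have hcomm := comm_of_cond hzz (Or.inr hsw)
      have hz'sq : z' * z' = 1 := mul_sq hz (sperm_sq i) hcomm
      have hz'0 : z' 0 = 0 := by
        rw [hz'def, Equiv.Perm.mul_apply, sperm_other (show (0:ℕ) ≠ i by omega) (show (0:ℕ) ≠ i+1 by omega), h0]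
      have hlen : invLength z = invLength z' + 1 := descent_lemma hb hdes
      have hkap : kappa z = kappa z' + 1 := kappa_swapcase hb hsw.1 hsw.2
      obtain ⟨v, pv, fv, lv⟩ := ih z' (by omega) hz'sq hz'0 hb'
      refine ⟨v ++ [i], ?_, ?_, ?_⟩
      · intro x hx
        rcases List.mem_append.mp hx with h | h
        · exact pv x h
        · simp only [List.mem_singleton] at h
          omega
      · rw [foldl_append_singleton, fv]
        have hcond : z' i = i ∧ z' (i+1) = i+1 := by
          constructor
          · rw [hz'def, Equiv.Perm.mul_apply, sperm_left, hsw.2]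
          · rw [hz'def, Equiv.Perm.mul_apply, sperm_right, hsw.1]
        rw [invAct, if_pos (Or.inl hcond), hz'def, mul_assoc, sperm_sq, mul_one]
      · rw [List.length_append, List.length_singleton]
        omega
    · -- conjugation case: z' = sperm i * z * sperm i
      set z' := sperm i * z * sperm i with hz'def
      have hb' : Bnd z' := bnd_mul (bnd_mul (bnd_sperm i) hb) (bnd_sperm i)
      have hz'sq : z' * z' = 1 := conj_sq hz (sperm_sq i)
      have hz'app : ∀ a, z' a = sperm i (z (sperm i a)) := fun a => by
        simp [hz'def, Equiv.Perm.mul_apply]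
      have hz'0 : z' 0 = 0 := by
        rw [hz'app, sperm_other (show (0:ℕ) ≠ i by omega) (show (0:ℕ) ≠ i+1 by omega), h0,
          sperm_other (show (0:ℕ) ≠ i by omega) (show (0:ℕ) ≠ i+1 by omega)]
      have hz'i : z' i = sperm i (z (i+1)) := by rw [hz'app, sperm_left]
      have hz'i1 : z' (i+1) = sperm i (z i) := by rw [hz'app, sperm_right]
      have hasc : z' i < z' (i+1) := by
        rw [hz'i, hz'i1]
        apply sperm_lt hdes
        rintro ⟨he1, he2⟩
        exact hsw ⟨he2, he1⟩
      have hszs : sperm i * z' * sperm i = z := by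
        rw [hz'def, ← mul_assoc, ← mul_assoc, sperm_sq, one_mul, mul_assoc, sperm_sq, mul_one]
      have hzs : z * sperm i = sperm i * z' := by
        rw [hz'def, ← mul_assoc, ← mul_assoc, sperm_sq, one_mul]
      -- length: ℓ(z) = ℓ(z') + 2
      have hlen : invLength z = invLength z' + 2 := by
        have e1 : invLength z = invLength (z * sperm i) + 1 := descent_lemma hb hdes
        have e2 : invLength (sperm i * z') = invLength (z' * sperm i) := by
          have : (sperm i * z')⁻¹ = z' * sperm i := by
            rw [mul_inv_rev, sperm_inv, inv_eq_of_mul_eq_one_left hz'sq]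
          rw [← this, invLength_inv]
        have e3 : invLength (z' * sperm i) = invLength z' + 1 := ascent_lemma hb' hasc
        rw [e1, hzs, e2, e3]
      have hkap : kappa z = kappa z' := by
        have := kappa_conj hb' hz'sq (i := i)
        rwa [hszs] at this
      obtain ⟨v, pv, fv, lv⟩ := ih z' (by omega) hz'sq hz'0 hb'
      refine ⟨v ++ [i], ?_, ?_, ?_⟩
      · intro x hx
        rcases List.mem_append.mp hx with h | h
        · exact pv x h
        · simp only [List.mem_singleton] at h
          omega
      · rw [foldl_append_singleton, fv]
        have hcond : ¬((z' i = i ∧ z' (i+1) = i+1) ∨ (z' i = i+1 ∧ z' (i+1) = i)) := by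
          rintro (⟨he1, he2⟩ | ⟨he1, he2⟩)
          · rw [hz'i] at he1
            rw [hz'i1] at he2
            have hu : z (i+1) = i + 1 := by
              have := congrArg (sperm i) he1
              rwa [sperm_sperm, sperm_left] at this
            have hv : z i = i := by
              have := congrArg (sperm i) he2
              rwa [sperm_sperm, sperm_right] at this
            omega
          · rw [hz'i] at he1
            rw [hz'i1] at he2
            have hu : z (i+1) = i := by
              have := congrArg (sperm i) he1
              rwa [sperm_sperm, sperm_right] at this
            have hv : z i = i + 1 := by
              have := congrArg (sperm i) he2
              rwa [sperm_sperm, sperm_left] at this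
            exact hsw ⟨hv, hu⟩
        rw [invAct, if_neg hcond, hszs]
      · rw [List.length_append, List.length_singleton]
        omega

/-! #### Lower bound along any word -/

lemma foldl_props (w : List ℕ) : ∀ z0 : Equiv.Perm ℕ, PosWord w → z0 * z0 = 1 →
    z0 0 = 0 → Bnd z0 →
    (w.foldl invAct z0) * (w.foldl invAct z0) = 1 ∧ (w.foldl invAct z0) 0 = 0 ∧
      Bnd (w.foldl invAct z0) ∧
      invLength (w.foldl invAct z0) + kappa (w.foldl invAct z0) ≤
        invLength z0 + kappa z0 + 2 * w.length := by
  induction w with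
  | nil => intro z0 _ h1 h2 h3; exact ⟨h1, h2, h3, by simp⟩
  | cons i t ihw =>
    intro z0 hw h1 h2 h3
    have hi : 0 < i := hw i (List.mem_cons_self)
    have ht : PosWord t := fun x hx => hw x (List.mem_cons_of_mem _ hx)
    have s1 := invAct_invol h1 i
    have s2 := invAct_zero h2 hi
    have s3 := invAct_bnd h3 i
    have s4 := step_le h1 h3 i
    obtain ⟨a, b, c, d⟩ := ihw (invAct z0 i) ht s1 s2 s3
    refine ⟨a, b, c, ?_⟩
    simp only [List.foldl_cons, List.length_cons] at *
    omega

end Aux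

/-- an involution word for `z` has length `(ℓ(z) + κ)/2`. -/
theorem involution_word_length (w : List ℕ) (hw : PosWord w) (z : Equiv.Perm ℕ)
    (hz : w.foldl invAct 1 = z)
    (hmin : ∀ v : List ℕ, PosWord v → v.foldl invAct 1 = z → w.length ≤ v.length) :
    w.length = (invLength z + kappa z) / 2 := by
  subst hz
  obtain ⟨h1, h2, h3, h4⟩ := foldl_props w 1 hw (one_mul 1) rfl bnd_one
  rw [invLength_one, kappa_one] at h4
  obtain ⟨v, pv, fv, lv⟩ := exists_word (invLength (w.foldl invAct 1)) _ le_rfl h1 h2 h3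
  have hle := hmin v pv fv
  omega
end

section
/- If T is an increasing row-column-closed tableau, then the row reading word of T is K-Knuth equivalent to the column reading word of T. -/
/-- The strict partial order `≺` on positions. -/
def Prec (p q : ℕ × ℕ) : Prop := p.1 ≤ q.1 ∧ p.2 ≤ q.2 ∧ p ≠ q

/-- A tableau (a map `T` on a finite domain `D` of positions) is increasing. -/
def IncreasingTab (D : Finset (ℕ × ℕ)) (T : ℕ × ℕ → ℕ) : Prop :=
  ∀ p ∈ D, ∀ q ∈ D, Prec p q → T p < T q

/-- Order of positions in the row reading word: `(−i, j)` lexicographic. -/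
def rowOrd (p q : ℕ × ℕ) : Prop := q.1 < p.1 ∨ (p.1 = q.1 ∧ p.2 < q.2)

/-- Order of positions in the column reading word: `(j, −i)` lexicographic. -/
def colOrd (p q : ℕ × ℕ) : Prop := p.2 < q.2 ∨ (p.2 = q.2 ∧ q.1 < p.1)

/-- The diagonal index `j − i` of a position `(i, j)`. -/
def diagZ (p : ℕ × ℕ) : ℤ := (p.2 : ℤ) - (p.1 : ℤ)

/-- Order of positions in the northeast diagonal reading word:
`(j − i, i)` lexicographic. -/
def neOrd (p q : ℕ × ℕ) : Prop := diagZ p < diagZ q ∨ (diagZ p = diagZ q ∧ p.1 < q.1)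

/-- Order of positions in the southwest diagonal reading word:
`(j − i, −i)` lexicographic. -/
def swOrd (p q : ℕ × ℕ) : Prop := diagZ p < diagZ q ∨ (diagZ p = diagZ q ∧ q.1 < p.1)

/-- `L` is the enumeration of the domain `D` in increasing `ord`-order
(so `L.map T` is the corresponding reading word of the tableau). -/
def IsReadingList (ord : ℕ × ℕ → ℕ × ℕ → Prop) (D : Finset (ℕ × ℕ))
    (L : List (ℕ × ℕ)) : Prop :=
  (∀ p, p ∈ L ↔ p ∈ D) ∧ L.Pairwise ord

/-- A domain is row-column-closed if `(a,b) ≺ (x,y)` in the domain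
implies `(a,y)` is in the domain. -/
def RowColumnClosed (D : Finset (ℕ × ℕ)) : Prop :=
  ∀ p ∈ D, ∀ q ∈ D, Prec p q → (p.1, q.2) ∈ D

/-- A domain is row-diagonal-closed if whenever `(a,b) ≺ (x,y)` in the domain
and `Δ := (y−x) − (b−a) ≥ 0`, also `(x, y−Δ) = (x, x+b−a)` is in the domain. -/
def RowDiagonalClosed (D : Finset (ℕ × ℕ)) : Prop :=
  ∀ p ∈ D, ∀ q ∈ D, Prec p q → p.2 + q.1 ≤ p.1 + q.2 → (q.1, p.2 + q.1 - p.1) ∈ D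

/-- A domain is column-diagonal-closed if whenever `(a,b) ≺ (x,y)` in the
domain and `Δ := (b−a) − (y−x) ≥ 0`, also `(a+Δ, b) = (x+b−y, b)` is in the
domain. -/
def ColumnDiagonalClosed (D : Finset (ℕ × ℕ)) : Prop :=
  ∀ p ∈ D, ∀ q ∈ D, Prec p q → p.1 + q.2 ≤ p.2 + q.1 → (q.1 + p.2 - q.2, p.2) ∈ D

lemma kk_congr {u v : List ℕ} (h : KKnuth u v) (x y : List ℕ) :
    KKnuth (x ++ u ++ y) (x ++ v ++ y) := by
  induction h with
  | refl w => exact KKnuth.refl _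
  | symm _ ih => exact ih.symm
  | trans _ _ ih1 ih2 => exact ih1.trans ih2
  | cab_acb x' y' ha hab hbc =>
      simpa [List.append_assoc] using KKnuth.cab_acb (x ++ x') (y' ++ y) ha hab hbc
  | bca_bac x' y' ha hab hbc =>
      simpa [List.append_assoc] using KKnuth.bca_bac (x ++ x') (y' ++ y) ha hab hbc
  | aba_bab x' y' ha hab =>
      simpa [List.append_assoc] using KKnuth.aba_bab (x ++ x') (y' ++ y) ha hab
  | dup x' y' ha =>
      simpa [List.append_assoc] using KKnuth.dup (x ++ x') (y' ++ y) ha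

lemma kk_cons (a : ℕ) {u v : List ℕ} (h : KKnuth u v) : KKnuth (a :: u) (a :: v) := by
  simpa using kk_congr h [a] []

lemma kk_append_left (x : List ℕ) {u v : List ℕ} (h : KKnuth u v) :
    KKnuth (x ++ u) (x ++ v) := by
  simpa using kk_congr h x []

lemma kk_append_right (y : List ℕ) {u v : List ℕ} (h : KKnuth u v) :
    KKnuth (u ++ y) (v ++ y) := by
  simpa using kk_congr h [] y

lemma kk_hop : ∀ (u : List ℕ) (z e : ℕ) (y : List ℕ),
    u.Chain' (· < ·) → (∀ x ∈ u, x < z) → z < e → (∀ x ∈ u, 0 < x) →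
    KKnuth (e :: (u ++ z :: y)) (u ++ e :: z :: y)
  | [], z, e, y, _, _, _, _ => KKnuth.refl _
  | u1 :: u', z, e, y, hu, huz, hze, hpos => by
    have h1 : 0 < u1 := hpos _ (List.mem_cons_self)
    have step : KKnuth (e :: (u1 :: (u' ++ z :: y))) (u1 :: (e :: (u' ++ z :: y))) := by
      cases u' with
      | nil =>
          simpa using KKnuth.cab_acb [] y h1 (huz _ (List.mem_cons_self)) hze
      | cons u2 u'' =>
          have h12 : u1 < u2 := (List.isChain_cons_cons.mp hu).1
          have h2e : u2 < e :=
            lt_trans (huz u2 (List.mem_cons_of_mem _ (List.mem_cons_self))) hze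
          simpa using KKnuth.cab_acb [] (u'' ++ z :: y) h1 h12 h2e
    have ih := kk_hop u' z e y hu.tail
      (fun x hx => huz x (List.mem_cons_of_mem _ hx)) hze
      (fun x hx => hpos x (List.mem_cons_of_mem _ hx))
    exact step.trans (kk_cons u1 ih)

lemma kk_col : ∀ (B u : List ℕ) (z : ℕ) (y : List ℕ),
    B.Chain' (· > ·) → u.Chain' (· < ·) → (∀ x ∈ u, x < z) → (∀ b ∈ B, z < b) →
    (∀ x ∈ u, 0 < x) →
    KKnuth (B ++ u ++ z :: y) (u ++ B ++ z :: y)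
  | [], u, z, y, _, _, _, _, _ => by simpa using KKnuth.refl (u ++ z :: y)
  | b :: B', u, z, y, hB, hu, huz, hzB, hpos => by
    have ih := kk_col B' u z y hB.tail hu huz
      (fun x hx => hzB x (List.mem_cons_of_mem _ hx)) hpos
    have step1 : KKnuth ((b :: B') ++ u ++ z :: y) (b :: (u ++ B' ++ z :: y)) := by
      simpa using kk_cons b ih
    have step2 : KKnuth (b :: (u ++ B' ++ z :: y)) (u ++ (b :: B') ++ z :: y) := by
      cases B' with
      | nil =>
          simpa using kk_hop u z b y hu huz (hzB b (List.mem_cons_self)) hpos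
      | cons b2 B'' =>
          have hb2 : z < b2 := hzB b2 (List.mem_cons_of_mem _ (List.mem_cons_self))
          have huz2 : ∀ x ∈ u, x < b2 := fun x hx => lt_trans (huz x hx) hb2
          have hb2b : b2 < b := (List.isChain_cons_cons.mp hB).1
          simpa using kk_hop u b2 b (B'' ++ z :: y) hu huz2 hb2b hpos
    exact step1.trans step2
lemma kk_interleave (Cols : List (List ℕ × ℕ)) : ∀ (y : List ℕ),
    List.Pairwise (fun P Q => ∀ x ∈ Q.1, P.2 < x) Cols →
    (∀ P ∈ Cols, ∀ x ∈ P.1, P.2 < x) →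
    (Cols.map Prod.snd).Chain' (· < ·) →
    (∀ P ∈ Cols, P.1.Chain' (· > ·)) →
    (∀ P ∈ Cols, 0 < P.2) →
    KKnuth ((Cols.map Prod.fst).flatten ++ Cols.map Prod.snd ++ y)
           ((Cols.map (fun P => P.1 ++ [P.2])).flatten ++ y) := by
  induction Cols using List.reverseRecOn with
  | nil => intro y _ _ _ _ _; exact KKnuth.refl _
  | append_singleton Cols' P ih =>
    intro y h1 h2 h3 h4 h5
    obtain ⟨B, a⟩ := P
    set F' : List ℕ := (Cols'.map Prod.fst).flatten with hF'
    set S' : List ℕ := Cols'.map Prod.snd with hS'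
    have hmemP : (B, a) ∈ Cols' ++ [(B, a)] := List.mem_append_right _ (List.mem_cons_self)
    have hS'chain : (S' ++ [a]).Chain' (· < ·) := by
      simpa [hS'] using h3
    have hS'lt : ∀ x ∈ S', x < a := by
      have hp : (S' ++ [a]).Pairwise (· < ·) := List.isChain_iff_pairwise.mp hS'chain
      have := (List.pairwise_append.mp hp).2.2
      intro x hx; exact this x hx a (List.mem_cons_self)
    have hS'pos : ∀ x ∈ S', 0 < x := by
      intro x hx
      obtain ⟨Q, hQ, rfl⟩ := List.mem_map.mp hx
      exact h5 Q (List.mem_append_left _ hQ)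
    have hzB : ∀ b ∈ B, a < b := fun b hb => h2 (B, a) hmemP b hb
    have hBchain : B.Chain' (· > ·) := h4 (B, a) hmemP
    -- step 1: move B past S'
    have step1 : KKnuth (F' ++ (B ++ (S' ++ (a :: y)))) (F' ++ (S' ++ (B ++ (a :: y)))) := by
      apply kk_append_left
      have := kk_col B S' a y hBchain
        ((List.isChain_append.mp hS'chain).1) hS'lt hzB hS'pos
      simpa [List.append_assoc] using this
    -- step 2: induction hypothesis with suffix B ++ a :: y
    have h1' : List.Pairwise (fun P Q => ∀ x ∈ Q.1, P.2 < x) Cols' :=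
      (List.pairwise_append.mp h1).1
    have h2' : ∀ P ∈ Cols', ∀ x ∈ P.1, P.2 < x := fun P hP => h2 P (List.mem_append_left _ hP)
    have h3' : (Cols'.map Prod.snd).Chain' (· < ·) :=
      (List.isChain_append.mp hS'chain).1
    have h4' : ∀ P ∈ Cols', P.1.Chain' (· > ·) := fun P hP => h4 P (List.mem_append_left _ hP)
    have h5' : ∀ P ∈ Cols', 0 < P.2 := fun P hP => h5 P (List.mem_append_left _ hP)
    have step2 := ih (B ++ a :: y) h1' h2' h3' h4' h5'
    -- assemble
    have goal1 : KKnuth ((( (Cols' ++ [(B,a)]).map Prod.fst).flatten) ++ ((Cols' ++ [(B,a)]).map Prod.snd) ++ y)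
        (F' ++ (S' ++ (B ++ (a :: y)))) := by
      simpa [hF', hS', List.append_assoc] using step1
    have goal2 : KKnuth (F' ++ (S' ++ (B ++ (a :: y))))
        (((Cols' ++ [(B,a)]).map (fun P => P.1 ++ [P.2])).flatten ++ y) := by
      simpa [hF', hS', List.append_assoc] using step2
    exact goal1.trans goal2
lemma prod_ne_iff {p q : ℕ × ℕ} : p ≠ q ↔ p.1 ≠ q.1 ∨ p.2 ≠ q.2 := by
  rw [Ne, Prod.ext_iff, not_and_or]

lemma rowOrd_asymm {p q : ℕ × ℕ} (h : rowOrd p q) (h' : rowOrd q p) : False := by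
  simp only [rowOrd] at h h'; omega

lemma rowOrd_total {p q : ℕ × ℕ} (h : p ≠ q) : rowOrd p q ∨ rowOrd q p := by
  rw [prod_ne_iff] at h; simp only [rowOrd]; omega

lemma colOrd_asymm {p q : ℕ × ℕ} (h : colOrd p q) (h' : colOrd q p) : False := by
  simp only [colOrd] at h h'; omega

lemma colOrd_total {p q : ℕ × ℕ} (h : p ≠ q) : colOrd p q ∨ colOrd q p := by
  rw [prod_ne_iff] at h; simp only [colOrd]; omega

lemma reading_unique {ord : ℕ × ℕ → ℕ × ℕ → Prop}
    (hasym : ∀ p q, ord p q → ord q p → False)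
    (_htot : ∀ p q, p ≠ q → ord p q ∨ ord q p)
    
    {D : Finset (ℕ × ℕ)} {L₁ L₂ : List (ℕ × ℕ)}
    (h₁ : IsReadingList ord D L₁) (h₂ : IsReadingList ord D L₂) : L₁ = L₂ := by
  haveI : IsAntisymm (ℕ × ℕ) ord := ⟨fun a b h h' => (hasym a b h h').elim⟩
  have hne : ∀ {p q : ℕ × ℕ}, ord p q → p ≠ q := by
    intro p q h heq; subst heq; exact hasym p p h h
  have n₁ : L₁.Nodup := h₁.2.imp hne
  have n₂ : L₂.Nodup := h₂.2.imp hne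
  have ht : L₁.toFinset = L₂.toFinset := by
    ext a; simp [List.mem_toFinset, h₁.1, h₂.1]
  exact List.Perm.eq_of_pairwise (fun a b _ _ h h' => (hasym a b h h').elim) h₁.2 h₂.2 (List.perm_of_nodup_nodup_toFinset_eq n₁ n₂ ht)

lemma reading_filter {ord : ℕ × ℕ → ℕ × ℕ → Prop} {D : Finset (ℕ × ℕ)}
    {L : List (ℕ × ℕ)} (h : IsReadingList ord D L) (P : ℕ × ℕ → Prop) [DecidablePred P] :
    IsReadingList ord (D.filter P) (L.filter (fun p => decide (P p))) := by
  constructor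
  · intro p
    simp [List.mem_filter, Finset.mem_filter, h.1]
  · exact List.Pairwise.sublist (List.filter_sublist) h.2

lemma reading_nil {ord : ℕ × ℕ → ℕ × ℕ → Prop} {L : List (ℕ × ℕ)}
    (h : IsReadingList ord (∅ : Finset (ℕ × ℕ)) L) : L = [] :=
  List.eq_nil_iff_forall_not_mem.mpr (fun p hp => by simpa using (h.1 p).mp hp)

lemma map_flatten_map {α β γ : Type _} (l : List α) (f : α → List β) (g : β → γ) :
    (l.map (fun a => (f a).map g)).flatten = ((l.map f).flatten).map g := by
  induction l with
  | nil => rfl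
  | cons a l ih => simp only [List.map_cons, List.flatten_cons, List.map_append, ih]

lemma main_induction : ∀ (n : ℕ) (D : Finset (ℕ × ℕ)) (T : ℕ × ℕ → ℕ),
    D.card ≤ n →
    (∀ p ∈ D, 0 < T p) → IncreasingTab D T → RowColumnClosed D →
    ∀ Lr Lc : List (ℕ × ℕ), IsReadingList rowOrd D Lr → IsReadingList colOrd D Lc →
    KKnuth (Lr.map T) (Lc.map T) := by
  intro n
  induction n with
  | zero =>
    intro D T hcard _ _ _ Lr Lc hLr hLc
    have hD : D = ∅ := Finset.card_eq_zero.mp (Nat.le_zero.mp hcard)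
    subst hD
    rw [reading_nil hLr, reading_nil hLc]
    exact KKnuth.refl _
  | succ n ih =>
    intro D T hcard hTpos hinc hclosed Lr Lc hLr hLc
    rcases D.eq_empty_or_nonempty with rfl | hne
    · rw [reading_nil hLr, reading_nil hLc]
      exact KKnuth.refl _
    classical
    -- the top row index r
    have hrowsne : (D.image Prod.fst).Nonempty := hne.image _
    set r := (D.image Prod.fst).min' hrowsne with hrdef
    have hr_le : ∀ p ∈ D, r ≤ p.1 := fun p hp =>
      Finset.min'_le _ _ (Finset.mem_image_of_mem _ hp)
    obtain ⟨p₀, hp₀D, hp₀r⟩ : ∃ p ∈ D, p.1 = r := by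
      have h := (D.image Prod.fst).min'_mem hrowsne
      rw [← hrdef] at h
      simpa [Finset.mem_image] using h
    -- the pieces
    set Dlow := D.filter (fun p => r < p.1) with hDlowdef
    set Lrlow := Lr.filter (fun p => decide (r < p.1)) with hLrlowdef
    set Ltop := Lr.filter (fun p => decide (p.1 = r)) with hLtopdef
    have hLrlowRL : IsReadingList rowOrd Dlow Lrlow := reading_filter hLr _
    have hLtopmem : ∀ p, p ∈ Ltop ↔ p ∈ D ∧ p.1 = r := by
      intro p; simp [hLtopdef, List.mem_filter, hLr.1]
    have hDlowmem : ∀ p, p ∈ Dlow ↔ p ∈ D ∧ r < p.1 := by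
      intro p; simp [hDlowdef, Finset.mem_filter]
    -- Equation A : Lr = Lrlow ++ Ltop
    have hEqA : Lr = Lrlow ++ Ltop := by
      have hcomp : IsReadingList rowOrd D (Lrlow ++ Ltop) := by
        constructor
        · intro p
          simp only [List.mem_append, hLrlowdef, hLtopdef, List.mem_filter,
            decide_eq_true_eq, hLr.1]
          constructor
          · rintro (⟨hp, _⟩ | ⟨hp, _⟩) <;> exact hp
          · intro hp
            have h := hr_le p hp
            rcases eq_or_lt_of_le h with heq | hlt
            · exact Or.inr ⟨hp, heq.symm⟩
            · exact Or.inl ⟨hp, hlt⟩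
        · rw [List.pairwise_append]
          refine ⟨hLrlowRL.2, List.Pairwise.sublist (List.filter_sublist) hLr.2, ?_⟩
          intro p hp q hq
          have hp' : r < p.1 := by
            have := List.mem_filter.mp hp
            simpa using this.2
          have hq' : q.1 = r := by
            have := List.mem_filter.mp hq
            simpa using this.2
          exact Or.inl (by omega)
      exact reading_unique (fun p q h h' => rowOrd_asymm h h')
        (fun p q h => rowOrd_total h) hLr hcomp
    -- columns of the top row
    set cs := Ltop.map Prod.snd with hcsdef
    have hcs_pairwise : cs.Pairwise (· < ·) := by
      rw [hcsdef, List.pairwise_map]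
      have hrow : Ltop.Pairwise rowOrd :=
        List.Pairwise.sublist (List.filter_sublist) hLr.2
      refine hrow.imp_of_mem ?_
      intro a b ha hb hab
      have ha' : a.1 = r := ((hLtopmem a).mp ha).2
      have hb' : b.1 = r := ((hLtopmem b).mp hb).2
      rcases hab with h | ⟨_, h⟩
      · omega
      · exact h
    have hmem_cs : ∀ c, c ∈ cs ↔ (r, c) ∈ D := by
      intro c
      rw [hcsdef]
      constructor
      · intro hc
        obtain ⟨p, hp, rfl⟩ := List.mem_map.mp hc
        obtain ⟨hpD, hp1⟩ := (hLtopmem p).mp hp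
        have hpe : p = (r, p.2) := Prod.ext hp1 rfl
        rwa [← hpe]
      · intro hc
        exact List.mem_map.mpr ⟨(r, c), (hLtopmem _).mpr ⟨hc, rfl⟩, rfl⟩
    have hcsne : cs ≠ [] :=
      List.ne_nil_of_mem (List.mem_map_of_mem ((hLtopmem p₀).mpr ⟨hp₀D, hp₀r⟩))
    obtain ⟨c₁, cs', hcs1⟩ := List.exists_cons_of_ne_nil hcsne
    have hc₁min : ∀ c ∈ cs, c₁ ≤ c := by
      intro c hc
      have hpw := hcs_pairwise
      rw [hcs1] at hpw hc
      rcases List.mem_cons.mp hc with rfl | h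
      · exact le_refl _
      · exact le_of_lt ((List.pairwise_cons.mp hpw).1 c h)
    have hc₁D : (r, c₁) ∈ D := (hmem_cs c₁).mp (by rw [hcs1]; exact List.mem_cons_self)
    have htopcol : ∀ p ∈ D, p.1 = r → c₁ ≤ p.2 := by
      intro p hp hpr
      exact hc₁min _ (by rw [hcsdef]; exact List.mem_map_of_mem ((hLtopmem p).mpr ⟨hp, hpr⟩))
    -- the key rcc consequence
    have hF : ∀ q ∈ D, r < q.1 → c₁ ≤ q.2 → q.2 ∈ cs := by
      intro q hq h1 h2
      have hne' : (r, c₁) ≠ q := by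
        intro he
        rw [← he] at h1
        exact lt_irrefl r h1
      have hPrec : Prec (r, c₁) q := ⟨le_of_lt h1, h2, hne'⟩
      have h3 := hclosed _ hc₁D _ hq hPrec
      exact (hmem_cs q.2).mpr (by simpa using h3)
    -- column blocks
    set Lcleft := Lc.filter (fun p => decide (p.2 < c₁)) with hLcleftdef
    set Lclow := Lc.filter (fun p => decide (r < p.1)) with hLclowdef
    have hLclowRL : IsReadingList colOrd Dlow Lclow := reading_filter hLc _
    set Bcol : ℕ → List (ℕ × ℕ) :=
      fun c => Lc.filter (fun p => decide (r < p.1 ∧ p.2 = c)) with hBcoldef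
    have hBcolmem : ∀ c p, p ∈ Bcol c ↔ p ∈ D ∧ r < p.1 ∧ p.2 = c := by
      intro c p; simp [hBcoldef, List.mem_filter, hLc.1]
    have hLcleftmem : ∀ p, p ∈ Lcleft ↔ p ∈ D ∧ p.2 < c₁ := by
      intro p; simp [hLcleftdef, List.mem_filter, hLc.1]
    -- members of Lcleft are in the lower part
    have hLcleftlow : ∀ p ∈ Lcleft, r < p.1 := by
      intro p hp
      obtain ⟨hpD, hplt⟩ := (hLcleftmem p).mp hp
      rcases eq_or_lt_of_le (hr_le p hpD) with heq | hlt
      · exact absurd (htopcol p hpD heq.symm) (by omega)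
      · exact hlt
    -- Equation C : Lc = Lcleft ++ flatten of full column blocks
    have hEqC : Lc = Lcleft ++ (cs.map (fun c => Bcol c ++ [(r, c)])).flatten := by
      have hcomp : IsReadingList colOrd D
          (Lcleft ++ (cs.map (fun c => Bcol c ++ [(r, c)])).flatten) := by
        constructor
        · intro p
          constructor
          · intro hp
            rcases List.mem_append.mp hp with h | h
            · exact ((hLcleftmem p).mp h).1
            · obtain ⟨l, hl, hpl⟩ := List.mem_flatten.mp h
              obtain ⟨c, hc, rfl⟩ := List.mem_map.mp hl
              rcases List.mem_append.mp hpl with h' | h'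
              · exact ((hBcolmem c p).mp h').1
              · have hp' : p = (r, c) := by simpa using h'
                rw [hp']
                exact (hmem_cs c).mp hc
          · intro hp
            by_cases hlt : p.2 < c₁
            · exact List.mem_append_left _ ((hLcleftmem p).mpr ⟨hp, hlt⟩)
            · push_neg at hlt
              apply List.mem_append_right
              by_cases hr : p.1 = r
              · refine List.mem_flatten.mpr ⟨Bcol p.2 ++ [(r, p.2)],
                  List.mem_map.mpr ⟨p.2, ?_, rfl⟩, ?_⟩
                · rw [hcsdef]
                  exact List.mem_map_of_mem ((hLtopmem p).mpr ⟨hp, hr⟩)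
                · exact List.mem_append_right _ (List.mem_singleton.mpr (Prod.ext hr rfl))
              · have hr' : r < p.1 := lt_of_le_of_ne (hr_le p hp) (Ne.symm hr)
                refine List.mem_flatten.mpr ⟨Bcol p.2 ++ [(r, p.2)],
                  List.mem_map.mpr ⟨p.2, hF p hp hr' hlt, rfl⟩, ?_⟩
                exact List.mem_append_left _ ((hBcolmem p.2 p).mpr ⟨hp, hr', rfl⟩)
        · rw [List.pairwise_append]
          refine ⟨List.Pairwise.sublist (List.filter_sublist) hLc.2, ?_, ?_⟩
          · rw [List.pairwise_flatten]
            constructor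
            · intro l hl
              obtain ⟨c, hc, rfl⟩ := List.mem_map.mp hl
              rw [List.pairwise_append]
              refine ⟨List.Pairwise.sublist (List.filter_sublist) hLc.2,
                List.pairwise_singleton _ _, ?_⟩
              intro p hp q hq
              have hq' : q = (r, c) := by simpa using hq
              obtain ⟨hpD, hpr, hpc⟩ := (hBcolmem c p).mp hp
              rw [hq']
              exact Or.inr ⟨hpc, hpr⟩
            · rw [List.pairwise_map]
              refine hcs_pairwise.imp_of_mem ?_
              intro c c' hc hc' hlt p hp q hq
              have hpc : p.2 = c := by
                rcases List.mem_append.mp hp with h | h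
                · exact ((hBcolmem c p).mp h).2.2
                · have : p = (r, c) := by simpa using h
                  rw [this]
              have hqc : q.2 = c' := by
                rcases List.mem_append.mp hq with h | h
                · exact ((hBcolmem c' q).mp h).2.2
                · have : q = (r, c') := by simpa using h
                  rw [this]
              exact Or.inl (by omega)
          · intro p hp q hq
            have hpcol : p.2 < c₁ := ((hLcleftmem p).mp hp).2
            obtain ⟨l, hl, hql⟩ := List.mem_flatten.mp hq
            obtain ⟨c, hc, rfl⟩ := List.mem_map.mp hl
            have hqc : q.2 = c := by
              rcases List.mem_append.mp hql with h | h
              · exact ((hBcolmem c q).mp h).2.2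
              · have : q = (r, c) := by simpa using h
                rw [this]
            have := hc₁min c hc
            exact Or.inl (by omega)
      exact reading_unique (fun p q h h' => colOrd_asymm h h')
        (fun p q h => colOrd_total h) hLc hcomp
    -- Equation B : Lclow = Lcleft ++ flatten of lower column blocks
    have hEqB : Lclow = Lcleft ++ (cs.map Bcol).flatten := by
      have hcomp : IsReadingList colOrd Dlow (Lcleft ++ (cs.map Bcol).flatten) := by
        constructor
        · intro p
          rw [hDlowmem]
          constructor
          · intro hp
            rcases List.mem_append.mp hp with h | h
            · exact ⟨((hLcleftmem p).mp h).1, hLcleftlow p h⟩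
            · obtain ⟨l, hl, hpl⟩ := List.mem_flatten.mp h
              obtain ⟨c, hc, rfl⟩ := List.mem_map.mp hl
              obtain ⟨h1, h2, _⟩ := (hBcolmem c p).mp hpl
              exact ⟨h1, h2⟩
          · rintro ⟨hp, hr'⟩
            by_cases hlt : p.2 < c₁
            · exact List.mem_append_left _ ((hLcleftmem p).mpr ⟨hp, hlt⟩)
            · push_neg at hlt
              apply List.mem_append_right
              refine List.mem_flatten.mpr ⟨Bcol p.2,
                List.mem_map.mpr ⟨p.2, hF p hp hr' hlt, rfl⟩, ?_⟩
              exact (hBcolmem p.2 p).mpr ⟨hp, hr', rfl⟩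
        · rw [List.pairwise_append]
          refine ⟨List.Pairwise.sublist (List.filter_sublist) hLc.2, ?_, ?_⟩
          · rw [List.pairwise_flatten]
            constructor
            · intro l hl
              obtain ⟨c, hc, rfl⟩ := List.mem_map.mp hl
              exact List.Pairwise.sublist (List.filter_sublist) hLc.2
            · rw [List.pairwise_map]
              refine hcs_pairwise.imp_of_mem ?_
              intro c c' hc hc' hlt p hp q hq
              have hpc : p.2 = c := ((hBcolmem c p).mp hp).2.2
              have hqc : q.2 = c' := ((hBcolmem c' q).mp hq).2.2
              exact Or.inl (by omega)
          · intro p hp q hq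
            have hpcol : p.2 < c₁ := ((hLcleftmem p).mp hp).2
            obtain ⟨l, hl, hql⟩ := List.mem_flatten.mp hq
            obtain ⟨c, hc, rfl⟩ := List.mem_map.mp hl
            have hqc : q.2 = c := ((hBcolmem c q).mp hql).2.2
            have := hc₁min c hc
            exact Or.inl (by omega)
      exact reading_unique (fun p q h h' => colOrd_asymm h h')
        (fun p q h => colOrd_total h) hLclowRL hcomp
    -- value-level columns
    set VCols := cs.map (fun c => ((Bcol c).map T, T (r, c))) with hVColsdef
    have hV1 : List.Pairwise (fun P Q => ∀ x ∈ Q.1, P.2 < x) VCols := by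
      rw [hVColsdef, List.pairwise_map]
      refine hcs_pairwise.imp_of_mem ?_
      intro c c' hc hc' hlt x hx
      obtain ⟨q, hq, rfl⟩ := List.mem_map.mp hx
      obtain ⟨hqD, hqr, hqc⟩ := (hBcolmem c' q).mp hq
      exact hinc _ ((hmem_cs c).mp hc) _ hqD
        ⟨le_of_lt hqr, by simp; omega, fun he => by rw [← he] at hqr; simp at hqr⟩
    have hV2 : ∀ P ∈ VCols, ∀ x ∈ P.1, P.2 < x := by
      intro P hP
      obtain ⟨c, hc, rfl⟩ := List.mem_map.mp hP
      intro x hx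
      obtain ⟨q, hq, rfl⟩ := List.mem_map.mp hx
      obtain ⟨hqD, hqr, hqc⟩ := (hBcolmem c q).mp hq
      exact hinc _ ((hmem_cs c).mp hc) _ hqD
        ⟨le_of_lt hqr, by simp; omega, fun he => by rw [← he] at hqr; simp at hqr⟩
    have hV3 : (VCols.map Prod.snd).Chain' (· < ·) := by
      apply List.Pairwise.isChain
      rw [hVColsdef, List.map_map]
      rw [List.pairwise_map]
      refine hcs_pairwise.imp_of_mem ?_
      intro c c' hc hc' hlt
      exact hinc _ ((hmem_cs c).mp hc) _ ((hmem_cs c').mp hc')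
        ⟨le_refl r, le_of_lt hlt, by simp [Prod.ext_iff]; omega⟩
    have hV4 : ∀ P ∈ VCols, P.1.Chain' (· > ·) := by
      intro P hP
      obtain ⟨c, hc, rfl⟩ := List.mem_map.mp hP
      apply List.Pairwise.isChain
      rw [List.pairwise_map]
      have hBpw : (Bcol c).Pairwise colOrd :=
        List.Pairwise.sublist (List.filter_sublist) hLc.2
      refine hBpw.imp_of_mem ?_
      intro a b ha hb hab
      obtain ⟨haD, har, hac⟩ := (hBcolmem c a).mp ha
      obtain ⟨hbD, hbr, hbc⟩ := (hBcolmem c b).mp hb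
      rcases hab with h | ⟨_, h⟩
      · omega
      · exact hinc _ hbD _ haD
          ⟨le_of_lt h, by omega, fun he => by rw [he] at h; exact lt_irrefl _ h⟩
    have hV5 : ∀ P ∈ VCols, 0 < P.2 := by
      intro P hP
      obtain ⟨c, hc, rfl⟩ := List.mem_map.mp hP
      exact hTpos _ ((hmem_cs c).mp hc)
    -- word shape equalities
    have hE1 : (VCols.map Prod.fst).flatten = ((cs.map Bcol).flatten).map T := by
      have h1 : VCols.map Prod.fst = cs.map (fun c => (Bcol c).map T) := by
        rw [hVColsdef]; exact List.map_map
      rw [h1]; exact map_flatten_map cs Bcol T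
    have hE2 : VCols.map Prod.snd = Ltop.map T := by
      have h' : VCols.map Prod.snd = Ltop.map (fun p => T (r, p.2)) := by
        simp [hVColsdef, hcsdef, List.map_map, Function.comp]
      rw [h']
      apply List.map_congr_left
      intro p hp
      exact congrArg T (Prod.ext (((hLtopmem p).mp hp).2).symm rfl)
    have hE3 : (VCols.map (fun P => P.1 ++ [P.2])).flatten
        = ((cs.map (fun c => Bcol c ++ [(r, c)])).flatten).map T := by
      have h1 : VCols.map (fun P => P.1 ++ [P.2])
          = cs.map (fun c => (Bcol c ++ [(r, c)]).map T) := by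
        rw [hVColsdef]
        refine (List.map_map).trans (List.map_congr_left (fun c _ => by simp))
      rw [h1]; exact map_flatten_map cs _ T
    -- induction hypothesis on the lower part
    have hDlowcard : Dlow.card ≤ n := by
      have hssub : Dlow ⊂ D := Finset.filter_ssubset.mpr ⟨p₀, hp₀D, by simp [hp₀r]⟩
      have := Finset.card_lt_card hssub
      omega
    have hTposlow : ∀ p ∈ Dlow, 0 < T p := fun p hp => hTpos p ((hDlowmem p).mp hp).1
    have hinclow : IncreasingTab Dlow T := fun p hp q hq hpq =>
      hinc p ((hDlowmem p).mp hp).1 q ((hDlowmem q).mp hq).1 hpq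
    have hclosedlow : RowColumnClosed Dlow := by
      intro p hp q hq hpq
      obtain ⟨hpD, hpr⟩ := (hDlowmem p).mp hp
      obtain ⟨hqD, _⟩ := (hDlowmem q).mp hq
      exact (hDlowmem _).mpr ⟨hclosed p hpD q hqD hpq, hpr⟩
    have hIH := ih Dlow T hDlowcard hTposlow hinclow hclosedlow Lrlow Lclow hLrlowRL hLclowRL
    -- assemble
    have k2 : KKnuth (Lr.map T) (Lclow.map T ++ Ltop.map T) := by
      rw [hEqA, List.map_append]
      exact kk_append_right _ hIH
    have k3 : KKnuth (Lclow.map T ++ Ltop.map T) (Lc.map T) := by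
      rw [hEqB, hEqC, List.map_append, List.map_append, List.append_assoc]
      apply kk_append_left
      have hki := kk_interleave VCols [] hV1 hV2 hV3 hV4 hV5
      rw [hE1, hE2, hE3] at hki
      simpa using hki
    exact k2.trans k3

/-- the row and column reading words of an increasing
row-column-closed tableau are K-Knuth equivalent. -/
theorem row_col_kknuth (D : Finset (ℕ × ℕ)) (T : ℕ × ℕ → ℕ)
    (hDpos : ∀ p ∈ D, 0 < p.1 ∧ 0 < p.2)
    (hTpos : ∀ p ∈ D, 0 < T p)
    (hinc : IncreasingTab D T)
    (hclosed : RowColumnClosed D)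
    (Lr Lc : List (ℕ × ℕ))
    (hLr : IsReadingList rowOrd D Lr) (hLc : IsReadingList colOrd D Lc) :
    KKnuth (Lr.map T) (Lc.map T) :=
  main_induction D.card D T le_rfl hTpos hinc hclosed Lr Lc hLr hLc
end

section
/- If T is an increasing row-diagonal-closed tableau, then the row reading word of T is K-Knuth equivalent to the southwest diagonal reading word of T. -/
section AuxRowSw

lemma kknuth_append_left (w : List ℕ) {u v : List ℕ} (h : KKnuth u v) :
    KKnuth (w ++ u) (w ++ v) := by
  induction h with
  | refl _ => exact KKnuth.refl _
  | symm _ ih => exact ih.symm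
  | trans _ _ ih1 ih2 => exact ih1.trans ih2
  | cab_acb x y ha hab hbc =>
      simpa [List.append_assoc] using KKnuth.cab_acb (w ++ x) y ha hab hbc
  | bca_bac x y ha hab hbc =>
      simpa [List.append_assoc] using KKnuth.bca_bac (w ++ x) y ha hab hbc
  | aba_bab x y ha hab =>
      simpa [List.append_assoc] using KKnuth.aba_bab (w ++ x) y ha hab
  | dup x y ha =>
      simpa [List.append_assoc] using KKnuth.dup (w ++ x) y ha

lemma ordered_split {α : Type} (ord : α → α → Prop) (p : α → Bool) :
    ∀ (L : List α), L.Pairwise ord →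
    (∀ a ∈ L, ∀ b ∈ L, ord a b → p b = true → p a = true) →
    L = L.filter p ++ L.filter (fun x => !(p x))
  | [], _, _ => rfl
  | a :: t, hP, h => by
    have ht : t.Pairwise ord := hP.of_cons
    have hat : ∀ b ∈ t, ord a b := fun b hb => List.rel_of_pairwise_cons hP hb
    have IH := ordered_split ord p t ht
      (fun x hx y hy hxy hpy => h x (List.mem_cons_of_mem _ hx) y (List.mem_cons_of_mem _ hy) hxy hpy)
    by_cases hpa : p a = true
    · simp only [List.filter_cons, hpa, Bool.not_true, cond_true]
      simpa using IH
    · have hte : ∀ b ∈ t, p b = false := by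
        intro b hb
        rcases Bool.eq_false_or_eq_true (p b) with hb' | hb'
        · exact absurd (h a (List.mem_cons_self) b (List.mem_cons_of_mem _ hb) (hat b hb) hb') hpa
        · exact hb'
      have h1 : (a :: t).filter p = [] := by
        rw [List.filter_cons_of_neg hpa, List.filter_eq_nil_iff]
        intro b hb; simp [hte b hb]
      have h2 : (a :: t).filter (fun x => !(p x)) = a :: t := by
        rw [List.filter_eq_self]
        intro b hb
        rcases List.mem_cons.1 hb with rfl | hb
        · simp [hpa]
        · simp [hte b hb]
      rw [h1, h2, List.nil_append]

lemma eq_singleton_of_mem {α : Type} {l : List α} {a : α} (h1 : a ∈ l)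
    (h2 : ∀ x ∈ l, x = a) (h3 : l.Nodup) : l = [a] := by
  cases l with
  | nil => cases h1
  | cons b t =>
    have hb : b = a := h2 b (List.mem_cons_self)
    subst hb
    have ht : t = [] := by
      cases t with
      | nil => rfl
      | cons c s =>
        have hc : c = b := h2 c (by simp)
        subst hc
        exact ((List.nodup_cons.1 h3).1 ((List.mem_cons_self (a := c) (l := s)))).elim
    rw [ht]

lemma lemD : ∀ (G : List ℕ) (x y : List ℕ) (b c : ℕ),
    (∀ g ∈ G, 0 < g) → List.Pairwise (· > ·) (b :: G) → b < c → (∀ g ∈ G, g < c) →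
    KKnuth (x ++ b :: (G ++ c :: y)) (x ++ b :: c :: (G ++ y))
  | [], x, y, b, c, _, _, _, _ => KKnuth.refl _
  | g :: G', x, y, b, c, hpos, hpw, hbc, hGc => by
    have hgb : g < b := (List.pairwise_cons.1 hpw).1 g (List.mem_cons_self)
    have hg0 : 0 < g := hpos g (List.mem_cons_self)
    have h1 := lemD G' (x ++ [b]) y g c (fun z hz => hpos z (List.mem_cons_of_mem _ hz))
      hpw.of_cons (hGc g (List.mem_cons_self)) (fun z hz => hGc z (List.mem_cons_of_mem _ hz))
    have h1' : KKnuth (x ++ b :: ((g :: G') ++ c :: y)) (x ++ b :: g :: c :: (G' ++ y)) := by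
      simpa [List.append_assoc] using h1
    have h2 := (KKnuth.bca_bac x (G' ++ y) hg0 hgb hbc).symm
    -- h2 : KKnuth (x ++ [b, g, c] ++ (G' ++ y)) (x ++ [b, c, g] ++ (G' ++ y))
    have h2' : KKnuth (x ++ b :: g :: c :: (G' ++ y)) (x ++ b :: c :: ((g :: G') ++ y)) := by
      simpa [List.append_assoc] using h2
    exact h1'.trans h2'

lemma lemE : ∀ (C : List ℕ) (G x y : List ℕ) (b : ℕ),
    (∀ g ∈ G, 0 < g) → List.Pairwise (· > ·) (b :: G) → List.Pairwise (· < ·) (b :: C) →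
    KKnuth (x ++ b :: (G ++ (C ++ y))) (x ++ b :: (C ++ (G ++ y)))
  | [], G, x, y, b, _, _, _ => KKnuth.refl _
  | c :: C', G, x, y, b, hpos, hG, hC => by
    have hbc : b < c := (List.pairwise_cons.1 hC).1 c (List.mem_cons_self)
    have hGb : ∀ g ∈ G, g < b := fun g hg => (List.pairwise_cons.1 hG).1 g hg
    have h1 := lemD G x (C' ++ y) b c hpos hG hbc (fun g hg => lt_trans (hGb g hg) hbc)
    have hG' : List.Pairwise (· > ·) (c :: G) :=
      List.pairwise_cons.2 ⟨fun g hg => lt_trans (hGb g hg) hbc, hG.of_cons⟩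
    have h2 := lemE C' G (x ++ [b]) y c hpos hG' hC.of_cons
    have h2' : KKnuth (x ++ b :: c :: (G ++ (C' ++ y))) (x ++ b :: ((c :: C') ++ (G ++ y))) := by
      simpa [List.append_assoc] using h2
    exact h1.trans h2'

def botP (n : ℕ) : ℕ × ℕ → Bool := fun p => decide (p.1 = n)
def diaP (d : ℤ) : ℕ × ℕ → Bool := fun p => decide (diagZ p = d)

lemma swOrd_elim {p q : ℕ × ℕ} (h : swOrd p q) :
    diagZ p < diagZ q ∨ (diagZ p = diagZ q ∧ q.1 < p.1) := h

lemma swOrd_ne {p q : ℕ × ℕ} (h : swOrd p q) : p ≠ q := by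
  rintro rfl
  rcases swOrd_elim h with h | ⟨_, h⟩
  · exact absurd h (lt_irrefl _)
  · exact absurd h (lt_irrefl _)

lemma rowOrd_ne {p q : ℕ × ℕ} (h : rowOrd p q) : p ≠ q := by
  rintro rfl
  rcases h with h | ⟨_, h⟩
  · exact absurd h (lt_irrefl _)
  · exact absurd h (lt_irrefl _)

lemma diagZ_def (p : ℕ × ℕ) : diagZ p = (p.2 : ℤ) - (p.1 : ℤ) := rfl

lemma prec_of (p q : ℕ × ℕ) (h1 : p.1 ≤ q.1) (h2 : p.2 ≤ q.2)
    (h3 : p.1 < q.1 ∨ p.2 < q.2) : Prec p q := by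
  refine ⟨h1, h2, ?_⟩
  rintro rfl
  omega

lemma lemC (T : ℕ × ℕ → ℕ) :
    ∀ (k : ℕ) (S : Finset (ℕ × ℕ)) (n : ℕ), S.card ≤ k →
    (∀ p ∈ S, 0 < T p) → IncreasingTab S T → RowDiagonalClosed S →
    (∀ p ∈ S, p.1 ≤ n) →
    ∀ M : List (ℕ × ℕ), IsReadingList swOrd S M →
    KKnuth (M.map T)
      ((M.filter (botP n)).map T ++ (M.filter (fun p => !(botP n p))).map T) := by
  intro k
  induction k with
  | zero =>
    intro S n hcard _ _ _ _ M hM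
    have hS : S = ∅ := Finset.card_eq_zero.1 (Nat.le_zero.1 hcard)
    have hM0 : M = [] := List.eq_nil_iff_forall_not_mem.2 (fun p hp => by
      have := (hM.1 p).1 hp; simp [hS] at this)
    subst hM0
    exact KKnuth.refl _
  | succ k ih =>
    intro S n hcard hTpos hinc hclosed hle M hM
    by_cases hSe : S = ∅
    · have hM0 : M = [] := List.eq_nil_iff_forall_not_mem.2 (fun p hp => by
        have := (hM.1 p).1 hp; simp [hSe] at this)
      subst hM0
      exact KKnuth.refl _
    have hSne : S.Nonempty := Finset.nonempty_iff_ne_empty.2 hSe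
    have hMS : ∀ p, p ∈ M ↔ p ∈ S := hM.1
    have hMpw : M.Pairwise swOrd := hM.2
    have hMnd : M.Nodup := hMpw.imp (fun h => swOrd_ne h)
    obtain ⟨d₁, hd₁⟩ : ∃ d, d = (S.image diagZ).min' (hSne.image _) := ⟨_, rfl⟩
    have hd₁min : ∀ p ∈ S, d₁ ≤ diagZ p := fun p hp => by
      rw [hd₁]
      exact Finset.min'_le _ _ (Finset.mem_image_of_mem _ hp)
    obtain ⟨p₁, hp₁S, hp₁d⟩ := Finset.mem_image.1 (hd₁ ▸ Finset.min'_mem (S.image diagZ) (hSne.image _))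
    obtain ⟨M₁, hM₁def⟩ : ∃ L, L = M.filter (diaP d₁) := ⟨_, rfl⟩
    obtain ⟨M', hM'def⟩ : ∃ L, L = M.filter (fun x => !(diaP d₁ x)) := ⟨_, rfl⟩
    have hM₁mem : ∀ x ∈ M₁, x ∈ S ∧ diagZ x = d₁ := by
      intro x hx
      rw [hM₁def] at hx
      rcases List.mem_filter.1 hx with ⟨hx1, hx2⟩
      exact ⟨(hMS x).1 hx1, by simpa [diaP] using hx2⟩
    have hM'mem : ∀ x ∈ M', x ∈ S ∧ d₁ < diagZ x := by
      intro x hx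
      rw [hM'def] at hx
      rcases List.mem_filter.1 hx with ⟨hx1, hx2⟩
      have hxS := (hMS x).1 hx1
      have hxd : ¬ (diagZ x = d₁) := by simpa [diaP] using hx2
      exact ⟨hxS, lt_of_le_of_ne (hd₁min x hxS) (Ne.symm hxd)⟩
    have hsplit : M = M₁ ++ M' := by
      rw [hM₁def, hM'def]
      refine ordered_split swOrd (diaP d₁) M hMpw ?_
      intro a ha b hb hab hpb
      have hbd : diagZ b = d₁ := by simpa [diaP] using hpb
      have haS : a ∈ S := (hMS a).1 ha
      have hamin := hd₁min a haS
      simp only [diaP, decide_eq_true_eq]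
      rcases swOrd_elim hab with h | ⟨h, _⟩
      · omega
      · omega
    -- the set on smaller diagonals
    have hM'rl : IsReadingList swOrd (S.filter (fun p => ¬ diagZ p = d₁)) M' := by
      constructor
      · intro p
        rw [hM'def]
        simp [List.mem_filter, hMS p, Finset.mem_filter, diaP]
      · rw [hM'def]
        exact List.Pairwise.sublist (List.filter_sublist) hMpw
    have hS'card : (S.filter (fun p => ¬ diagZ p = d₁)).card ≤ k := by
      have hss : (S.filter (fun p => ¬ diagZ p = d₁)) ⊂ S :=
        Finset.filter_ssubset.2 ⟨p₁, hp₁S, by simp [hp₁d]⟩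
      have := Finset.card_lt_card hss
      omega
    have hdiagcell : ∀ (p q : ℕ × ℕ), p.1 ≤ q.1 → diagZ (q.1, p.2 + q.1 - p.1) = diagZ p := by
      intro p q h
      show ((p.2 + q.1 - p.1 : ℕ) : ℤ) - (q.1 : ℤ) = (p.2 : ℤ) - (p.1 : ℤ)
      omega
    have IH := ih (S.filter (fun p => ¬ diagZ p = d₁)) n hS'card
      (fun p hp => hTpos p (Finset.mem_filter.1 hp).1)
      (fun p hp q hq hpq => hinc p (Finset.mem_filter.1 hp).1 q (Finset.mem_filter.1 hq).1 hpq)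
      (by
        intro p hp q hq hpq hcond
        rcases Finset.mem_filter.1 hp with ⟨hpS, hpd⟩
        rcases Finset.mem_filter.1 hq with ⟨hqS, _⟩
        refine Finset.mem_filter.2 ⟨hclosed p hpS q hqS hpq hcond, ?_⟩
        rw [hdiagcell p q hpq.1]
        exact hpd)
      (fun p hp => hle p (Finset.mem_filter.1 hp).1)
      M' hM'rl
    -- split M₁ into the bottom cell and the rest
    obtain ⟨Aseg, hAdef⟩ : ∃ L, L = M₁.filter (botP n) := ⟨_, rfl⟩
    obtain ⟨G, hGdef⟩ : ∃ L, L = M₁.filter (fun x => !(botP n x)) := ⟨_, rfl⟩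
    obtain ⟨Mb', hMbdef⟩ : ∃ L, L = M'.filter (botP n) := ⟨_, rfl⟩
    obtain ⟨Mu', hMudef⟩ : ∃ L, L = M'.filter (fun x => !(botP n x)) := ⟨_, rfl⟩
    have hM₁pw : M₁.Pairwise swOrd := by
      rw [hM₁def]; exact List.Pairwise.sublist (List.filter_sublist) hMpw
    have hsplit1 : M₁ = Aseg ++ G := by
      rw [hAdef, hGdef]
      refine ordered_split swOrd (botP n) M₁ hM₁pw ?_
      intro a ha b hb hab hpb
      obtain ⟨haS, had⟩ := hM₁mem a ha
      obtain ⟨hbS, hbd⟩ := hM₁mem b hb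
      have hbn : b.1 = n := by simpa [botP] using hpb
      have han : a.1 ≤ n := hle a haS
      simp only [botP, decide_eq_true_eq]
      rcases swOrd_elim hab with h | ⟨_, h⟩
      · omega
      · omega
    have hGmem : ∀ x ∈ G, x ∈ S ∧ diagZ x = d₁ ∧ x.1 < n := by
      intro x hx
      rw [hGdef] at hx
      rcases List.mem_filter.1 hx with ⟨hx1, hx2⟩
      obtain ⟨hxS, hxd⟩ := hM₁mem x hx1
      have : ¬ (x.1 = n) := by simpa [botP] using hx2
      exact ⟨hxS, hxd, lt_of_le_of_ne (hle x hxS) this⟩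
    have hMb'mem : ∀ x ∈ Mb', x ∈ S ∧ d₁ < diagZ x ∧ x.1 = n := by
      intro x hx
      rw [hMbdef] at hx
      rcases List.mem_filter.1 hx with ⟨hx1, hx2⟩
      obtain ⟨hxS, hxd⟩ := hM'mem x hx1
      exact ⟨hxS, hxd, by simpa [botP] using hx2⟩
    -- rewrite the goal
    have hfb : M.filter (botP n) = Aseg ++ Mb' := by
      rw [hsplit, List.filter_append, ← hAdef, ← hMbdef]
    have hfu : M.filter (fun p => !(botP n p)) = G ++ Mu' := by
      rw [hsplit, List.filter_append, ← hGdef, ← hMudef]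
    rw [hfb, hfu]
    have step0 : KKnuth (M.map T) (M₁.map T ++ (Mb'.map T ++ Mu'.map T)) := by
      rw [hsplit, List.map_append]
      refine kknuth_append_left _ ?_
      rw [hMbdef, hMudef]
      exact IH
    refine step0.trans ?_
    rw [hsplit1]
    simp only [List.map_append, List.append_assoc]
    -- goal : KKnuth (Aseg.map T ++ (G.map T ++ (Mb'.map T ++ Mu'.map T)))
    --               (Aseg.map T ++ (Mb'.map T ++ (G.map T ++ Mu'.map T)))
    by_cases hGnil : G = []
    · rw [hGnil]
      simpa using KKnuth.refl _
    by_cases hMbnil : Mb' = []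
    · rw [hMbnil]
      simpa using KKnuth.refl _
    obtain ⟨g₀, hg₀⟩ := List.exists_mem_of_ne_nil G hGnil
    obtain ⟨q₀, hq₀⟩ := List.exists_mem_of_ne_nil Mb' hMbnil
    obtain ⟨hg₀S, hg₀d, hg₀n⟩ := hGmem g₀ hg₀
    obtain ⟨hq₀S, hq₀d, hq₀n⟩ := hMb'mem q₀ hq₀
    rw [diagZ_def] at hg₀d hq₀d
    have hprec : Prec g₀ q₀ := prec_of _ _ (by omega) (by omega) (by omega)
    have hcond : g₀.2 + q₀.1 ≤ g₀.1 + q₀.2 := by omega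
    have htS : (q₀.1, g₀.2 + q₀.1 - g₀.1) ∈ S := hclosed g₀ hg₀S q₀ hq₀S hprec hcond
    obtain ⟨t, htdef⟩ : ∃ t, t = (q₀.1, g₀.2 + q₀.1 - g₀.1) := ⟨_, rfl⟩
    rw [← htdef] at htS
    have htd : diagZ t = d₁ := by
      rw [htdef, hdiagcell g₀ q₀ hprec.1, diagZ_def]
      omega
    have htn : t.1 = n := by rw [htdef]; exact hq₀n
    have ht2 : (t.2 : ℤ) = (n : ℤ) + d₁ := by
      rw [diagZ_def] at htd
      omega
    have htA : t ∈ Aseg := by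
      rw [hAdef, hM₁def]
      refine List.mem_filter.2 ⟨List.mem_filter.2 ⟨(hMS t).2 htS, ?_⟩, ?_⟩
      · simp [diaP, htd]
      · simp [botP, htn]
    have hAmem : ∀ x ∈ Aseg, x ∈ S ∧ diagZ x = d₁ ∧ x.1 = n := by
      intro x hx
      rw [hAdef] at hx
      rcases List.mem_filter.1 hx with ⟨hx1, hx2⟩
      obtain ⟨hxS, hxd⟩ := hM₁mem x hx1
      exact ⟨hxS, hxd, by simpa [botP] using hx2⟩
    have hAnd : Aseg.Nodup := by
      rw [hAdef, hM₁def]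
      exact (List.Sublist.trans (List.filter_sublist) (List.filter_sublist)).nodup hMnd
    have hAseg1 : Aseg = [t] := by
      refine eq_singleton_of_mem htA ?_ hAnd
      intro x hx
      obtain ⟨hxS, hxd, hxn⟩ := hAmem x hx
      rw [diagZ_def] at hxd
      have hx2 : x.2 = t.2 := by omega
      have hx1 : x.1 = t.1 := by omega
      exact Prod.ext hx1 hx2
    -- pairwise facts for lemE
    have hGpw : G.Pairwise swOrd := by
      rw [hGdef]
      exact List.Pairwise.sublist (List.filter_sublist) hM₁pw
    have hMbpw : Mb'.Pairwise swOrd := by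
      rw [hMbdef, hM'def]
      exact List.Pairwise.sublist
        (List.Sublist.trans (List.filter_sublist) (List.filter_sublist)) hMpw
    have hGposv : ∀ v ∈ G.map T, 0 < v := by
      intro v hv
      obtain ⟨g, hg, rfl⟩ := List.mem_map.1 hv
      exact hTpos g (hGmem g hg).1
    have hPgt : List.Pairwise (· > ·) (T t :: G.map T) := by
      have hpair : List.Pairwise (fun a b => T a > T b) (t :: G) := by
        refine List.pairwise_cons.2 ⟨?_, ?_⟩
        · intro g hg
          obtain ⟨hgS, hgd, hgn⟩ := hGmem g hg
          rw [diagZ_def] at hgd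
          exact hinc g hgS t htS (prec_of _ _ (by omega) (by omega) (by omega))
        · refine hGpw.imp_of_mem ?_
          intro a b ha hb hab
          obtain ⟨haS, had, _⟩ := hGmem a ha
          obtain ⟨hbS, hbd, _⟩ := hGmem b hb
          rw [diagZ_def] at had hbd
          rcases swOrd_elim hab with h | ⟨_, h⟩
          · rw [diagZ_def, diagZ_def] at h; omega
          · exact hinc b hbS a haS (prec_of _ _ (by omega) (by omega) (by omega))
      have : List.Pairwise (· > ·) ((t :: G).map T) := List.pairwise_map.2 hpair
      simpa using this
    have hPlt : List.Pairwise (· < ·) (T t :: Mb'.map T) := by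
      have hpair : List.Pairwise (fun a b => T a < T b) (t :: Mb') := by
        refine List.pairwise_cons.2 ⟨?_, ?_⟩
        · intro q hq
          obtain ⟨hqS, hqd, hqn⟩ := hMb'mem q hq
          rw [diagZ_def] at hqd
          exact hinc t htS q hqS (prec_of _ _ (by omega) (by omega) (by omega))
        · refine hMbpw.imp_of_mem ?_
          intro a b ha hb hab
          obtain ⟨haS, had, han⟩ := hMb'mem a ha
          obtain ⟨hbS, hbd, hbn⟩ := hMb'mem b hb
          rcases swOrd_elim hab with h | ⟨_, h⟩
          · rw [diagZ_def, diagZ_def] at h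
            exact hinc a haS b hbS (prec_of _ _ (by omega) (by omega) (by omega))
          · omega
      have : List.Pairwise (· < ·) ((t :: Mb').map T) := List.pairwise_map.2 hpair
      simpa using this
    rw [hAseg1]
    have := lemE (Mb'.map T) (G.map T) [] (Mu'.map T) (T t) hGposv hPgt hPlt
    simpa using this

lemma mainAux (T : ℕ × ℕ → ℕ) :
    ∀ (k : ℕ) (D : Finset (ℕ × ℕ)), D.card ≤ k →
    (∀ p ∈ D, 0 < T p) → IncreasingTab D T → RowDiagonalClosed D →
    ∀ Lr Lsw, IsReadingList rowOrd D Lr → IsReadingList swOrd D Lsw →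
    KKnuth (Lr.map T) (Lsw.map T) := by
  intro k
  induction k with
  | zero =>
    intro D hcard _ _ _ Lr Lsw hLr hLsw
    have hD : D = ∅ := Finset.card_eq_zero.1 (Nat.le_zero.1 hcard)
    have h1 : Lr = [] := List.eq_nil_iff_forall_not_mem.2 (fun p hp => by
      have := (hLr.1 p).1 hp; simp [hD] at this)
    have h2 : Lsw = [] := List.eq_nil_iff_forall_not_mem.2 (fun p hp => by
      have := (hLsw.1 p).1 hp; simp [hD] at this)
    rw [h1, h2]
    exact KKnuth.refl _
  | succ k ih =>
    intro D hcard hTpos hinc hclosed Lr Lsw hLr hLsw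
    by_cases hDe : D = ∅
    · have h1 : Lr = [] := List.eq_nil_iff_forall_not_mem.2 (fun p hp => by
        have := (hLr.1 p).1 hp; simp [hDe] at this)
      have h2 : Lsw = [] := List.eq_nil_iff_forall_not_mem.2 (fun p hp => by
        have := (hLsw.1 p).1 hp; simp [hDe] at this)
      rw [h1, h2]
      exact KKnuth.refl _
    have hDne : D.Nonempty := Finset.nonempty_iff_ne_empty.2 hDe
    obtain ⟨n, hn⟩ : ∃ n, n = (D.image Prod.fst).max' (hDne.image _) := ⟨_, rfl⟩
    have hle : ∀ p ∈ D, p.1 ≤ n := fun p hp => by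
      rw [hn]; exact Finset.le_max' _ _ (Finset.mem_image_of_mem _ hp)
    obtain ⟨p₀, hp₀D, hp₀n⟩ :=
      Finset.mem_image.1 (hn ▸ Finset.max'_mem (D.image Prod.fst) (hDne.image _))
    obtain ⟨Ar, hArdef⟩ : ∃ L, L = Lr.filter (botP n) := ⟨_, rfl⟩
    obtain ⟨Lr', hLr'def⟩ : ∃ L, L = Lr.filter (fun x => !(botP n x)) := ⟨_, rfl⟩
    obtain ⟨Lsw', hLsw'def⟩ : ∃ L, L = Lsw.filter (fun x => !(botP n x)) := ⟨_, rfl⟩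
    have hsplitr : Lr = Ar ++ Lr' := by
      rw [hArdef, hLr'def]
      refine ordered_split rowOrd (botP n) Lr hLr.2 ?_
      intro a ha b hb hab hpb
      have hbn : b.1 = n := by simpa [botP] using hpb
      have han : a.1 ≤ n := hle a ((hLr.1 a).1 ha)
      simp only [botP, decide_eq_true_eq]
      rcases hab with h | ⟨h, _⟩
      · omega
      · omega
    have hLr'rl : IsReadingList rowOrd (D.filter (fun p => ¬ p.1 = n)) Lr' := by
      constructor
      · intro p
        rw [hLr'def]
        simp [List.mem_filter, hLr.1 p, Finset.mem_filter, botP]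
      · rw [hLr'def]
        exact List.Pairwise.sublist (List.filter_sublist) hLr.2
    have hLsw'rl : IsReadingList swOrd (D.filter (fun p => ¬ p.1 = n)) Lsw' := by
      constructor
      · intro p
        rw [hLsw'def]
        simp [List.mem_filter, hLsw.1 p, Finset.mem_filter, botP]
      · rw [hLsw'def]
        exact List.Pairwise.sublist (List.filter_sublist) hLsw.2
    have hD'card : (D.filter (fun p => ¬ p.1 = n)).card ≤ k := by
      have hss : (D.filter (fun p => ¬ p.1 = n)) ⊂ D :=
        Finset.filter_ssubset.2 ⟨p₀, hp₀D, by simp [hp₀n]⟩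
      have := Finset.card_lt_card hss
      omega
    have IH := ih (D.filter (fun p => ¬ p.1 = n)) hD'card
      (fun p hp => hTpos p (Finset.mem_filter.1 hp).1)
      (fun p hp q hq hpq => hinc p (Finset.mem_filter.1 hp).1 q (Finset.mem_filter.1 hq).1 hpq)
      (by
        intro p hp q hq hpq hcond
        rcases Finset.mem_filter.1 hp with ⟨hpS, _⟩
        rcases Finset.mem_filter.1 hq with ⟨hqS, hqn⟩
        exact Finset.mem_filter.2 ⟨hclosed p hpS q hqS hpq hcond, hqn⟩)
      Lr' Lsw' hLr'rl hLsw'rl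
    have hC := lemC T D.card D n le_rfl hTpos hinc hclosed hle Lsw hLsw
    -- the two bottom-row lists coincide
    have hABmem : ∀ a, a ∈ Ar ↔ (a ∈ D ∧ a.1 = n) := by
      intro a
      rw [hArdef]
      simp [List.mem_filter, hLr.1 a, botP]
    have hBmem : ∀ a, a ∈ Lsw.filter (botP n) ↔ (a ∈ D ∧ a.1 = n) := by
      intro a
      simp [List.mem_filter, hLsw.1 a, botP]
    have hArnd : Ar.Nodup := by
      rw [hArdef]
      exact (List.filter_sublist).nodup (hLr.2.imp (fun h => rowOrd_ne h))
    have hBnd : (Lsw.filter (botP n)).Nodup :=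
      (List.filter_sublist).nodup (hLsw.2.imp (fun h => swOrd_ne h))
    have hperm : Ar.Perm (Lsw.filter (botP n)) := by
      refine (List.perm_ext_iff_of_nodup hArnd hBnd).2 ?_
      intro a
      rw [hABmem a, hBmem a]
    haveI : IsAntisymm (ℕ × ℕ) (fun p q : ℕ × ℕ => p.2 < q.2) :=
      ⟨fun a b h h' => ((lt_asymm h) h').elim⟩
    have hsA : Ar.Pairwise (fun p q : ℕ × ℕ => p.2 < q.2) := by
      have hpw : Ar.Pairwise rowOrd := by
        rw [hArdef]; exact List.Pairwise.sublist (List.filter_sublist) hLr.2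
      refine hpw.imp_of_mem ?_
      intro a b ha hb hab
      have han : a.1 = n := ((hABmem a).1 ha).2
      have hbn : b.1 = n := ((hABmem b).1 hb).2
      rcases hab with h | ⟨_, h⟩
      · omega
      · exact h
    have hsB : (Lsw.filter (botP n)).Pairwise (fun p q : ℕ × ℕ => p.2 < q.2) := by
      have hpw : (Lsw.filter (botP n)).Pairwise swOrd :=
        List.Pairwise.sublist (List.filter_sublist) hLsw.2
      refine hpw.imp_of_mem ?_
      intro a b ha hb hab
      have han : a.1 = n := ((hBmem a).1 ha).2
      have hbn : b.1 = n := ((hBmem b).1 hb).2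
      rcases swOrd_elim hab with h | ⟨_, h⟩
      · rw [diagZ_def, diagZ_def] at h; omega
      · omega
    have hAB : Lsw.filter (botP n) = Ar :=
      (List.Perm.eq_of_pairwise (fun _ _ _ _ h h' => ((lt_asymm h) h').elim) hsA hsB hperm).symm
    rw [hAB, ← hLsw'def] at hC
    have h1 : KKnuth (Lr.map T) (Ar.map T ++ Lsw'.map T) := by
      rw [hsplitr, List.map_append]
      exact kknuth_append_left _ IH
    exact h1.trans hC.symm


end AuxRowSw

/-- the row reading word and southwest diagonal reading word of
an increasing row-diagonal-closed tableau are K-Knuth equivalent. -/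
theorem row_swdiag_kknuth (D : Finset (ℕ × ℕ)) (T : ℕ × ℕ → ℕ)
    (hDpos : ∀ p ∈ D, 0 < p.1 ∧ 0 < p.2)
    (hTpos : ∀ p ∈ D, 0 < T p)
    (hinc : IncreasingTab D T)
    (hclosed : RowDiagonalClosed D)
    (Lr Lsw : List (ℕ × ℕ))
    (hLr : IsReadingList rowOrd D Lr) (hLsw : IsReadingList swOrd D Lsw) :
    KKnuth (Lr.map T) (Lsw.map T) := by
  exact mainAux T D.card D le_rfl hTpos hinc hclosed Lr Lsw hLr hLsw
end

section
/- If T is an increasing shifted tableau, then its row reading word, column reading word, northeast diagonal reading word, and southwest diagonal reading word are all pairwise K-Knuth equivalent. -/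
/-- `D` is the shifted Young diagram `SD_λ = {(i, i+j−1) : 1 ≤ j ≤ λ_i}`
of a strict partition `λ = (λ_1 > λ_2 > ⋯)` (given as a list). -/
def IsShiftedDiagram (lam : List ℕ) (D : Finset (ℕ × ℕ)) : Prop :=
  ∀ p : ℕ × ℕ, p ∈ D ↔
    (1 ≤ p.1 ∧ p.1 ≤ lam.length ∧ p.1 ≤ p.2 ∧ p.2 + 1 ≤ p.1 + lam.getD (p.1 - 1) 0)

lemma kk_congr_left {u v : List ℕ} (h : KKnuth u v) (x : List ℕ) :
    KKnuth (x ++ u) (x ++ v) := by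
  simpa using kk_congr h x []

lemma kk_congr_right {u v : List ℕ} (h : KKnuth u v) (y : List ℕ) :
    KKnuth (u ++ y) (v ++ y) := by
  simpa using kk_congr h [] y

/-- Move a big letter `y` right past an increasing block `E`, with follower `f`. -/
lemma bigRight (E : List ℕ) : ∀ (x v : List ℕ) (y f : ℕ),
    List.Pairwise (· < ·) E → (∀ e ∈ E, 0 < e) → (∀ e ∈ E, e < f) → f < y →
    KKnuth (x ++ y :: (E ++ f :: v)) (x ++ (E ++ y :: f :: v)) := by
  induction E with
  | nil => intro x v y f _ _ _ _; exact .refl _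
  | cons e E' ih =>
    intro x v y f hp hpos hf hfy
    have h0 : 0 < e := hpos e (by simp)
    have hef : e < f := hf e (by simp)
    have step : KKnuth (x ++ [y, e] ++ (E' ++ f :: v)) (x ++ [e, y] ++ (E' ++ f :: v)) := by
      cases E' with
      | nil =>
        simpa [List.append_assoc] using
          KKnuth.cab_acb (a := e) (b := f) (c := y) x v h0 hef hfy
      | cons e2 E'' =>
        have he2 : e < e2 := (List.pairwise_cons.mp hp).1 e2 (by simp)
        have he2y : e2 < y := lt_trans (hf e2 (by simp)) hfy
        simpa [List.append_assoc] using
          KKnuth.cab_acb (a := e) (b := e2) (c := y) x (E'' ++ f :: v) h0 he2 he2y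
    have rest : KKnuth ((x ++ [e]) ++ y :: (E' ++ f :: v)) ((x ++ [e]) ++ (E' ++ y :: f :: v)) :=
      ih (x ++ [e]) v y f (List.pairwise_cons.mp hp).2 (fun a ha => hpos a (by simp [ha]))
        (fun a ha => hf a (by simp [ha])) hfy
    refine .trans ?_ (by simpa [List.append_assoc] using rest)
    simpa [List.append_assoc] using step

/-- Move a decreasing run `w` of big letters right past an increasing block `E`,
with follower `f`. -/
lemma runBigRight (w : List ℕ) : ∀ (x v E : List ℕ) (f : ℕ),
    List.Pairwise (· > ·) w → List.Pairwise (· < ·) E → (∀ e ∈ E, 0 < e) →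
    (∀ e ∈ E, e < f) → (∀ a ∈ w, f < a) →
    KKnuth (x ++ w ++ E ++ f :: v) (x ++ E ++ w ++ f :: v) := by
  induction w with
  | nil => intro x v E f _ _ _ _ _; simpa using KKnuth.refl (x ++ (E ++ f :: v))
  | cons z w' ih =>
    intro x v E f hw hE hpos hEf hfw
    have hz : f < z := hfw z (by simp)
    have step1 : KKnuth ((x ++ [z]) ++ w' ++ E ++ f :: v) ((x ++ [z]) ++ E ++ w' ++ f :: v) :=
      ih (x ++ [z]) v E f (List.pairwise_cons.mp hw).2 hE hpos hEf
        (fun a ha => hfw a (by simp [ha]))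
    refine .trans (by simpa [List.append_assoc] using step1) ?_
    -- now move z past E, with follower = head of (w' ++ f :: v)
    cases w' with
    | nil =>
      simpa [List.append_assoc] using bigRight E x v z f hE hpos hEf hz
    | cons z2 w'' =>
      have hz2 : z2 < z := (List.pairwise_cons.mp hw).1 z2 (by simp)
      have hEz2 : ∀ e ∈ E, e < z2 := fun e he => lt_trans (hEf e he) (hfw z2 (by simp))
      have := bigRight E x (w'' ++ f :: v) z z2 hE hpos hEz2 hz2
      simpa [List.append_assoc] using this

/-- Move a big letter `z` left past a decreasing block `B`, with preceder `p`. -/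
lemma bigLeft (B : List ℕ) : ∀ (x v : List ℕ) (p z : ℕ),
    List.Pairwise (· > ·) B → (∀ b ∈ B, 0 < b) → (∀ b ∈ B, b < p) → p < z →
    KKnuth (x ++ p :: (B ++ z :: v)) (x ++ p :: z :: (B ++ v)) := by
  induction B with
  | nil => intro x v p z _ _ _ _; exact .refl _
  | cons b B' ih =>
    intro x v p z hB hpos hbp hpz
    have h0 : 0 < b := hpos b (by simp)
    have hbz : b < z := lt_trans (hbp b (by simp)) hpz
    have step1 : KKnuth ((x ++ [p]) ++ b :: (B' ++ z :: v)) ((x ++ [p]) ++ b :: z :: (B' ++ v)) :=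
      ih (x ++ [p]) v b z (List.pairwise_cons.mp hB).2 (fun a ha => hpos a (by simp [ha]))
        (fun a ha => (List.pairwise_cons.mp hB).1 a ha) hbz
    refine .trans (by simpa [List.append_assoc] using step1) ?_
    have := (KKnuth.bca_bac (a := b) (b := p) (c := z) x (B' ++ v)
      h0 (hbp b (by simp)) hpz).symm
    simpa [List.append_assoc] using this

/-- Move an increasing run `u` of big letters left past a decreasing block `B`,
with preceder `p`. -/
lemma runBigLeft (u : List ℕ) : ∀ (x v B : List ℕ) (p : ℕ),
    List.Pairwise (· < ·) u → List.Pairwise (· > ·) B → (∀ b ∈ B, 0 < b) →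
    (∀ b ∈ B, b < p) → (∀ a ∈ u, p < a) →
    KKnuth (x ++ p :: (B ++ u ++ v)) (x ++ p :: (u ++ B ++ v)) := by
  induction u with
  | nil => intro x v B p _ _ _ _ _; simpa using KKnuth.refl (x ++ p :: (B ++ v))
  | cons a u' ih =>
    intro x v B p hu hB hpos hbp hpu
    have hpa : p < a := hpu a (by simp)
    have step1 : KKnuth (x ++ p :: (B ++ a :: (u' ++ v))) (x ++ p :: a :: (B ++ (u' ++ v))) :=
      bigLeft B x (u' ++ v) p a hB hpos hbp hpa
    have step2 : KKnuth ((x ++ [p]) ++ a :: (B ++ u' ++ v)) ((x ++ [p]) ++ a :: (u' ++ B ++ v)) :=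
      ih (x ++ [p]) v B a (List.pairwise_cons.mp hu).2 hB hpos
        (fun b hb => lt_trans (hbp b hb) hpa) (fun z hz => (List.pairwise_cons.mp hu).1 z hz)
    refine .trans (by simpa [List.append_assoc] using step1) ?_
    simpa [List.append_assoc] using step2

lemma rowOrd_asymm_s7 : ∀ a b, rowOrd a b → rowOrd b a → False := by
  intro a b h1 h2; unfold rowOrd at *; omega

lemma colOrd_asymm_s7 : ∀ a b, colOrd a b → colOrd b a → False := by
  intro a b h1 h2; unfold colOrd at *; omega

lemma neOrd_asymm : ∀ a b, neOrd a b → neOrd b a → False := by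
  intro a b h1 h2; unfold neOrd diagZ at *; omega

lemma swOrd_asymm : ∀ a b, swOrd a b → swOrd b a → False := by
  intro a b h1 h2; unfold swOrd diagZ at *; omega

section RL

variable {ord : ℕ × ℕ → ℕ × ℕ → Prop} {S S' S₁ S₂ : Finset (ℕ × ℕ)} {L L₁ L₂ : List (ℕ × ℕ)}

lemma rl_congr (h : IsReadingList ord S L) (hss : ∀ z, z ∈ S ↔ z ∈ S') :
    IsReadingList ord S' L := ⟨fun p => (h.1 p).trans (hss p), h.2⟩

lemma rl_empty (h : IsReadingList ord S L) (hS : ∀ z, z ∉ S) : L = [] := by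
  cases L with
  | nil => rfl
  | cons a t => exact absurd ((h.1 a).mp (by simp)) (hS a)

lemma rl_single (hasym : ∀ a b, ord a b → ord b a → False) {a : ℕ × ℕ}
    (h : IsReadingList ord S L) (hS : ∀ z, z ∈ S ↔ z = a) : L = [a] := by
  cases L with
  | nil =>
    exact absurd ((h.1 a).mpr ((hS a).mpr rfl)) (by simp)
  | cons b t =>
    have hb : b = a := (hS b).mp ((h.1 b).mp (by simp))
    have ht : t = [] := by
      cases t with
      | nil => rfl
      | cons z t' =>
        have hz : z = a := (hS z).mp ((h.1 z).mp (by simp))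
        have := (List.pairwise_cons.mp h.2).1 z (by simp)
        rw [hb, hz] at this
        exact absurd this (fun hh => hasym a a hh hh)
    rw [hb, ht]

lemma sorted_split_list (hasym : ∀ a b, ord a b → ord b a → False)
    (P : ℕ × ℕ → Prop) [DecidablePred P] :
    ∀ {L : List (ℕ × ℕ)}, L.Pairwise ord →
    (∀ a b, a ∈ L → b ∈ L → P a → ¬ P b → ord a b) →
    L = L.filter (fun z => decide (P z)) ++ L.filter (fun z => decide (¬ P z)) := by
  intro L
  induction L with
  | nil => simp
  | cons a t ih =>
    intro hp hsep
    have hpt := (List.pairwise_cons.mp hp).2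
    have hat := (List.pairwise_cons.mp hp).1
    have hsept : ∀ a b, a ∈ t → b ∈ t → P a → ¬ P b → ord a b := by
      intro x y hx hy; exact hsep x y (by simp [hx]) (by simp [hy])
    by_cases hPa : P a
    · simpa [hPa] using ih hpt hsept
    · have hnt : ∀ z ∈ t, ¬ P z := by
        intro z hz hPz
        exact hasym z a (hsep z a (by simp [hz]) (by simp) hPz hPa) (hat z hz)
      have h1 : t.filter (fun z => decide (P z)) = [] :=
        List.filter_eq_nil_iff.mpr (by intro z hz; simpa using hnt z hz)
      have h2 : t.filter (fun z => decide (¬ P z)) = t :=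
        List.filter_eq_self.mpr (by intro z hz; simpa using hnt z hz)
      have h2' : t.filter (fun z => !decide (P z)) = t := by
        rw [← h2]; congr 1; funext z; simp [decide_not]
      simp [hPa, h1, h2', decide_not]

lemma rl_split (hasym : ∀ a b, ord a b → ord b a → False)
    (h : IsReadingList ord S L) (P : ℕ × ℕ → Prop) [DecidablePred P]
    (hsep : ∀ a b, a ∈ S → b ∈ S → P a → ¬ P b → ord a b) :
    ∃ L₁ L₂, L = L₁ ++ L₂ ∧ IsReadingList ord (S.filter P) L₁ ∧
      IsReadingList ord (S.filter (fun z => ¬ P z)) L₂ := by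
  classical
  refine ⟨L.filter (fun z => decide (P z)), L.filter (fun z => decide (¬ P z)), ?_, ?_, ?_⟩
  · exact sorted_split_list hasym P h.2
      (fun a b ha hb => hsep a b ((h.1 a).mp ha) ((h.1 b).mp hb))
  · constructor
    · intro z
      simp only [List.mem_filter, Finset.mem_filter, decide_eq_true_eq, h.1 z]
    · exact h.2.sublist List.filter_sublist
  · constructor
    · intro z
      simp only [List.mem_filter, Finset.mem_filter, decide_eq_true_eq, h.1 z]
    · exact h.2.sublist List.filter_sublist

lemma rl_concat (h₁ : IsReadingList ord S₁ L₁) (h₂ : IsReadingList ord S₂ L₂)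
    (hsep : ∀ a ∈ S₁, ∀ b ∈ S₂, ord a b)
    (hS : ∀ z, z ∈ S ↔ z ∈ S₁ ∨ z ∈ S₂) : IsReadingList ord S (L₁ ++ L₂) := by
  constructor
  · intro z; simp [List.mem_append, h₁.1 z, h₂.1 z, hS z]
  · exact List.pairwise_append.mpr ⟨h₁.2, h₂.2,
      fun a ha b hb => hsep a ((h₁.1 a).mp ha) b ((h₂.1 b).mp hb)⟩

end RL

section Lam

lemma getD_mem {xs : List ℕ} {k : ℕ} (hk : k < xs.length) : xs.getD k 0 ∈ xs := by
  rw [List.getD_eq_getElem _ _ hk]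
  exact List.getElem_mem hk

lemma chain_getD_lt {xs : List ℕ} (h : List.Chain' (· > ·) xs) {k : ℕ}
    (hk : k + 1 < xs.length) : xs.getD (k+1) 0 < xs.getD k 0 := by
  rw [List.getD_eq_getElem _ _ hk, List.getD_eq_getElem _ _ (by omega)]
  exact List.isChain_iff_getElem.mp h k (by omega)

lemma getD_mono {xs : List ℕ} (h : List.Chain' (· > ·) xs) :
    ∀ b, b < xs.length → ∀ a, a ≤ b → xs.getD b 0 + b ≤ xs.getD a 0 + a := by
  intro b
  induction b with
  | zero =>
    intro _ a ha
    have : a = 0 := by omega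
    subst this; omega
  | succ b ih =>
    intro hb a ha
    rcases Nat.eq_or_lt_of_le ha with rfl | ha'
    · omega
    · have h1 := chain_getD_lt h hb
      have h2 := ih (by omega) a (by omega)
      omega

def stairLen : ℕ → List ℕ → ℕ
  | _, [] => 0
  | v, a :: t => if a = v then stairLen (v-1) t + 1 else 0

lemma sl_le_length : ∀ (v : ℕ) (xs : List ℕ), stairLen v xs ≤ xs.length := by
  intro v xs
  induction xs generalizing v with
  | nil => simp [stairLen]
  | cons a t ih =>
    simp only [stairLen, List.length_cons]
    split
    · exact Nat.succ_le_succ (ih _)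
    · omega

lemma sl_getD : ∀ (xs : List ℕ) (v : ℕ), (∀ x ∈ xs, 0 < x) →
    ∀ k, k < stairLen v xs → xs.getD k 0 + k = v := by
  intro xs
  induction xs with
  | nil => intro v _ k hk; simp [stairLen] at hk
  | cons a t ih =>
    intro v hpos k hk
    simp only [stairLen] at hk
    by_cases hav : a = v
    · subst hav
      rw [if_pos rfl] at hk
      have hv : 0 < a := hpos a (by simp)
      cases k with
      | zero => simp
      | succ k' =>
        have := ih (a-1) (fun x hx => hpos x (by simp [hx])) k' (by omega)
        simp only [List.getD_cons_succ]
        omega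
    · simp [hav] at hk

lemma sl_stop : ∀ (xs : List ℕ) (v : ℕ), (∀ x ∈ xs, 0 < x) →
    stairLen v xs < xs.length → xs.getD (stairLen v xs) 0 + stairLen v xs ≠ v := by
  intro xs
  induction xs with
  | nil => intro v _ h; simp at h
  | cons a t ih =>
    intro v hpos h
    by_cases hav : a = v
    · subst hav
      have hs : stairLen a (a :: t) = stairLen (a-1) t + 1 := by simp [stairLen]
      rw [hs] at h ⊢
      simp only [List.length_cons] at h
      have hv : 0 < a := hpos a (by simp)
      have hsl := sl_le_length (a-1) t
      have := ih (a-1) (fun x hx => hpos x (by simp [hx])) (by omega)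
      simp only [List.getD_cons_succ]
      omega
    · have hs : stairLen v (a :: t) = 0 := by simp [stairLen, hav]
      rw [hs]
      simpa using hav

end Lam

section Tableau

lemma tlt {D : Finset (ℕ × ℕ)} {T : ℕ × ℕ → ℕ} (hinc : IncreasingTab D T)
    {a b : ℕ × ℕ} (ha : a ∈ D) (hb : b ∈ D)
    (h1 : a.1 ≤ b.1) (h2 : a.2 ≤ b.2) (hne : a ≠ b) : T a < T b :=
  hinc a ha b hb ⟨h1, h2, hne⟩

/-- values of the column-`c` cells in rows `i, i-1, ..., 1`. -/
def ysT (T : ℕ × ℕ → ℕ) (c : ℕ) : ℕ → List ℕ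
  | 0 => []
  | (i+1) => T (i+1, c) :: ysT T c i

lemma rowside (D : Finset (ℕ × ℕ)) (T : ℕ × ℕ → ℕ) (c p : ℕ)
    (hinc : IncreasingTab D T) (hTpos : ∀ q ∈ D, 0 < T q)
    (hcol : ∀ i : ℕ, ((i, c) ∈ D) ↔ (1 ≤ i ∧ i ≤ p))
    (hcolmax : ∀ q ∈ D, q.2 ≤ c)
    (hrow1 : ∀ q ∈ D, 1 ≤ q.1) :
    ∀ i, i ≤ p → ∀ L, IsReadingList rowOrd (D.filter (fun q => q.1 ≤ i)) L →
    ∃ M, IsReadingList rowOrd (D.filter (fun q => q.1 ≤ i ∧ q.2 ≠ c)) M ∧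
    ∀ u x v : List ℕ, List.Pairwise (· > ·) u →
      (∀ z ∈ u, ∀ j, 1 ≤ j → j ≤ i → T (j, c) < z) →
      KKnuth (x ++ u ++ L.map T ++ v) (x ++ M.map T ++ u ++ ysT T c i ++ v) := by
  intro i
  induction i with
  | zero =>
    intro _ L hL
    have hLnil : L = [] := rl_empty hL (by
      intro z hz
      rw [Finset.mem_filter] at hz
      have := hrow1 z hz.1; omega)
    refine ⟨[], ⟨by
      intro z
      simp only [List.not_mem_nil, false_iff, Finset.mem_filter, not_and]
      intro hz h0
      have := hrow1 z hz; omega, List.Pairwise.nil⟩, ?_⟩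
    intro u x v _ _
    subst hLnil
    simpa [ysT] using KKnuth.refl (x ++ u ++ v)
  | succ i ih =>
    intro hip L hL
    -- split off row i+1
    obtain ⟨L₁, L₂, hsplit, hL₁, hL₂⟩ := rl_split rowOrd_asymm_s7 hL (fun q => q.1 = i+1)
      (by
        intro a b ha hb hpa hpb
        rw [Finset.mem_filter] at ha hb
        exact Or.inl (by omega))
    have hL₂' : IsReadingList rowOrd (D.filter (fun q => q.1 ≤ i)) L₂ :=
      rl_congr hL₂ (by
        intro z; simp only [Finset.mem_filter]
        by_cases hz : z ∈ D <;> simp [hz] <;> omega)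
    have hL₁' : IsReadingList rowOrd (D.filter (fun q => q.1 = i+1)) L₁ :=
      rl_congr hL₁ (by
        intro z; simp only [Finset.mem_filter]
        by_cases hz : z ∈ D <;> simp [hz] <;> omega)
    -- split off the column-c cell of row i+1
    obtain ⟨E, Y, hsplit2, hE, hY⟩ := rl_split rowOrd_asymm_s7 hL₁' (fun q => q.2 ≠ c)
      (by
        intro a b ha hb hpa hpb
        rw [Finset.mem_filter] at ha hb
        have hac : a.2 ≤ c := hcolmax a ha.1
        right
        constructor
        · omega
        · simp only [not_not] at hpb
          omega)
    have hYs : Y = [(i+1, c)] := by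
      refine rl_single rowOrd_asymm_s7 hY ?_
      intro z
      simp only [Finset.mem_filter, not_not]
      constructor
      · rintro ⟨⟨hz, h1⟩, h2⟩
        exact Prod.ext h1 h2
      · rintro rfl
        refine ⟨⟨?_, rfl⟩, rfl⟩
        exact (hcol (i+1)).mpr (by omega)
    obtain ⟨M', hM', hKK'⟩ := ih (by omega) L₂ hL₂'
    -- memberships of E
    have hEmem : ∀ a ∈ E, a ∈ D ∧ a.1 = i + 1 ∧ a.2 ≠ c := by
      intro a ha
      have := (hE.1 a).mp ha
      rw [Finset.mem_filter, Finset.mem_filter] at this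
      exact ⟨this.1.1, this.1.2, this.2⟩
    have hE' : IsReadingList rowOrd (D.filter (fun q => q.1 = i+1 ∧ q.2 ≠ c)) E :=
      rl_congr hE (by intro z; simp only [Finset.mem_filter]; tauto)
    refine ⟨E ++ M', ?_, ?_⟩
    · refine rl_concat hE' hM' ?_ ?_
      · intro a ha b hb
        rw [Finset.mem_filter] at ha hb
        exact Or.inl (by omega)
      · intro z
        simp only [Finset.mem_filter]
        by_cases hz : z ∈ D <;> simp [hz] <;> omega
    · intro u x v hu hu2
      have hicmem : (i+1, c) ∈ D := (hcol (i+1)).mpr (by omega)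
      set f := T (i+1, c) with hf
      have hEvals : List.Pairwise (· < ·) (E.map T) := by
        rw [List.pairwise_map]
        refine hE.2.imp_of_mem ?_
        intro a b ha hb hord
        obtain ⟨haD, ha1, _⟩ := hEmem a ha
        obtain ⟨hbD, hb1, _⟩ := hEmem b hb
        rcases hord with h | h
        · omega
        · exact tlt hinc haD hbD (by omega) (by omega) (by
            intro hh; rw [hh] at h; omega)
      have hEpos : ∀ e ∈ E.map T, 0 < e := by
        intro e he
        obtain ⟨a, ha, rfl⟩ := List.mem_map.mp he
        exact hTpos a (hEmem a ha).1
      have hEf : ∀ e ∈ E.map T, e < f := by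
        intro e he
        obtain ⟨a, ha, rfl⟩ := List.mem_map.mp he
        obtain ⟨haD, ha1, ha2⟩ := hEmem a ha
        exact tlt hinc haD hicmem (by omega) (by
          have := hcolmax a haD; simpa using this) (by
          intro hh; rw [hh] at ha2; simp at ha2)
      have hfu : ∀ z ∈ u, f < z := fun z hz => hu2 z hz (i+1) (by omega) (le_refl _)
      have step1 := runBigRight u x (L₂.map T ++ v) (E.map T) f hu hEvals hEpos hEf hfu
      have hu' : List.Pairwise (· > ·) (u ++ [f]) := by
        rw [List.pairwise_append]
        exact ⟨hu, by simp, by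
          intro a ha b hb
          rw [List.mem_singleton] at hb
          subst hb
          exact hfu a ha⟩
      have hu2' : ∀ z ∈ u ++ [f], ∀ j, 1 ≤ j → j ≤ i → T (j, c) < z := by
        intro z hz j hj1 hj2
        rcases List.mem_append.mp hz with hz | hz
        · exact hu2 z hz j hj1 (by omega)
        · rw [List.mem_singleton] at hz
          subst hz
          exact tlt hinc ((hcol j).mpr (by omega)) hicmem (by simp; omega) (le_refl _)
            (by intro hh; simp at hh; omega)
      have step2 := hKK' (u ++ [f]) (x ++ E.map T) v hu' hu2'
      rw [hsplit, hsplit2, hYs]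
      refine KKnuth.trans (v := x ++ (E.map T ++ (u ++ (f :: (L₂.map T ++ v))))) ?_ ?_
      · simpa [List.append_assoc] using step1
      · simpa [List.append_assoc, ysT] using step2

/-- positions of the column-`c` cells in rows `i, i-1, ..., 1`. -/
def ysL (c : ℕ) : ℕ → List (ℕ × ℕ)
  | 0 => []
  | (i+1) => (i+1, c) :: ysL c i

lemma ysL_mapT (T : ℕ × ℕ → ℕ) (c : ℕ) : ∀ i, (ysL c i).map T = ysT T c i := by
  intro i
  induction i with
  | zero => simp [ysL, ysT]
  | succ i ih => simp [ysL, ysT, ih]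

lemma collist (D : Finset (ℕ × ℕ)) (c p : ℕ)
    (hcol : ∀ i : ℕ, ((i, c) ∈ D) ↔ (1 ≤ i ∧ i ≤ p))
    (hrow1 : ∀ q ∈ D, 1 ≤ q.1) :
    ∀ i, i ≤ p → ∀ K, IsReadingList colOrd (D.filter (fun q => q.2 = c ∧ q.1 ≤ i)) K →
      K = ysL c i := by
  intro i
  induction i with
  | zero =>
    intro _ K hK
    refine rl_empty hK ?_
    intro z hz
    rw [Finset.mem_filter] at hz
    have := hrow1 z hz.1
    omega
  | succ i ih =>
    intro hip K hK
    obtain ⟨K₁, K₂, hsplit, hK₁, hK₂⟩ := rl_split colOrd_asymm_s7 hK (fun q => q.1 = i+1)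
      (by
        intro a b ha hb hpa hpb
        rw [Finset.mem_filter] at ha hb
        exact Or.inr ⟨by omega, by omega⟩)
    have hK₁s : K₁ = [(i+1, c)] := by
      refine rl_single colOrd_asymm_s7 hK₁ ?_
      intro z
      simp only [Finset.mem_filter]
      constructor
      · rintro ⟨⟨_, hz2, _⟩, hz1⟩
        exact Prod.ext hz1 hz2
      · rintro rfl
        exact ⟨⟨(hcol (i+1)).mpr (by omega), rfl, by omega⟩, rfl⟩
    have hK₂' : IsReadingList colOrd (D.filter (fun q => q.2 = c ∧ q.1 ≤ i)) K₂ :=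
      rl_congr hK₂ (by
        intro z; simp only [Finset.mem_filter]
        by_cases hz : z ∈ D <;> simp [hz] <;> omega)
    rw [hsplit, hK₁s, ih (by omega) K₂ hK₂']
    rfl

lemma neside (D : Finset (ℕ × ℕ)) (T : ℕ × ℕ → ℕ) (c p : ℕ)
    (hinc : IncreasingTab D T) (hTpos : ∀ q ∈ D, 0 < T q)
    (hcol : ∀ i : ℕ, ((i, c) ∈ D) ↔ (1 ≤ i ∧ i ≤ p))
    (hcolmax : ∀ q ∈ D, q.2 ≤ c)
    (hrow1 : ∀ q ∈ D, 1 ≤ q.1) :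
    ∀ i, i ≤ p → ∀ L, IsReadingList neOrd (D.filter (fun q => (c:ℤ) - i ≤ diagZ q)) L →
    ∃ M, IsReadingList neOrd (D.filter (fun q => (c:ℤ) - i ≤ diagZ q ∧ q.2 ≠ c)) M ∧
    ∀ u x v : List ℕ, List.Pairwise (· > ·) u →
      (∀ z ∈ u, ∀ j, 1 ≤ j → j ≤ i → T (j, c) < z) →
      KKnuth (x ++ u ++ L.map T ++ v) (x ++ M.map T ++ u ++ ysT T c i ++ v) := by
  intro i
  induction i with
  | zero =>
    intro _ L hL
    have hLnil : L = [] := rl_empty hL (by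
      intro z hz
      rw [Finset.mem_filter] at hz
      have h1 := hrow1 z hz.1
      have h2 := hcolmax z hz.1
      have h3 := hz.2
      unfold diagZ at h3
      omega)
    refine ⟨[], ⟨by
      intro z
      simp only [List.not_mem_nil, false_iff, Finset.mem_filter, not_and]
      intro hz h0
      have h1 := hrow1 z hz
      have h2 := hcolmax z hz
      unfold diagZ at h0
      omega, List.Pairwise.nil⟩, ?_⟩
    intro u x v _ _
    subst hLnil
    simpa [ysT] using KKnuth.refl (x ++ u ++ v)
  | succ i ih =>
    intro hip L hL
    -- split off diagonal c - (i+1)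
    obtain ⟨L₁, L₂, hsplit, hL₁, hL₂⟩ := rl_split neOrd_asymm hL
      (fun q => diagZ q = (c:ℤ) - (i+1))
      (by
        intro a b ha hb hpa hpb
        rw [Finset.mem_filter] at ha hb
        exact Or.inl (by omega))
    have hL₂' : IsReadingList neOrd (D.filter (fun q => (c:ℤ) - i ≤ diagZ q)) L₂ :=
      rl_congr hL₂ (by
        intro z; simp only [Finset.mem_filter]
        by_cases hz : z ∈ D <;> simp [hz] <;> omega)
    have hL₁' : IsReadingList neOrd (D.filter (fun q => diagZ q = (c:ℤ) - (i+1))) L₁ :=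
      rl_congr hL₁ (by
        intro z; simp only [Finset.mem_filter]
        by_cases hz : z ∈ D <;> simp [hz] <;> omega)
    -- split off the column-c cell (i+1, c) of this diagonal
    obtain ⟨E, Y, hsplit2, hE, hY⟩ := rl_split neOrd_asymm hL₁' (fun q => q.2 ≠ c)
      (by
        intro a b ha hb hpa hpb
        rw [Finset.mem_filter] at ha hb
        have hac : a.2 ≤ c := hcolmax a ha.1
        simp only [not_not] at hpb
        refine Or.inr ⟨by omega, ?_⟩
        have h1 := ha.2
        have h2 := hb.2
        unfold diagZ at h1 h2
        omega)
    have hYs : Y = [(i+1, c)] := by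
      refine rl_single neOrd_asymm hY ?_
      intro z
      simp only [Finset.mem_filter, not_not]
      constructor
      · rintro ⟨⟨hz, h1⟩, h2⟩
        unfold diagZ at h1
        refine Prod.ext ?_ h2
        omega
      · rintro rfl
        refine ⟨⟨?_, ?_⟩, rfl⟩
        · exact (hcol (i+1)).mpr (by omega)
        · unfold diagZ; simp
    obtain ⟨M', hM', hKK'⟩ := ih (by omega) L₂ hL₂'
    have hEmem : ∀ a ∈ E, a ∈ D ∧ diagZ a = (c:ℤ) - (i+1) ∧ a.2 ≠ c := by
      intro a ha
      have := (hE.1 a).mp ha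
      rw [Finset.mem_filter, Finset.mem_filter] at this
      exact ⟨this.1.1, this.1.2, this.2⟩
    have hE' : IsReadingList neOrd
        (D.filter (fun q => diagZ q = (c:ℤ) - (i+1) ∧ q.2 ≠ c)) E :=
      rl_congr hE (by intro z; simp only [Finset.mem_filter]; tauto)
    refine ⟨E ++ M', ?_, ?_⟩
    · refine rl_concat hE' hM' ?_ ?_
      · intro a ha b hb
        rw [Finset.mem_filter] at ha hb
        exact Or.inl (by omega)
      · intro z
        simp only [Finset.mem_filter]
        by_cases hz : z ∈ D <;> simp [hz] <;> omega
    · intro u x v hu hu2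
      have hicmem : (i+1, c) ∈ D := (hcol (i+1)).mpr (by omega)
      set f := T (i+1, c) with hf
      have hEvals : List.Pairwise (· < ·) (E.map T) := by
        rw [List.pairwise_map]
        refine hE.2.imp_of_mem ?_
        intro a b ha hb hord
        obtain ⟨haD, ha1, _⟩ := hEmem a ha
        obtain ⟨hbD, hb1, _⟩ := hEmem b hb
        rcases hord with h | h
        · omega
        · refine tlt hinc haD hbD (by omega) ?_ ?_
          · unfold diagZ at ha1 hb1; omega
          · intro hh; rw [hh] at h; omega
      have hEpos : ∀ e ∈ E.map T, 0 < e := by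
        intro e he
        obtain ⟨a, ha, rfl⟩ := List.mem_map.mp he
        exact hTpos a (hEmem a ha).1
      have hEf : ∀ e ∈ E.map T, e < f := by
        intro e he
        obtain ⟨a, ha, rfl⟩ := List.mem_map.mp he
        obtain ⟨haD, ha1, ha2⟩ := hEmem a ha
        have hac : a.2 ≤ c := hcolmax a haD
        refine tlt hinc haD hicmem ?_ (by simpa using hac) ?_
        · unfold diagZ at ha1; simp; omega
        · intro hh; rw [hh] at ha2; simp at ha2
      have hfu : ∀ z ∈ u, f < z := fun z hz => hu2 z hz (i+1) (by omega) (le_refl _)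
      have step1 := runBigRight u x (L₂.map T ++ v) (E.map T) f hu hEvals hEpos hEf hfu
      have hu' : List.Pairwise (· > ·) (u ++ [f]) := by
        rw [List.pairwise_append]
        exact ⟨hu, by simp, by
          intro a ha b hb
          rw [List.mem_singleton] at hb
          subst hb
          exact hfu a ha⟩
      have hu2' : ∀ z ∈ u ++ [f], ∀ j, 1 ≤ j → j ≤ i → T (j, c) < z := by
        intro z hz j hj1 hj2
        rcases List.mem_append.mp hz with hz | hz
        · exact hu2 z hz j hj1 (by omega)
        · rw [List.mem_singleton] at hz
          subst hz
          exact tlt hinc ((hcol j).mpr (by omega)) hicmem (by simp; omega) (le_refl _)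
            (by intro hh; simp at hh; omega)
      have step2 := hKK' (u ++ [f]) (x ++ E.map T) v hu' hu2'
      rw [hsplit, hsplit2, hYs]
      refine KKnuth.trans (v := x ++ (E.map T ++ (u ++ (f :: (L₂.map T ++ v))))) ?_ ?_
      · simpa [List.append_assoc] using step1
      · simpa [List.append_assoc, ysT] using step2

/-- values of the row-`l` cells in columns `l+d, l+d+1, ...` (`t` of them). -/
def xsT (T : ℕ × ℕ → ℕ) (l : ℕ) : ℕ → ℕ → List ℕ
  | _, 0 => []
  | d, (t+1) => T (l, l+d) :: xsT T l (d+1) t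

def xsL (l : ℕ) : ℕ → ℕ → List (ℕ × ℕ)
  | _, 0 => []
  | d, (t+1) => (l, l+d) :: xsL l (d+1) t

lemma xsL_mapT (T : ℕ × ℕ → ℕ) (l : ℕ) : ∀ t d, (xsL l d t).map T = xsT T l d t := by
  intro t
  induction t with
  | zero => intro d; simp [xsL, xsT]
  | succ t ih => intro d; simp [xsL, xsT, ih]

lemma xsT_pairwise (D : Finset (ℕ × ℕ)) (T : ℕ × ℕ → ℕ) (l k : ℕ)
    (hinc : IncreasingTab D T)
    (hrowl : ∀ j : ℕ, ((l, j) ∈ D) ↔ (l ≤ j ∧ j + 1 ≤ l + k)) :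
    ∀ t d, d + t ≤ k → List.Pairwise (· < ·) (xsT T l d t) := by
  intro t
  induction t with
  | zero => intro d _; simp [xsT]
  | succ t ih =>
    intro d hd
    rw [xsT, List.pairwise_cons]
    refine ⟨?_, ih (d+1) (by omega)⟩
    intro z hz
    -- z is a value T (l, l+d') with d < d'
    have : ∀ t' d', d < d' → d' + t' ≤ k → ∀ z ∈ xsT T l d' t', T (l, l+d) < z := by
      intro t'
      induction t' with
      | zero => intro d' _ _ z hz; simp [xsT] at hz
      | succ t' ih' =>
        intro d' hdd' hd' z hz
        rw [xsT] at hz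
        rcases List.mem_cons.mp hz with rfl | hz
        · refine tlt hinc ((hrowl (l+d)).mpr (by omega)) ((hrowl (l+d')).mpr (by omega))
            (le_refl _) (by simp; omega) (by intro hh; simp at hh; omega)
        · exact ih' (d'+1) (by omega) (by omega) z hz
    exact this t (d+1) (by omega) (by omega) z hz

lemma xsT_pos (D : Finset (ℕ × ℕ)) (T : ℕ × ℕ → ℕ) (l k : ℕ)
    (hTpos : ∀ q ∈ D, 0 < T q)
    (hrowl : ∀ j : ℕ, ((l, j) ∈ D) ↔ (l ≤ j ∧ j + 1 ≤ l + k)) :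
    ∀ t d, d + t ≤ k → ∀ z ∈ xsT T l d t, 0 < z := by
  intro t
  induction t with
  | zero => intro d _ z hz; simp [xsT] at hz
  | succ t ih =>
    intro d hd z hz
    rw [xsT] at hz
    rcases List.mem_cons.mp hz with rfl | hz
    · exact hTpos _ ((hrowl (l+d)).mpr (by omega))
    · exact ih (d+1) (by omega) z hz

lemma rowlist (D : Finset (ℕ × ℕ)) (l k : ℕ)
    (hrowl : ∀ j : ℕ, ((l, j) ∈ D) ↔ (l ≤ j ∧ j + 1 ≤ l + k)) :
    ∀ t d, d + t = k → ∀ R, IsReadingList rowOrd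
      (D.filter (fun q => q.1 = l ∧ (d:ℤ) ≤ diagZ q)) R → R = xsL l d t := by
  intro t
  induction t with
  | zero =>
    intro d hd R hR
    refine rl_empty hR ?_
    intro z hz
    rw [Finset.mem_filter] at hz
    obtain ⟨hzD, hz1, hz2⟩ := hz
    unfold diagZ at hz2
    have : z = (l, z.2) := Prod.ext hz1 rfl
    rw [this] at hzD
    have := (hrowl z.2).mp hzD
    omega
  | succ t ih =>
    intro d hd R hR
    obtain ⟨R₁, R₂, hsplit, hR₁, hR₂⟩ := rl_split rowOrd_asymm_s7 hR
      (fun q => diagZ q = (d:ℤ))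
      (by
        intro a b ha hb hpa hpb
        rw [Finset.mem_filter] at ha hb
        refine Or.inr ⟨by omega, ?_⟩
        have h1 := ha.2.2
        have h2 := hb.2.2
        unfold diagZ at h1 h2 hpa hpb
        omega)
    have hR₁s : R₁ = [(l, l+d)] := by
      refine rl_single rowOrd_asymm_s7 hR₁ ?_
      intro z
      simp only [Finset.mem_filter]
      constructor
      · rintro ⟨⟨_, hz1, _⟩, hz2⟩
        unfold diagZ at hz2
        refine Prod.ext hz1 ?_
        simp only
        omega
      · rintro rfl
        refine ⟨⟨(hrowl (l+d)).mpr (by omega), rfl, ?_⟩, ?_⟩ <;>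
          (unfold diagZ; simp)
    have hR₂' : IsReadingList rowOrd
        (D.filter (fun q => q.1 = l ∧ ((d:ℤ)+1) ≤ diagZ q)) R₂ :=
      rl_congr hR₂ (by
        intro z; simp only [Finset.mem_filter]
        by_cases hz : z ∈ D <;> simp [hz] <;> (unfold diagZ; omega))
    have : R₂ = xsL l (d+1) t := by
      refine ih (d+1) (by omega) R₂ (rl_congr hR₂' ?_)
      intro z
      simp only [Finset.mem_filter]
      by_cases hz : z ∈ D <;> simp [hz] <;> (unfold diagZ; omega)
    rw [hsplit, hR₁s, this]
    rfl

lemma swside (D : Finset (ℕ × ℕ)) (T : ℕ × ℕ → ℕ) (l k : ℕ)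
    (hinc : IncreasingTab D T) (hTpos : ∀ q ∈ D, 0 < T q)
    (hrowl : ∀ j : ℕ, ((l, j) ∈ D) ↔ (l ≤ j ∧ j + 1 ≤ l + k))
    (hrowle : ∀ q ∈ D, q.1 ≤ l) :
    ∀ t d, d + t = k → ∀ L, IsReadingList swOrd (D.filter (fun q => (d:ℤ) ≤ diagZ q)) L →
    ∃ M, IsReadingList swOrd (D.filter (fun q => (d:ℤ) ≤ diagZ q ∧ q.1 ≠ l)) M ∧
    ∀ x v : List ℕ,
      KKnuth (x ++ L.map T ++ v) (x ++ xsT T l d t ++ M.map T ++ v) := by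
  intro t
  induction t with
  | zero =>
    intro d hd L hL
    refine ⟨L, rl_congr hL ?_, ?_⟩
    · intro z
      simp only [Finset.mem_filter]
      constructor
      · rintro ⟨hz, h1⟩
        refine ⟨hz, h1, ?_⟩
        intro hzl
        have : z = (l, z.2) := Prod.ext hzl rfl
        rw [this] at hz
        have := (hrowl z.2).mp hz
        unfold diagZ at h1
        omega
      · tauto
    · intro x v
      simpa [xsT] using KKnuth.refl (x ++ List.map T L ++ v)
  | succ t ih =>
    intro d hd L hL
    -- split off diagonal d
    obtain ⟨L₁, L₂, hsplit, hL₁, hL₂⟩ := rl_split swOrd_asymm hL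
      (fun q => diagZ q = (d:ℤ))
      (by
        intro a b ha hb hpa hpb
        rw [Finset.mem_filter] at ha hb
        exact Or.inl (by omega))
    have hL₂' : IsReadingList swOrd (D.filter (fun q => ((d:ℤ)+1) ≤ diagZ q)) L₂ :=
      rl_congr hL₂ (by
        intro z; simp only [Finset.mem_filter]
        by_cases hz : z ∈ D <;> simp [hz] <;> omega)
    have hL₁' : IsReadingList swOrd (D.filter (fun q => diagZ q = (d:ℤ))) L₁ :=
      rl_congr hL₁ (by
        intro z; simp only [Finset.mem_filter]
        by_cases hz : z ∈ D <;> simp [hz] <;> omega)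
    -- split off the row-l cell (l, l+d), which comes first on its diagonal
    obtain ⟨Y, B, hsplit2, hY, hB⟩ := rl_split swOrd_asymm hL₁' (fun q => q.1 = l)
      (by
        intro a b ha hb hpa hpb
        rw [Finset.mem_filter] at ha hb
        have hbl := hrowle b hb.1
        exact Or.inr ⟨by omega, by omega⟩)
    have hYs : Y = [(l, l+d)] := by
      refine rl_single swOrd_asymm hY ?_
      intro z
      simp only [Finset.mem_filter]
      constructor
      · rintro ⟨⟨_, hz1⟩, hz2⟩
        refine Prod.ext hz2 ?_
        unfold diagZ at hz1
        simp only
        omega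
      · rintro rfl
        refine ⟨⟨(hrowl (l+d)).mpr (by omega), ?_⟩, rfl⟩
        unfold diagZ; simp
    have hBmem : ∀ a ∈ B, a ∈ D ∧ diagZ a = (d:ℤ) ∧ a.1 ≠ l := by
      intro a ha
      have := (hB.1 a).mp ha
      rw [Finset.mem_filter, Finset.mem_filter] at this
      exact ⟨this.1.1, this.1.2, this.2⟩
    have hB' : IsReadingList swOrd (D.filter (fun q => diagZ q = (d:ℤ) ∧ q.1 ≠ l)) B :=
      rl_congr hB (by intro z; simp only [Finset.mem_filter]; tauto)
    obtain ⟨M', hM', hKK'⟩ := ih (d+1) (by omega) L₂ (rl_congr hL₂' (by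
      intro z; simp only [Finset.mem_filter]; tauto))
    refine ⟨B ++ M', ?_, ?_⟩
    · refine rl_concat hB' hM' ?_ ?_
      · intro a ha b hb
        rw [Finset.mem_filter] at ha hb
        exact Or.inl (by omega)
      · intro z
        simp only [Finset.mem_filter]
        by_cases hz : z ∈ D <;> simp [hz] <;> omega
    · intro x v
      have hldmem : (l, l+d) ∈ D := (hrowl (l+d)).mpr (by omega)
      set f := T (l, l+d) with hf
      have hBvals : List.Pairwise (· > ·) (B.map T) := by
        rw [List.pairwise_map]
        refine hB.2.imp_of_mem ?_
        intro a b ha hb hord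
        obtain ⟨haD, ha1, _⟩ := hBmem a ha
        obtain ⟨hbD, hb1, _⟩ := hBmem b hb
        rcases hord with h | h
        · omega
        · refine tlt hinc hbD haD (by omega) ?_ ?_
          · unfold diagZ at ha1 hb1; omega
          · intro hh; rw [hh] at h; omega
      have hBpos : ∀ e ∈ B.map T, 0 < e := by
        intro e he
        obtain ⟨a, ha, rfl⟩ := List.mem_map.mp he
        exact hTpos a (hBmem a ha).1
      have hBf : ∀ e ∈ B.map T, e < f := by
        intro e he
        obtain ⟨a, ha, rfl⟩ := List.mem_map.mp he
        obtain ⟨haD, ha1, ha2⟩ := hBmem a ha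
        have hal : a.1 ≤ l := hrowle a haD
        refine tlt hinc haD hldmem (by omega) ?_ ?_
        · unfold diagZ at ha1; simp; omega
        · intro hh; rw [hh] at ha2; simp at ha2
      have hxs : List.Pairwise (· < ·) (xsT T l d (t+1)) :=
        xsT_pairwise D T l k hinc hrowl (t+1) d (by omega)
      have hxs' : List.Pairwise (· < ·) (xsT T l (d+1) t) := by
        rw [xsT, List.pairwise_cons] at hxs
        exact hxs.2
      have hfxs : ∀ z ∈ xsT T l (d+1) t, f < z := by
        rw [xsT, List.pairwise_cons] at hxs
        exact hxs.1
      have step1 := hKK' (x ++ f :: B.map T) v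
      have step2 := runBigLeft (xsT T l (d+1) t) x (M'.map T ++ v) (B.map T) f
        hxs' hBvals hBpos hBf hfxs
      rw [hsplit, hsplit2, hYs]
      refine KKnuth.trans (v := x ++ (f :: (B.map T ++ (xsT T l (d+1) t ++ (M'.map T ++ v))))) ?_ ?_
      · simpa [List.append_assoc] using step1
      · simpa [List.append_assoc, xsT] using step2

section Surgery

lemma chain'_of_getD {xs : List ℕ}
    (h : ∀ k, k + 1 < xs.length → xs.getD (k+1) 0 < xs.getD k 0) :
    List.Chain' (· > ·) xs := by
  refine List.isChain_iff_getElem.mpr ?_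
  intro i hi
  have := h i (by omega)
  rw [List.getD_eq_getElem _ _ (by omega), List.getD_eq_getElem _ _ (by omega)] at this
  simpa [List.get_eq_getElem] using this

lemma pos_of_getD {xs : List ℕ}
    (h : ∀ k, k < xs.length → 0 < xs.getD k 0) : ∀ x ∈ xs, 0 < x := by
  intro x hx
  obtain ⟨i, hi, rfl⟩ := List.mem_iff_getElem.mp hx
  have := h i hi
  rwa [List.getD_eq_getElem _ _ hi] at this

lemma sum_map_pred {xs : List ℕ} (h : ∀ x ∈ xs, 0 < x) :
    (xs.map (· - 1)).sum + xs.length = xs.sum := by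
  induction xs with
  | nil => simp
  | cons a t ih =>
    have ha : 0 < a := h a (by simp)
    have := ih (fun x hx => h x (by simp [hx]))
    simp only [List.map_cons, List.sum_cons, List.length_cons]
    omega

end Surgery

lemma getD_pm_left (l : List ℕ) (p k : ℕ) (h1 : k < p) (h2 : p ≤ l.length) :
    ((l.take p).map (· - 1) ++ l.drop p).getD k 0 = l.getD k 0 - 1 := by
  rw [List.getD_append _ _ _ _ (by simp; omega)]
  rw [List.getD_eq_getElem _ _ (by simp; omega)]
  rw [List.getElem_map]
  rw [List.getElem_take]
  rw [List.getD_eq_getElem _ _ (by omega)]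

lemma getD_pm_right (l : List ℕ) (p k : ℕ) (h1 : p ≤ k) (h2 : k < l.length) :
    ((l.take p).map (· - 1) ++ l.drop p).getD k 0 = l.getD k 0 := by
  rw [List.getD_append_right _ _ _ _ (by simp; omega)]
  rw [List.getD_eq_getElem _ _ (by simp; omega)]
  rw [List.getElem_drop]
  rw [List.getD_eq_getElem _ _ (by omega)]
  congr 1
  simp
  omega

lemma getD_pm_take (l : List ℕ) (n k : ℕ) (h1 : k < n) (h2 : n ≤ l.length) :
    ((l.take n).map (· - 1)).getD k 0 = l.getD k 0 - 1 := by
  rw [List.getD_eq_getElem _ _ (by simp; omega)]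
  rw [List.getElem_map]
  rw [List.getElem_take]
  rw [List.getD_eq_getElem _ _ (by omega)]

lemma getD_take' (l : List ℕ) (n k : ℕ) (h1 : k < n) (h2 : n ≤ l.length) :
    (l.take n).getD k 0 = l.getD k 0 := by
  rw [List.getD_eq_getElem _ _ (by simp; omega)]
  rw [List.getElem_take]
  rw [List.getD_eq_getElem _ _ (by omega)]

lemma colFacts (c : ℕ) (rest : List ℕ)
    (hlam : List.Chain' (· > ·) (c :: rest)) (hlampos : ∀ x ∈ c :: rest, 0 < x)
    (D : Finset (ℕ × ℕ)) (hD : IsShiftedDiagram (c :: rest) D) :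
    ∃ (p : ℕ) (lam' : List ℕ),
      1 ≤ p ∧
      (∀ i : ℕ, ((i, c) ∈ D) ↔ (1 ≤ i ∧ i ≤ p)) ∧
      (∀ q ∈ D, q.2 ≤ c) ∧
      (∀ q ∈ D, 1 ≤ q.1) ∧
      List.Chain' (· > ·) lam' ∧ (∀ x ∈ lam', 0 < x) ∧
      lam'.sum < (c :: rest).sum ∧
      IsShiftedDiagram lam' (D.filter (fun q => q.2 ≠ c)) := by
  set lam := c :: rest with hlamdef
  set l := lam.length with hldef
  set p := stairLen c lam with hpdef
  have hl1 : 1 ≤ l := by simp [hlamdef, hldef]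
  have hp1 : 1 ≤ p := by simp [hpdef, hlamdef, stairLen]
  have hpl : p ≤ l := sl_le_length c lam
  have hgd : ∀ k, k < p → lam.getD k 0 + k = c := fun k hk => sl_getD lam c hlampos k hk
  have hmono := getD_mono hlam
  have hgpos : ∀ k, k < l → 0 < lam.getD k 0 := fun k hk => hlampos _ (getD_mem hk)
  have hgd0 : lam.getD 0 0 = c := by
    have := hgd 0 (by omega); omega
  have hpc : p ≤ c := by
    have h1 := hgd (p-1) (by omega)
    have h2 := hgpos (p-1) (by omega)
    omega
  have hstop : p < l → lam.getD p 0 + p + 1 ≤ c := by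
    intro hplt
    have h1 : lam.getD p 0 + p ≠ c := sl_stop lam c hlampos (by omega)
    have h2 := hmono p (by omega) (p-1) (by omega)
    have h3 := hgd (p-1) (by omega)
    omega
  have hcolmax : ∀ q ∈ D, q.2 ≤ c := by
    intro q hq
    have h1 := (hD q).mp hq
    have h2 := hmono (q.1 - 1) (by omega) 0 (by omega)
    omega
  have hrow1 : ∀ q ∈ D, 1 ≤ q.1 := fun q hq => ((hD q).mp hq).1
  have hcol : ∀ i : ℕ, ((i, c) ∈ D) ↔ (1 ≤ i ∧ i ≤ p) := by
    intro i
    rw [hD (i, c)]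
    simp only
    constructor
    · rintro ⟨h1, h2, h3, h4⟩
      refine ⟨h1, ?_⟩
      by_contra hip
      have hplt : p < l := by omega
      have h5 := hstop hplt
      have h6 := hmono (i-1) (by omega) p (by omega)
      omega
    · rintro ⟨h1, h2⟩
      have h3 := hgd (i-1) (by omega)
      have h4 := hgpos (i-1) (by omega)
      exact ⟨h1, by omega, by omega, by omega⟩
  by_cases hcp : p < c
  · -- general case: subtract 1 from the first p parts
    set lamA := (lam.take p).map (· - 1) ++ lam.drop p with hlamA
    have hlenA : lamA.length = l := by
      simp only [hlamA, List.length_append, List.length_map, List.length_take,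
        List.length_drop]
      omega
    have hgA1 : ∀ k, k < p → lamA.getD k 0 = lam.getD k 0 - 1 := by
      intro k hk
      exact getD_pm_left lam p k hk (by omega)
    have hgA2 : ∀ k, p ≤ k → k < l → lamA.getD k 0 = lam.getD k 0 := by
      intro k hk1 hk2
      exact getD_pm_right lam p k hk1 (by omega)
    refine ⟨p, lamA, hp1, hcol, hcolmax, hrow1, ?_, ?_, ?_, ?_⟩
    · refine chain'_of_getD ?_
      intro k hk
      rw [hlenA] at hk
      have hc1 := chain_getD_lt hlam (k := k) (by omega)
      by_cases hk1 : k + 1 < p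
      · rw [hgA1 k (by omega), hgA1 (k+1) hk1]
        have := hgpos (k+1) (by omega)
        omega
      · by_cases hk2 : k < p
        · rw [hgA1 k hk2, hgA2 (k+1) (by omega) (by omega)]
          have e1 := hgd k hk2
          have e2 := hstop (by omega)
          have e3 := hmono (k+1) (by omega) p (by omega)
          omega
        · rw [hgA2 k (by omega) (by omega), hgA2 (k+1) (by omega) (by omega)]
          omega
    · refine pos_of_getD ?_
      intro k hk
      rw [hlenA] at hk
      by_cases hk1 : k < p
      · rw [hgA1 k hk1]
        have := hgd k hk1
        omega
      · rw [hgA2 k (by omega) hk]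
        exact hgpos k hk
    · have h1 : ((lam.take p).map (· - 1)).sum + (lam.take p).length = (lam.take p).sum :=
        sum_map_pred (fun x hx => hlampos x (List.take_subset _ _ hx))
      have h2 : (lam.take p).sum + (lam.drop p).sum = lam.sum :=
        List.sum_take_add_sum_drop _ _
    
      have h3 : (lam.take p).length = p := by simp; omega
      have h4 : lamA.sum = ((lam.take p).map (· - 1)).sum + (lam.drop p).sum := by
        simp [hlamA]
      omega
    · intro q
      rw [Finset.mem_filter, hD q, hlenA]
      by_cases hq1 : 1 ≤ q.1 ∧ q.1 ≤ l
      · have hk : q.1 - 1 < l := by omega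
        by_cases hkp : q.1 - 1 < p
        · have e1 := hgA1 (q.1-1) hkp
          have e2 := hgd (q.1-1) hkp
          have e3 := hgpos (q.1-1) hk
          rw [e1]
          omega
        · have e1 := hgA2 (q.1-1) (by omega) hk
          have e2 := hmono (q.1-1) hk p (by omega)
          have e3 := hstop (by omega)
          rw [e1]
          omega
      · constructor
        · rintro ⟨⟨h1, h2, _⟩, _⟩; omega
        · rintro ⟨h1, h2, _⟩; omega
  · -- staircase case: p = c, necessarily p = l
    have hpc' : p = c := by omega
    have hpeq : p = l := by
      by_contra hne
      have h1 := hstop (by omega)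
      have h2 := hgpos p (by omega)
      omega
    set lamB := (lam.take (l-1)).map (· - 1) with hlamB
    have hlenB : lamB.length = l - 1 := by
      simp only [hlamB, List.length_map, List.length_take]
      omega
    have hgB : ∀ k, k < l - 1 → lamB.getD k 0 = lam.getD k 0 - 1 := by
      intro k hk
      exact getD_pm_take lam (l-1) k hk (by omega)
    refine ⟨p, lamB, hp1, hcol, hcolmax, hrow1, ?_, ?_, ?_, ?_⟩
    · refine chain'_of_getD ?_
      intro k hk
      rw [hlenB] at hk
      have hc1 := chain_getD_lt hlam (k := k) (by omega)
      rw [hgB k (by omega), hgB (k+1) (by omega)]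
      have := hgpos (k+1) (by omega)
      omega
    · refine pos_of_getD ?_
      intro k hk
      rw [hlenB] at hk
      rw [hgB k hk]
      have := hgd k (by omega)
      omega
    · have h1 : ((lam.take (l-1)).map (· - 1)).sum + (lam.take (l-1)).length
          = (lam.take (l-1)).sum :=
        sum_map_pred (fun x hx => hlampos x (List.take_subset _ _ hx))
      rw [← hlamB] at h1
      have h2 : (lam.take (l-1)).sum + (lam.drop (l-1)).sum = lam.sum :=
        List.sum_take_add_sum_drop _ _
      have h3' : (lam.take (l-1)).length = l - 1 := by simp; omega
      have h3 : 0 < (lam.drop (l-1)).sum := by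
        have hne : lam.drop (l-1) ≠ [] := by
          intro hh
          have := congrArg List.length hh
          simp at this
          omega
        obtain ⟨a, ha⟩ := List.exists_mem_of_ne_nil _ hne
        have := hlampos a (List.drop_subset _ _ ha)
        calc 0 < a := this
          _ ≤ (lam.drop (l-1)).sum := List.single_le_sum (by intro x _; omega) a ha
      omega
    · intro q
      rw [Finset.mem_filter, hD q, hlenB]
      by_cases hq1 : 1 ≤ q.1 ∧ q.1 ≤ l - 1
      · have e1 := hgB (q.1-1) (by omega)
        have e2 := hgd (q.1-1) (by omega)
        have e3 := hgpos (q.1-1) (by omega)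
        rw [e1]
        omega
      · by_cases hq2 : q.1 = l
        · have e2 := hgd (l-1) (by omega)
          have e3 := hgpos (l-1) (by omega)
          constructor
          · rintro ⟨⟨h1, h2, h3, h4⟩, h5⟩
            rw [hq2] at h4
            omega
          · rintro ⟨h1, h2, _⟩
            omega
        · constructor
          · rintro ⟨⟨h1, h2, _⟩, _⟩; omega
          · rintro ⟨h1, h2, _⟩; omega

lemma rowFacts (c : ℕ) (rest : List ℕ)
    (hlam : List.Chain' (· > ·) (c :: rest)) (hlampos : ∀ x ∈ c :: rest, 0 < x)
    (D : Finset (ℕ × ℕ)) (hD : IsShiftedDiagram (c :: rest) D) :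
    ∃ (lam' : List ℕ),
      List.Chain' (· > ·) lam' ∧ (∀ x ∈ lam', 0 < x) ∧
      lam'.sum < (c :: rest).sum ∧
      IsShiftedDiagram lam' (D.filter (fun q => q.1 ≠ (c :: rest).length)) ∧
      (∀ j : ℕ, (((c :: rest).length, j) ∈ D) ↔
        ((c :: rest).length ≤ j ∧ j + 1 ≤ (c :: rest).length + (c :: rest).getD ((c :: rest).length - 1) 0)) ∧
      (∀ q ∈ D, q.1 ≤ (c :: rest).length) ∧
      0 < (c :: rest).getD ((c :: rest).length - 1) 0 := by
  set lam := c :: rest with hlamdef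
  set l := lam.length with hldef
  have hl1 : 1 ≤ l := by simp [hlamdef, hldef]
  have hgpos : ∀ k, k < l → 0 < lam.getD k 0 := fun k hk => hlampos _ (getD_mem hk)
  have hgt : ∀ k, k < l - 1 → (lam.take (l-1)).getD k 0 = lam.getD k 0 := by
    intro k hk
    exact getD_take' lam (l-1) k hk (by omega)
  refine ⟨lam.take (l-1), ?_, ?_, ?_, ?_, ?_, ?_, ?_⟩
  · refine chain'_of_getD ?_
    intro k hk
    have hlen : (lam.take (l-1)).length = l - 1 := by simp; omega
    rw [hlen] at hk
    rw [hgt k (by omega), hgt (k+1) (by omega)]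
    exact chain_getD_lt hlam (by omega)
  · intro x hx
    exact hlampos x (List.take_subset _ _ hx)
  · have h2 : (lam.take (l-1)).sum + (lam.drop (l-1)).sum = lam.sum :=
      List.sum_take_add_sum_drop _ _
    have h3 : 0 < (lam.drop (l-1)).sum := by
      have hne : lam.drop (l-1) ≠ [] := by
        intro hh
        have := congrArg List.length hh
        simp at this
        omega
      obtain ⟨a, ha⟩ := List.exists_mem_of_ne_nil _ hne
      have := hlampos a (List.drop_subset _ _ ha)
      calc 0 < a := this
        _ ≤ (lam.drop (l-1)).sum := List.single_le_sum (by intro x _; omega) a ha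
    omega
  · intro q
    rw [Finset.mem_filter, hD q]
    have hlen : (lam.take (l-1)).length = l - 1 := by simp; omega
    rw [hlen]
    by_cases hq1 : 1 ≤ q.1 ∧ q.1 ≤ l - 1
    · rw [hgt (q.1 - 1) (by omega)]
      omega
    · constructor
      · rintro ⟨⟨h1, h2, _⟩, h5⟩; omega
      · rintro ⟨h1, h2, _⟩; omega
  · intro j
    rw [hD (l, j)]
    simp only
    have := hgpos (l-1) (by omega)
    omega
  · intro q hq
    exact ((hD q).mp hq).2.1
  · exact hgpos (l-1) (by omega)

def RCp (D : Finset (ℕ × ℕ)) (T : ℕ × ℕ → ℕ) : Prop :=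
  ∀ Lr Lc, IsReadingList rowOrd D Lr → IsReadingList colOrd D Lc →
    KKnuth (Lr.map T) (Lc.map T)

def NCp (D : Finset (ℕ × ℕ)) (T : ℕ × ℕ → ℕ) : Prop :=
  ∀ Lne Lc, IsReadingList neOrd D Lne → IsReadingList colOrd D Lc →
    KKnuth (Lne.map T) (Lc.map T)

def SRp (D : Finset (ℕ × ℕ)) (T : ℕ × ℕ → ℕ) : Prop :=
  ∀ Lsw Lr, IsReadingList swOrd D Lsw → IsReadingList rowOrd D Lr →
    KKnuth (Lsw.map T) (Lr.map T)

lemma emptyDiagram {D : Finset (ℕ × ℕ)} (hD : IsShiftedDiagram [] D) : ∀ z, z ∉ D := by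
  intro z hz
  have := (hD z).mp hz
  simp only [List.length_nil] at this
  omega

lemma master : ∀ n (lam : List ℕ), lam.sum ≤ n →
    List.Chain' (· > ·) lam → (∀ x ∈ lam, 0 < x) →
    ∀ (D : Finset (ℕ × ℕ)), IsShiftedDiagram lam D →
    ∀ (T : ℕ × ℕ → ℕ), IncreasingTab D T → (∀ q ∈ D, 0 < T q) →
    RCp D T ∧ NCp D T ∧ SRp D T := by
  intro n
  induction n with
  | zero =>
    intro lam hsum hlam hlampos D hD T hinc hTpos
    have hlamnil : lam = [] := by
      cases lam with
      | nil => rfl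
      | cons a t =>
        exfalso
        have h1 := hlampos a (by simp)
        have h2 : a ≤ (a :: t).sum := by
          simp only [List.sum_cons]; omega
        omega
    subst hlamnil
    have hempty := emptyDiagram hD
    refine ⟨?_, ?_, ?_⟩ <;>
    · intro L1 L2 h1 h2
      rw [rl_empty h1 hempty, rl_empty h2 hempty]
      exact .refl _
  | succ n ihn =>
    intro lam hsum hlam hlampos D hD T hinc hTpos
    cases lam with
    | nil =>
      have hempty := emptyDiagram hD
      refine ⟨?_, ?_, ?_⟩ <;>
      · intro L1 L2 h1 h2
        rw [rl_empty h1 hempty, rl_empty h2 hempty]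
        exact .refl _
    | cons c rest =>
      obtain ⟨p, lam', hp1, hcol, hcolmax, hrow1, hlam', hlampos', hsum', hD'⟩ :=
        colFacts c rest hlam hlampos D hD
      obtain ⟨lamR, hlamR, hlamposR, hsumR, hDR, hrowl, hrowle, hkpos⟩ :=
        rowFacts c rest hlam hlampos D hD
      set l := (c :: rest).length with hldef
      set k := (c :: rest).getD (l - 1) 0 with hkdef
      have hincC : IncreasingTab (D.filter (fun q => q.2 ≠ c)) T := by
        intro a ha b hb hab
        exact hinc a (Finset.mem_filter.mp ha).1 b (Finset.mem_filter.mp hb).1 hab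
      have hTposC : ∀ q ∈ D.filter (fun q => q.2 ≠ c), 0 < T q := by
        intro q hq; exact hTpos q (Finset.mem_filter.mp hq).1
      have hincR : IncreasingTab (D.filter (fun q => q.1 ≠ l)) T := by
        intro a ha b hb hab
        exact hinc a (Finset.mem_filter.mp ha).1 b (Finset.mem_filter.mp hb).1 hab
      have hTposR : ∀ q ∈ D.filter (fun q => q.1 ≠ l), 0 < T q := by
        intro q hq; exact hTpos q (Finset.mem_filter.mp hq).1
      have IHcol := ihn lam' (by omega) hlam' hlampos'
        (D.filter (fun q => q.2 ≠ c)) hD' T hincC hTposC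
      have IHrow := ihn lamR (by omega) hlamR hlamposR
        (D.filter (fun q => q.1 ≠ l)) hDR T hincR hTposR
      -- fact: a cell in column c has row ≤ p
      have hcellc : ∀ z : ℕ × ℕ, z ∈ D → z.2 = c → 1 ≤ z.1 ∧ z.1 ≤ p := by
        intro z hz hzc
        have hz' : z = (z.1, c) := Prod.ext rfl hzc
        rw [hz'] at hz
        exact (hcol z.1).mp hz
      -- the column-c part of any column reading list
      have colSide : ∀ Lc, IsReadingList colOrd D Lc →
          ∃ Lc₁, IsReadingList colOrd (D.filter (fun q => q.2 ≠ c)) Lc₁ ∧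
            Lc = Lc₁ ++ ysL c p := by
        intro Lc hLc
        obtain ⟨Lc₁, K, hsplitC, hLc₁, hK⟩ := rl_split colOrd_asymm_s7 hLc (fun q => q.2 ≠ c)
          (by
            intro a b ha hb hpa hpb
            simp only [not_not] at hpb
            have := hcolmax a ha
            exact Or.inl (by omega))
        have hK' : IsReadingList colOrd (D.filter (fun q => q.2 = c ∧ q.1 ≤ p)) K := by
          refine rl_congr hK ?_
          intro z
          simp only [Finset.mem_filter, not_not]
          constructor
          · rintro ⟨hz, hzc⟩
            exact ⟨hz, hzc, (hcellc z hz hzc).2⟩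
          · rintro ⟨hz, hzc, _⟩
            exact ⟨hz, hzc⟩
        have hKs : K = ysL c p := collist D c p hcol hrow1 p (le_refl _) K hK'
        exact ⟨Lc₁, hLc₁, by rw [hsplitC, hKs]⟩
      refine ⟨?_, ?_, ?_⟩
      · -- row ≈ col
        intro Lr Lc hLr hLc
        obtain ⟨Lc₁, hLc₁, hLceq⟩ := colSide Lc hLc
        obtain ⟨L₀, L₁, hsplitR, hL₀, hL₁⟩ := rl_split rowOrd_asymm_s7 hLr (fun q => p < q.1)
          (by
            intro a b ha hb hpa hpb
            exact Or.inl (by omega))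
        have hL₁' : IsReadingList rowOrd (D.filter (fun q => q.1 ≤ p)) L₁ :=
          rl_congr hL₁ (by
            intro z; simp only [Finset.mem_filter]
            by_cases hz : z ∈ D <;> simp [hz] <;> omega)
        obtain ⟨M, hM, hKKr⟩ := rowside D T c p hinc hTpos hcol hcolmax hrow1 p (le_refl _)
          L₁ hL₁'
        have hMrow : IsReadingList rowOrd (D.filter (fun q => q.2 ≠ c)) (L₀ ++ M) := by
          refine rl_concat hL₀ hM ?_ ?_
          · intro a ha b hb
            rw [Finset.mem_filter] at ha hb
            exact Or.inl (by omega)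
          · intro z
            simp only [Finset.mem_filter]
            constructor
            · rintro ⟨hz, hzc⟩
              by_cases hzp : p < z.1
              · exact Or.inl ⟨hz, hzp⟩
              · exact Or.inr ⟨hz, by omega, hzc⟩
            · rintro (⟨hz, hzp⟩ | ⟨hz, _, hzc⟩)
              · refine ⟨hz, ?_⟩
                intro hzc
                have := hcellc z hz hzc
                omega
              · exact ⟨hz, hzc⟩
        have hIH : KKnuth ((L₀ ++ M).map T) (Lc₁.map T) :=
          IHcol.1 (L₀ ++ M) Lc₁ hMrow hLc₁
        have hkk1 := hKKr [] (L₀.map T) [] (by simp) (by simp)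
        rw [hsplitR, hLceq]
        refine KKnuth.trans (v := L₀.map T ++ M.map T ++ ysT T c p) ?_ ?_
        · simpa using hkk1
        · have := kk_congr_right hIH (ysT T c p)
          simp only [List.map_append] at this ⊢
          simpa [List.append_assoc, ysL_mapT] using this
      · -- ne ≈ col
        intro Lne Lc hLne hLc
        obtain ⟨Lc₁, hLc₁, hLceq⟩ := colSide Lc hLc
        obtain ⟨N₀, N₁, hsplitN, hN₀, hN₁⟩ := rl_split neOrd_asymm hLne
          (fun q => diagZ q < (c:ℤ) - p)
          (by
            intro a b ha hb hpa hpb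
            exact Or.inl (by omega))
        have hN₁' : IsReadingList neOrd (D.filter (fun q => (c:ℤ) - p ≤ diagZ q)) N₁ :=
          rl_congr hN₁ (by
            intro z; simp only [Finset.mem_filter]
            by_cases hz : z ∈ D <;> simp [hz] <;> omega)
        obtain ⟨M, hM, hKKn⟩ := neside D T c p hinc hTpos hcol hcolmax hrow1 p (le_refl _)
          N₁ hN₁'
        have hMne : IsReadingList neOrd (D.filter (fun q => q.2 ≠ c)) (N₀ ++ M) := by
          refine rl_concat hN₀ hM ?_ ?_
          · intro a ha b hb
            rw [Finset.mem_filter] at ha hb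
            exact Or.inl (by omega)
          · intro z
            simp only [Finset.mem_filter]
            constructor
            · rintro ⟨hz, hzc⟩
              by_cases hzp : diagZ z < (c:ℤ) - p
              · exact Or.inl ⟨hz, hzp⟩
              · exact Or.inr ⟨hz, by omega, hzc⟩
            · rintro (⟨hz, hzp⟩ | ⟨hz, _, hzc⟩)
              · refine ⟨hz, ?_⟩
                intro hzc
                have h1 := hcellc z hz hzc
                have h2 : diagZ z = (c:ℤ) - z.1 := by
                  unfold diagZ; omega
                omega
              · exact ⟨hz, hzc⟩
        have hIH : KKnuth ((N₀ ++ M).map T) (Lc₁.map T) :=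
          IHcol.2.1 (N₀ ++ M) Lc₁ hMne hLc₁
        have hkk1 := hKKn [] (N₀.map T) [] (by simp) (by simp)
        rw [hsplitN, hLceq]
        refine KKnuth.trans (v := N₀.map T ++ M.map T ++ ysT T c p) ?_ ?_
        · simpa using hkk1
        · have := kk_congr_right hIH (ysT T c p)
          simp only [List.map_append] at this ⊢
          simpa [List.append_assoc, ysL_mapT] using this
      · -- sw ≈ row
        intro Lsw Lr hLsw hLr
        have hLsw' : IsReadingList swOrd (D.filter (fun q => ((0:ℕ):ℤ) ≤ diagZ q)) Lsw := by
          refine rl_congr hLsw ?_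
          intro z
          simp only [Finset.mem_filter]
          constructor
          · intro hz
            have h1 := (hD z).mp hz
            refine ⟨hz, ?_⟩
            unfold diagZ
            push_cast
            omega
          · exact fun h => h.1
        obtain ⟨M, hM, hKKs⟩ := swside D T l k hinc hTpos hrowl hrowle k 0 (by omega)
          Lsw hLsw'
        have hM' : IsReadingList swOrd (D.filter (fun q => q.1 ≠ l)) M := by
          refine rl_congr hM ?_
          intro z
          simp only [Finset.mem_filter]
          constructor
          · exact fun h => ⟨h.1, h.2.2⟩
          · rintro ⟨hz, hzl⟩
            have h1 := (hD z).mp hz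
            refine ⟨hz, ?_, hzl⟩
            unfold diagZ
            push_cast
            omega
        obtain ⟨Rl, Lr', hsplitL, hRl, hLr'⟩ := rl_split rowOrd_asymm_s7 hLr (fun q => q.1 = l)
          (by
            intro a b ha hb hpa hpb
            have h1 := hrowle b hb
            exact Or.inl (by omega))
        have hLr'' : IsReadingList rowOrd (D.filter (fun q => q.1 ≠ l)) Lr' :=
          rl_congr hLr' (fun z => Iff.rfl)
        have hRl' : IsReadingList rowOrd
            (D.filter (fun q => q.1 = l ∧ ((0:ℕ):ℤ) ≤ diagZ q)) Rl := by
          refine rl_congr hRl ?_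
          intro z
          simp only [Finset.mem_filter]
          constructor
          · rintro ⟨hz, hzl⟩
            have h1 := (hD z).mp hz
            refine ⟨hz, hzl, ?_⟩
            unfold diagZ
            push_cast
            omega
          · exact fun h => ⟨h.1, h.2.1⟩
        have hRls : Rl = xsL l 0 k := rowlist D l k hrowl k 0 (by omega) Rl hRl'
        have hIH : KKnuth (M.map T) (Lr'.map T) :=
          IHrow.2.2 M Lr' hM' hLr''
        have hkk1 := hKKs [] []
        rw [hsplitL, hRls]
        refine KKnuth.trans (v := xsT T l 0 k ++ M.map T) ?_ ?_
        · simpa using hkk1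
        · have := kk_congr_left hIH (xsT T l 0 k)
          simp only [List.map_append] at this ⊢
          simpa [List.append_assoc, xsL_mapT] using this

/-- all four reading words (row, column, northeast diagonal,
southwest diagonal) of an increasing shifted tableau are pairwise K-Knuth
equivalent. -/
theorem shifted_reading_words_kknuth
    (lam : List ℕ) (hlam : List.Chain' (· > ·) lam) (hlampos : ∀ x ∈ lam, 0 < x)
    (D : Finset (ℕ × ℕ)) (hD : IsShiftedDiagram lam D)
    (T : ℕ × ℕ → ℕ) (hinc : IncreasingTab D T) (hTpos : ∀ p ∈ D, 0 < T p)
    (Lr Lc Lne Lsw : List (ℕ × ℕ))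
    (hLr : IsReadingList rowOrd D Lr) (hLc : IsReadingList colOrd D Lc)
    (hLne : IsReadingList neOrd D Lne) (hLsw : IsReadingList swOrd D Lsw) :
    KKnuth (Lr.map T) (Lc.map T) ∧ KKnuth (Lr.map T) (Lne.map T) ∧
    KKnuth (Lr.map T) (Lsw.map T) ∧ KKnuth (Lc.map T) (Lne.map T) ∧
    KKnuth (Lc.map T) (Lsw.map T) ∧ KKnuth (Lne.map T) (Lsw.map T) := by
  obtain ⟨hRC, hNC, hSR⟩ := master lam.sum lam (le_refl _) hlam hlampos D hD T hinc hTpos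
  have h1 : KKnuth (Lr.map T) (Lc.map T) := hRC Lr Lc hLr hLc
  have h2 : KKnuth (Lne.map T) (Lc.map T) := hNC Lne Lc hLne hLc
  have h3 : KKnuth (Lsw.map T) (Lr.map T) := hSR Lsw Lr hLsw hLr
  exact ⟨h1, h1.trans h2.symm, h3.symm, h2.symm, h1.symm.trans h3.symm,
    (h2.trans h1.symm).trans h3.symm⟩
end Tableau
end

section
/- Let δ = b₁ b₂ ⋯ b_k be a strictly increasing word whose letters all have the same parity, and let δ′ = b_k ⋯ b₂ b₁ be its reverse. Then δ and δ′ are symplectic Coxeter-Knuth equivalent. -/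
/-- Coxeter-Knuth equivalence: the congruence on words of positive integers
generated by `cab ∼ acb`, `bca ∼ bac`, `aba ∼ bab` for `a < b < c`. -/
inductive CK : List ℕ → List ℕ → Prop
  | refl (w : List ℕ) : CK w w
  | symm {v w : List ℕ} : CK v w → CK w v
  | trans {u v w : List ℕ} : CK u v → CK v w → CK u w
  | cab_acb (x y : List ℕ) {a b c : ℕ} (ha : 0 < a) (hab : a < b) (hbc : b < c) :
      CK (x ++ [c, a, b] ++ y) (x ++ [a, c, b] ++ y)
  | bca_bac (x y : List ℕ) {a b c : ℕ} (ha : 0 < a) (hab : a < b) (hbc : b < c) :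
      CK (x ++ [b, c, a] ++ y) (x ++ [b, a, c] ++ y)
  | aba_bab (x y : List ℕ) {a b : ℕ} (ha : 0 < a) (hab : a < b) :
      CK (x ++ [a, b, a] ++ y) (x ++ [b, a, b] ++ y)

/-- Symplectic Coxeter-Knuth equivalence: the strongest equivalence relation
containing Coxeter-Knuth equivalence together with the moves swapping the
first two letters when they have equal parity, and replacing an initial
`a(a−1)` (for `a ≥ 2`) by `a(a+1)`. -/
inductive SpCK : List ℕ → List ℕ → Prop
  | ck {v w : List ℕ} : CK v w → SpCK v w
  | swap_init (w : List ℕ) {a b : ℕ} (ha : 0 < a) (hb : 0 < b) (h : a % 2 = b % 2) :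
      SpCK (a :: b :: w) (b :: a :: w)
  | bump_init (w : List ℕ) {a : ℕ} (h : 2 ≤ a) :
      SpCK (a :: (a - 1) :: w) (a :: (a + 1) :: w)
  | symm {v w : List ℕ} : SpCK v w → SpCK w v
  | trans {u v w : List ℕ} : SpCK u v → SpCK v w → SpCK u w

/-!
Reverse an increasing prefix `x y ⋯` of letters of one parity by peeling off its first letter:
the equal-parity swap exchanges `x` and `y`, and then `x`, being smaller than every later letter
of the prefix, slides rightwards to the end of the prefix by Coxeter-Knuth moves `bca ∼ bac`.
What remains in front of `x` is the prefix with its first letter removed, an increasing word that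
is reversed in the same way.
-/

theorem CK.append_left {u v : List ℕ} (h : CK u v) (p : List ℕ) :
    CK (p ++ u) (p ++ v) := by
  induction h with
  | refl w => exact CK.refl _
  | symm _ ih => exact ih.symm
  | trans _ _ ih₁ ih₂ => exact ih₁.trans ih₂
  | cab_acb x y ha hab hbc =>
    simpa only [List.append_assoc] using CK.cab_acb (p ++ x) y ha hab hbc
  | bca_bac x y ha hab hbc =>
    simpa only [List.append_assoc] using CK.bca_bac (p ++ x) y ha hab hbc
  | aba_bab x y ha hab =>
    simpa only [List.append_assoc] using CK.aba_bab (p ++ x) y ha hab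

theorem CK.cons {u v : List ℕ} (h : CK u v) (b : ℕ) : CK (b :: u) (b :: v) :=
  h.append_left [b]

theorem CK.slide_past_increasing {a : ℕ} (ha : 0 < a) :
    ∀ {b : ℕ} {L : List ℕ}, a < b → (b :: L).IsChain (· < ·) → ∀ r : List ℕ,
      CK (b :: a :: (L ++ r)) (b :: (L ++ a :: r))
  | _, [], _, _, _ => CK.refl _
  | b, c :: L, hab, hchain, r => by
    obtain ⟨hbc, hchain'⟩ := List.isChain_cons_cons.mp hchain
    have hswap : CK (b :: a :: c :: (L ++ r)) (b :: c :: a :: (L ++ r)) :=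
      (CK.bca_bac [] (L ++ r) ha hab hbc).symm
    exact hswap.trans ((slide_past_increasing ha (hab.trans hbc) hchain' r).cons b)

theorem SpCK.refl (w : List ℕ) : SpCK w w :=
  SpCK.ck (CK.refl w)

theorem SpCK.reverse_prefix_of_increasing :
    ∀ (s r : List ℕ), PosWord s → s.IsChain (· < ·) →
      (∀ x ∈ s, ∀ y ∈ s, x % 2 = y % 2) → SpCK (s ++ r) (s.reverse ++ r)
  | [], r, _, _, _ => SpCK.refl _
  | [_], r, _, _, _ => SpCK.refl _
  | x :: y :: L, r, hpos, hchain, hpar => by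
    have hx : 0 < x := hpos x (by simp)
    have hy : 0 < y := hpos y (by simp)
    obtain ⟨hxy, hchain'⟩ := List.isChain_cons_cons.mp hchain
    have hswap : SpCK (x :: y :: (L ++ r)) (y :: x :: (L ++ r)) :=
      SpCK.swap_init (L ++ r) hx hy (hpar x (by simp) y (by simp))
    have hslide : CK (y :: x :: (L ++ r)) (y :: (L ++ x :: r)) :=
      CK.slide_past_increasing hx hxy hchain' r
    have htail : SpCK ((y :: L) ++ x :: r) ((y :: L).reverse ++ x :: r) :=
      reverse_prefix_of_increasing (y :: L) (x :: r)
        (fun z hz => hpos z (List.mem_cons_of_mem x hz)) hchain'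
        (fun z hz w hw => hpar z (List.mem_cons_of_mem x hz) w (List.mem_cons_of_mem x hw))
    simpa only [List.cons_append, List.reverse_cons, List.append_assoc, List.singleton_append,
      List.nil_append] using (hswap.trans (SpCK.ck hslide)).trans htail

/-- a strictly increasing word with all letters of the same
parity is symplectic Coxeter-Knuth equivalent to its reverse. -/
theorem spck_reverse (δ : List ℕ) (hpos : PosWord δ)
    (hinc : List.Chain' (· < ·) δ)
    (hpar : ∀ x ∈ δ, ∀ y ∈ δ, x % 2 = y % 2) :
    SpCK δ δ.reverse := by
  simpa using SpCK.reverse_prefix_of_increasing δ [] hpos hinc hpar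
end
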